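/- arXiv:1705.04587 — 4 statements merged into one kernel-verified Lean document; each statement's English description precedes it below -/
import Mathlib

section
/- Let (σ,ρ) be a feasible schedule of a Parallel Task Scheduling instance on m machines, let t ∈ ℕ, and let M, M' be two machines such that every job j with σ(j) < t < σ(j)+p(j) satisfies either {M,M'} ⊆ ρ(j) or {M,M'} ∩ ρ(j) = ∅. Define ρ' by exchanging M and M' in ρ(j) for every job j with σ(j) ≥ t, and ρ'(j) = ρ(j) for all jobs with σ(j) < t. Then (σ,ρ') is a feasible schedule with the same makespan (this is the operation SWAP(t, M, M')). -/
/-- Feasibility of a schedule `(σ, ρ)` of a Parallel Task Scheduling instance on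
machines `{1,…,m}`: every job gets exactly `q j` machines among `{1,…,m}`, and any two
distinct jobs sharing a machine have disjoint half-open intervals `[σ j, σ j + p j)`. -/
def Feasible {J : Type} (m : ℕ) (p q : J → ℕ) (σ : J → ℕ) (ρ : J → Finset ℕ) : Prop :=
  (∀ j, ρ j ⊆ Finset.Icc 1 m) ∧ (∀ j, (ρ j).card = q j) ∧
  (∀ j j', j ≠ j' → (ρ j ∩ ρ j').Nonempty →
    σ j + p j ≤ σ j' ∨ σ j' + p j' ≤ σ j)

/-- Makespan of a schedule. -/
def makespan {J : Type} [Fintype J] (p σ : J → ℕ) : ℕ :=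
  Finset.univ.sup fun j => σ j + p j

/-- Helper: mixed case of the disjointness argument. -/
lemma swap_mixed {J : Type} (m : ℕ) (p q : J → ℕ) (σ : J → ℕ) (ρ : J → Finset ℕ)
    (t M M' : ℕ) (hfeas : Feasible m p q σ ρ)
    (hcross : ∀ j, σ j < t → t < σ j + p j →
      (({M, M'} : Finset ℕ) ⊆ ρ j ∨ (M ∉ ρ j ∧ M' ∉ ρ j)))
    (j j' : J) (hne : j ≠ j') (h1 : t ≤ σ j) (h2 : ¬ t ≤ σ j')
    (hint : ((ρ j).image (Equiv.swap M M') ∩ ρ j').Nonempty) :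
    σ j + p j ≤ σ j' ∨ σ j' + p j' ≤ σ j := by
  obtain ⟨x, hx⟩ := hint
  rw [Finset.mem_inter, Finset.mem_image] at hx
  obtain ⟨⟨y, hy, hxy⟩, hx'⟩ := hx
  by_cases hyM : y = M
  case neg =>
    by_cases hyM' : y = M'
    case neg =>
      rw [Equiv.swap_apply_of_ne_of_ne hyM hyM'] at hxy
      subst hxy
      exact hfeas.2.2 j j' hne ⟨y, Finset.mem_inter.2 ⟨hy, hx'⟩⟩
    case pos =>
      subst hyM'
      rw [Equiv.swap_apply_right] at hxy
      subst hxy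
      by_cases ht : σ j' + p j' ≤ t
      · exact Or.inr (ht.trans h1)
      · rcases hcross j' (lt_of_not_ge h2) (lt_of_not_ge ht) with h | h
        · refine hfeas.2.2 j j' hne ⟨y, Finset.mem_inter.2 ⟨hy, ?_⟩⟩
          exact h (by simp)
        · exact absurd hx' h.1
  case pos =>
    subst hyM
    rw [Equiv.swap_apply_left] at hxy
    subst hxy
    by_cases ht : σ j' + p j' ≤ t
    · exact Or.inr (ht.trans h1)
    · rcases hcross j' (lt_of_not_ge h2) (lt_of_not_ge ht) with h | h
      · refine hfeas.2.2 j j' hne ⟨y, Finset.mem_inter.2 ⟨hy, ?_⟩⟩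
        exact h (by simp)
      · exact absurd hx' h.2

/-- The operation `SWAP(t, M, M')`: if every job running across time `t` uses either both
or none of the machines `M, M'`, then exchanging `M` and `M'` in the machine sets of all
jobs starting no earlier than `t` preserves feasibility and the makespan. -/
theorem swap_machines_feasible {J : Type} [Fintype J] (m : ℕ) (p q : J → ℕ)
    (σ : J → ℕ) (ρ : J → Finset ℕ) (t M M' : ℕ)
    (hM : M ∈ Finset.Icc 1 m) (hM' : M' ∈ Finset.Icc 1 m)
    (hfeas : Feasible m p q σ ρ)
    (hcross : ∀ j, σ j < t → t < σ j + p j →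
      (({M, M'} : Finset ℕ) ⊆ ρ j ∨ (M ∉ ρ j ∧ M' ∉ ρ j))) :
    Feasible m p q σ (fun j => if t ≤ σ j then (ρ j).image (Equiv.swap M M') else ρ j) ∧
    makespan p σ = makespan p σ := by
  refine ⟨⟨?_, ?_, ?_⟩, rfl⟩
  · intro j x hx
    dsimp only at hx
    split_ifs at hx with h
    · rw [Finset.mem_image] at hx
      obtain ⟨y, hy, rfl⟩ := hx
      by_cases hyM : y = M
      · subst hyM; rw [Equiv.swap_apply_left]; exact hM'
      by_cases hyM' : y = M'
      · subst hyM'; rw [Equiv.swap_apply_right]; exact hM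
      · rw [Equiv.swap_apply_of_ne_of_ne hyM hyM']; exact hfeas.1 j hy
    · exact hfeas.1 j hx
  · intro j
    dsimp only
    split_ifs with h
    · rw [Finset.card_image_of_injective _ (Equiv.swap M M').injective]
      exact hfeas.2.1 j
    · exact hfeas.2.1 j
  · intro j j' hne hint
    dsimp only at hint
    split_ifs at hint with h1 h2 h2
    · obtain ⟨x, hx⟩ := hint
      rw [Finset.mem_inter, Finset.mem_image, Finset.mem_image] at hx
      obtain ⟨⟨y, hy, hxy⟩, ⟨z, hz, hxz⟩⟩ := hx
      have : y = z := (Equiv.swap M M').injective (hxy.trans hxz.symm)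
      subst this
      exact hfeas.2.2 j j' hne ⟨y, Finset.mem_inter.2 ⟨hy, hz⟩⟩
    · exact swap_mixed m p q σ ρ t M M' hfeas hcross j j' hne h1 h2 hint
    · rcases swap_mixed m p q σ ρ t M M' hfeas hcross j' j hne.symm h2 h1
        (by rwa [Finset.inter_comm] at hint) with h | h
      · exact Or.inr h
      · exact Or.inl h
    · exact hfeas.2.2 j j' hne hint
end

section
/- If the 3-Partition instance is a Yes-instance, then the constructed Parallel Task Scheduling instance on 4 machines admits a feasible schedule with makespan exactly W in which, moreover, every job is assigned a contiguous (consecutive) set of machines. -/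
/-- Jobs of the instance constructed from a 3-Partition instance with parameter `z`. -/
inductive Job (z : ℕ) : Type
  | JA (i : Fin (z+1))
  | JB (i : Fin (z+1))
  | Ja (i : Fin z)
  | Jb (i : Fin z)
  | Jc (j : Fin (z+1))
  | Jα (i : Fin z)
  | Jβ (i : Fin z)
  | Jγ (j : Fin z)
  | Jδ (j : Fin z)
  | Jl1
  | Jl2
  | Jpart (i : Fin (3*z))
  deriving DecidableEq, Fintype

/-- Processing times of the constructed jobs (`γ_j`, `δ_j` use index `j ∈ {1,…,z}`,
represented by `j.val + 1` for `j : Fin z`). -/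
def pJob (z D : ℕ) (ι : Fin (3*z) → ℕ) : Job z → ℕ
  | .JA _ => D^2
  | .JB _ => D^3
  | .Ja _ => D^4 + D^6 + 3*z*D^7
  | .Jb _ => D^5 + D^6 + 3*z*D^7
  | .Jc j => (z + j.val)*D^7 + D^8
  | .Jα _ => D^3 + D^5 + 4*z*D^7 + D^8
  | .Jβ _ => D^2 + D^4 + (4*z-1)*D^7 + D^8
  | .Jγ j => D^5 + (3*z - (j.val+1))*D^7 - D
  | .Jδ j => D^4 + (3*z - (j.val+1))*D^7
  | .Jl1 => D^3 + z*D^7 + D^8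
  | .Jl2 => D^2 + 2*z*D^7 + D^8
  | .Jpart i => ι i

/-- Machine requirements of the constructed jobs. -/
def qJob (z : ℕ) : Job z → ℕ
  | .JA _ => 3
  | .JB _ => 3
  | .Ja _ => 2
  | .Jb _ => 2
  | .Jc _ => 2
  | _ => 1

/-- The target makespan `W`. -/
def Wval (z D : ℕ) : ℕ :=
  (z+1)*(D^2 + D^3 + D^8) + z*(D^4 + D^5 + D^6) + z*(7*z+1)*D^7

/-- The 3-Partition instance `ι` is a Yes-instance. -/
def IsYes (z D : ℕ) (ι : Fin (3*z) → ℕ) : Prop :=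
  ∃ f : Fin (3*z) → Fin z,
    ∀ k : Fin z, ∑ i ∈ Finset.univ.filter (fun i => f i = k), ι i = D

/-- Jobs processed on machine 1 in a normal-form schedule: `A ∪ a ∪ α ∪ {λ₁}`. -/
def M1Jobs {z : ℕ} : Job z → Prop
  | .JA _ => True
  | .Ja _ => True
  | .Jα _ => True
  | .Jl1 => True
  | _ => False

/-- Jobs processed on machine 4 in a normal-form schedule: `B ∪ b ∪ β ∪ {λ₂}`. -/
def M4Jobs {z : ℕ} : Job z → Prop
  | .JB _ => True
  | .Jb _ => True
  | .Jβ _ => True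
  | .Jl2 => True
  | _ => False

/-- Jobs processed on both machines 2 and 3: `A ∪ B ∪ c`. -/
def BothM23 {z : ℕ} : Job z → Prop
  | .JA _ => True
  | .JB _ => True
  | .Jc _ => True
  | _ => False

/-- Jobs processed on exactly one of machines 2 and 3: `a ∪ b ∪ γ ∪ δ ∪ P`. -/
def OneM23 {z : ℕ} : Job z → Prop
  | .Ja _ => True
  | .Jb _ => True
  | .Jγ _ => True
  | .Jδ _ => True
  | .Jpart _ => True
  | _ => False

/-- Normal form of a schedule of the constructed instance. -/
def NormalForm {z : ℕ} (ρ : Job z → Finset ℕ) : Prop :=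
  (∀ j, 1 ∈ ρ j ↔ M1Jobs j) ∧
  (∀ j, 4 ∈ ρ j ↔ M4Jobs j) ∧
  (∀ j, BothM23 j → 2 ∈ ρ j ∧ 3 ∈ ρ j) ∧
  (∀ j, OneM23 j → ((2 ∈ ρ j) ↔ ¬ (3 ∈ ρ j)))

/-- `cnt p σ S i` = number of jobs of `S` finishing no later than the start of `i`
(the quantity `#ᵢ S`). -/
def cnt {z : ℕ} (p σ : Job z → ℕ) (S : Finset (Job z)) (i : Job z) : ℕ :=
  (S.filter fun j => σ j + p j ≤ σ i).card

def sA (z : ℕ) : Finset (Job z) := Finset.univ.image Job.JA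
def sB (z : ℕ) : Finset (Job z) := Finset.univ.image Job.JB
def sa (z : ℕ) : Finset (Job z) := Finset.univ.image Job.Ja
def sb (z : ℕ) : Finset (Job z) := Finset.univ.image Job.Jb
def sc (z : ℕ) : Finset (Job z) := Finset.univ.image Job.Jc
def sα (z : ℕ) : Finset (Job z) := Finset.univ.image Job.Jα
def sβ (z : ℕ) : Finset (Job z) := Finset.univ.image Job.Jβ
def sγ (z : ℕ) : Finset (Job z) := Finset.univ.image Job.Jγ
def sδ (z : ℕ) : Finset (Job z) := Finset.univ.image Job.Jδ

namespace Sched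

/-- Block length. -/
def Lb (z D : ℕ) : ℕ := D^2+D^3+D^4+D^5+D^6+7*z*D^7+D^8

/-- Start times of the constructed schedule. -/
def sigJ (z D : ℕ) (ι : Fin (3*z) → ℕ) (f : Fin (3*z) → Fin z) : Job z → ℕ
  | .JA i => i.val * Lb z D
  | .JB i => i.val * Lb z D + (D^2 + (2*z - i.val)*D^7 + D^8)
  | .Ja i => i.val * Lb z D + (D^2 + D^3 + D^5 + 4*z*D^7 + D^8)
  | .Jb i => i.val * Lb z D + (D^2 + D^3 + (2*z - i.val)*D^7 + D^8)
  | .Jc c => (z - c.val) * Lb z D + D^2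
  | .Jα i => i.val * Lb z D + D^2
  | .Jβ i => i.val * Lb z D + (D^2 + D^3 + D^5 + D^6 + (5*z - i.val)*D^7 + D^8)
  | .Jγ g => (z-1-g.val) * Lb z D + (D^2 + D^3 + (2*z - (z-1-g.val))*D^7 + D^8)
  | .Jδ g => (z-1-g.val) * Lb z D + (D^2 + D^3 + D^5 + D^6 + (5*z - (z-1-g.val))*D^7 + D^8)
  | .Jl1 => z * Lb z D + D^2
  | .Jl2 => 0
  | .Jpart i => (z-1-(f i).val) * Lb z D + (D^2 + D^3 + (D^5 - D) + 4*z*D^7 + D^8)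
      + ∑ y ∈ Finset.univ.filter (fun y => f y = f i ∧ y < i), ι y

/-- Machine assignments. -/
def rhoJ (z : ℕ) : Job z → Finset ℕ
  | .JA _ => Finset.Icc 1 3
  | .JB _ => Finset.Icc 2 4
  | .Ja _ => Finset.Icc 1 2
  | .Jb _ => Finset.Icc 3 4
  | .Jc _ => Finset.Icc 2 3
  | .Jα _ => Finset.Icc 1 1
  | .Jβ _ => Finset.Icc 4 4
  | .Jγ _ => Finset.Icc 2 2
  | .Jδ _ => Finset.Icc 3 3
  | .Jl1 => Finset.Icc 1 1
  | .Jl2 => Finset.Icc 4 4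
  | .Jpart _ => Finset.Icc 2 2

/-- Jobs on machine 2. -/
def On2 {z : ℕ} : Job z → Prop
  | .JA _ => True
  | .JB _ => True
  | .Jc _ => True
  | .Ja _ => True
  | .Jγ _ => True
  | .Jpart _ => True
  | _ => False

/-- Jobs on machine 3. -/
def On3 {z : ℕ} : Job z → Prop
  | .JA _ => True
  | .JB _ => True
  | .Jc _ => True
  | .Jb _ => True
  | .Jδ _ => True
  | _ => False

def sl1 (z : ℕ) : Job z → ℕ
  | .JA i => 3*i.val
  | .Jα i => 3*i.val+1
  | .Ja i => 3*i.val+2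
  | .Jl1 => 3*z+1
  | _ => 0

def sl2 (z : ℕ) (f : Fin (3*z) → Fin z) : Job z → ℕ
  | .JA i => 6*i.val
  | .Jc c => 6*(z-c.val)+1
  | .JB i => 6*i.val+2
  | .Jγ g => 6*(z-1-g.val)+3
  | .Jpart i => 6*(z-1-(f i).val)+4
  | .Ja i => 6*i.val+5
  | _ => 0

def sl3 (z : ℕ) : Job z → ℕ
  | .JA i => 5*i.val
  | .Jc c => 5*(z-c.val)+1
  | .JB i => 5*i.val+2
  | .Jb i => 5*i.val+3
  | .Jδ g => 5*(z-1-g.val)+4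
  | _ => 0

def sl4 (z : ℕ) : Job z → ℕ
  | .Jl2 => 0
  | .JB i => 3*i.val+1
  | .Jb i => 3*i.val+2
  | .Jβ i => 3*i.val+3
  | _ => 0

def st1 (z D n : ℕ) : ℕ :=
  (n/3) * Lb z D +
    (if n % 3 = 0 then 0
     else if n % 3 = 1 then D^2
     else D^2 + D^3 + D^5 + 4*z*D^7 + D^8)

def st2 (z D n : ℕ) : ℕ :=
  (n/6) * Lb z D +
    (if n % 6 = 0 then 0
     else if n % 6 = 1 then D^2
     else if n % 6 = 2 then D^2 + (2*z - n/6)*D^7 + D^8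
     else if n % 6 = 3 then D^2 + D^3 + (2*z - n/6)*D^7 + D^8
     else if n % 6 = 4 then D^2 + D^3 + (D^5 - D) + 4*z*D^7 + D^8
     else D^2 + D^3 + D^5 + 4*z*D^7 + D^8)

def st3 (z D n : ℕ) : ℕ :=
  (n/5) * Lb z D +
    (if n % 5 = 0 then 0
     else if n % 5 = 1 then D^2
     else if n % 5 = 2 then D^2 + (2*z - n/5)*D^7 + D^8
     else if n % 5 = 3 then D^2 + D^3 + (2*z - n/5)*D^7 + D^8
     else D^2 + D^3 + D^5 + D^6 + (5*z - n/5)*D^7 + D^8)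

def st4 (z D n : ℕ) : ℕ :=
  if n = 0 then 0 else
  ((n-1)/3) * Lb z D +
    (if (n-1) % 3 = 0 then D^2 + (2*z - (n-1)/3)*D^7 + D^8
     else if (n-1) % 3 = 1 then D^2 + D^3 + (2*z - (n-1)/3)*D^7 + D^8
     else D^2 + D^3 + D^5 + D^6 + (5*z - (n-1)/3)*D^7 + D^8)

lemma st1_0 (z D q : ℕ) : st1 z D (3*q) = q * Lb z D := by
  unfold st1; rw [show 3*q/3 = q by omega, show 3*q % 3 = 0 by omega]; simp

lemma st1_1 (z D q : ℕ) : st1 z D (3*q+1) = q * Lb z D + D^2 := by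
  unfold st1; rw [show (3*q+1)/3 = q by omega, show (3*q+1) % 3 = 1 by omega]; norm_num

lemma st1_2 (z D q : ℕ) : st1 z D (3*q+2) = q * Lb z D + (D^2 + D^3 + D^5 + 4*z*D^7 + D^8) := by
  unfold st1; rw [show (3*q+2)/3 = q by omega, show (3*q+2) % 3 = 2 by omega]; norm_num

lemma st2_0 (z D q : ℕ) : st2 z D (6*q) = q * Lb z D := by
  unfold st2; rw [show 6*q/6 = q by omega, show 6*q % 6 = 0 by omega]; simp

lemma st2_1 (z D q : ℕ) : st2 z D (6*q+1) = q * Lb z D + D^2 := by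
  unfold st2; rw [show (6*q+1)/6 = q by omega, show (6*q+1) % 6 = 1 by omega]; norm_num

lemma st2_2 (z D q : ℕ) : st2 z D (6*q+2) = q * Lb z D + (D^2 + (2*z - q)*D^7 + D^8) := by
  unfold st2; rw [show (6*q+2)/6 = q by omega, show (6*q+2) % 6 = 2 by omega]; norm_num

lemma st2_3 (z D q : ℕ) : st2 z D (6*q+3) = q * Lb z D + (D^2 + D^3 + (2*z - q)*D^7 + D^8) := by
  unfold st2; rw [show (6*q+3)/6 = q by omega, show (6*q+3) % 6 = 3 by omega]; norm_num

lemma st2_4 (z D q : ℕ) :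
    st2 z D (6*q+4) = q * Lb z D + (D^2 + D^3 + (D^5 - D) + 4*z*D^7 + D^8) := by
  unfold st2; rw [show (6*q+4)/6 = q by omega, show (6*q+4) % 6 = 4 by omega]; norm_num

lemma st2_5 (z D q : ℕ) :
    st2 z D (6*q+5) = q * Lb z D + (D^2 + D^3 + D^5 + 4*z*D^7 + D^8) := by
  unfold st2; rw [show (6*q+5)/6 = q by omega, show (6*q+5) % 6 = 5 by omega]; norm_num

lemma st3_0 (z D q : ℕ) : st3 z D (5*q) = q * Lb z D := by
  unfold st3; rw [show 5*q/5 = q by omega, show 5*q % 5 = 0 by omega]; simp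

lemma st3_1 (z D q : ℕ) : st3 z D (5*q+1) = q * Lb z D + D^2 := by
  unfold st3; rw [show (5*q+1)/5 = q by omega, show (5*q+1) % 5 = 1 by omega]; norm_num

lemma st3_2 (z D q : ℕ) : st3 z D (5*q+2) = q * Lb z D + (D^2 + (2*z - q)*D^7 + D^8) := by
  unfold st3; rw [show (5*q+2)/5 = q by omega, show (5*q+2) % 5 = 2 by omega]; norm_num

lemma st3_3 (z D q : ℕ) : st3 z D (5*q+3) = q * Lb z D + (D^2 + D^3 + (2*z - q)*D^7 + D^8) := by
  unfold st3; rw [show (5*q+3)/5 = q by omega, show (5*q+3) % 5 = 3 by omega]; norm_num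

lemma st3_4 (z D q : ℕ) :
    st3 z D (5*q+4) = q * Lb z D + (D^2 + D^3 + D^5 + D^6 + (5*z - q)*D^7 + D^8) := by
  unfold st3; rw [show (5*q+4)/5 = q by omega, show (5*q+4) % 5 = 4 by omega]; norm_num

lemma st4_0 (z D : ℕ) : st4 z D 0 = 0 := by simp [st4]

lemma st4_1 (z D q : ℕ) : st4 z D (3*q+1) = q * Lb z D + (D^2 + (2*z - q)*D^7 + D^8) := by
  unfold st4
  rw [if_neg (by omega : ¬ (3*q+1 = 0)), show (3*q+1-1)/3 = q by omega,
    show (3*q+1-1) % 3 = 0 by omega]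
  norm_num

lemma st4_2 (z D q : ℕ) : st4 z D (3*q+2) = q * Lb z D + (D^2 + D^3 + (2*z - q)*D^7 + D^8) := by
  unfold st4
  rw [if_neg (by omega : ¬ (3*q+2 = 0)), show (3*q+2-1)/3 = q by omega,
    show (3*q+2-1) % 3 = 1 by omega]
  norm_num

lemma st4_3 (z D q : ℕ) :
    st4 z D (3*q+3) = q * Lb z D + (D^2 + D^3 + D^5 + D^6 + (5*z - q)*D^7 + D^8) := by
  unfold st4
  rw [if_neg (by omega : ¬ (3*q+3 = 0)), show (3*q+3-1)/3 = q by omega,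
    show (3*q+3-1) % 3 = 2 by omega]
  norm_num

lemma st1_mono (z D : ℕ) : Monotone (st1 z D) := by
  apply monotone_nat_of_le_succ
  intro n
  obtain ⟨q, r, hr, rfl⟩ : ∃ q r, r < 3 ∧ n = 3*q + r := ⟨n/3, n%3, by omega, by omega⟩
  interval_cases r
  · rw [show 3*q+0 = 3*q by ring, show 3*q+1 = 3*q+1 by ring, st1_0, st1_1]; omega
  · rw [show 3*q+1+1 = 3*q+2 by ring, st1_1, st1_2]; omega
  · rw [show 3*q+2+1 = 3*(q+1) by ring, st1_2, st1_0]
    simp only [Lb]; ring_nf; omega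

lemma st2_mono (z D : ℕ) : Monotone (st2 z D) := by
  apply monotone_nat_of_le_succ
  intro n
  obtain ⟨q, r, hr, rfl⟩ : ∃ q r, r < 6 ∧ n = 6*q + r := ⟨n/6, n%6, by omega, by omega⟩
  interval_cases r
  · rw [show 6*q+0 = 6*q by ring, st2_0, show 6*q+1 = 6*q+1 by ring, st2_1]; omega
  · rw [show 6*q+1+1 = 6*q+2 by ring, st2_1, st2_2]; omega
  · rw [show 6*q+2+1 = 6*q+3 by ring, st2_2, st2_3]; omega
  · rw [show 6*q+3+1 = 6*q+4 by ring, st2_3, st2_4]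
    have h1 : (2*z-q)*D^7 ≤ 4*z*D^7 := mul_le_mul_left (by omega) _
    omega
  · rw [show 6*q+4+1 = 6*q+5 by ring, st2_4, st2_5]
    have h1 : D^5 - D ≤ D^5 := Nat.sub_le _ _
    omega
  · rw [show 6*q+5+1 = 6*(q+1) by ring, st2_5, st2_0]
    simp only [Lb]; ring_nf; omega

lemma st3_mono (z D : ℕ) : Monotone (st3 z D) := by
  apply monotone_nat_of_le_succ
  intro n
  obtain ⟨q, r, hr, rfl⟩ : ∃ q r, r < 5 ∧ n = 5*q + r := ⟨n/5, n%5, by omega, by omega⟩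
  interval_cases r
  · rw [show 5*q+0 = 5*q by ring, st3_0, show 5*q+1 = 5*q+1 by ring, st3_1]; omega
  · rw [show 5*q+1+1 = 5*q+2 by ring, st3_1, st3_2]; omega
  · rw [show 5*q+2+1 = 5*q+3 by ring, st3_2, st3_3]; omega
  · rw [show 5*q+3+1 = 5*q+4 by ring, st3_3, st3_4]
    have h1 : (2*z-q)*D^7 ≤ (5*z-q)*D^7 := mul_le_mul_left (by omega) _
    omega
  · rw [show 5*q+4+1 = 5*(q+1) by ring, st3_4, st3_0]
    have h1 : (5*z-q)*D^7 ≤ 7*z*D^7 := mul_le_mul_left (by omega) _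
    simp only [Lb]; ring_nf at h1 ⊢; omega

lemma st4_mono (z D : ℕ) : Monotone (st4 z D) := by
  apply monotone_nat_of_le_succ
  intro n
  rcases Nat.eq_zero_or_pos n with rfl | hn
  · rw [st4_0, show (0:ℕ)+1 = 3*0+1 by norm_num, st4_1]
    exact Nat.zero_le _
  · obtain ⟨q, r, hr, rfl⟩ : ∃ q r, r < 3 ∧ n = 3*q + r + 1 := ⟨(n-1)/3, (n-1)%3, by omega, by omega⟩
    interval_cases r
    · rw [show 3*q+0+1 = 3*q+1 by ring, st4_1, show 3*q+1+1 = 3*q+2 by ring, st4_2]; omega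
    · rw [show 3*q+1+1 = 3*q+2 by ring, st4_2, show 3*q+1+1+1 = 3*q+3 by ring, st4_3]
      have h1 : (2*z-q)*D^7 ≤ (5*z-q)*D^7 := mul_le_mul_left (by omega) _
      omega
    · rw [show 3*q+2+1 = 3*q+3 by ring, st4_3, show 3*q+2+1+1 = 3*(q+1)+1 by ring, st4_1]
      have h1 : (5*z-q)*D^7 ≤ 7*z*D^7 := mul_le_mul_left (by omega) _
      simp only [Lb]; ring_nf at h1 ⊢; omega

end Sched
namespace Sched

lemma win1 (z D : ℕ) (ι : Fin (3*z) → ℕ) (f : Fin (3*z) → Fin z) :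
    ∀ j : Job z, M1Jobs j →
      st1 z D (sl1 z j) ≤ sigJ z D ι f j ∧
      sigJ z D ι f j + pJob z D ι j ≤ st1 z D (sl1 z j + 1)
  | .JA i, _ => by
      simp only [sigJ, pJob, sl1]
      rw [st1_0, st1_1]
      exact ⟨le_refl _, le_refl _⟩
  | .Jα i, _ => by
      simp only [sigJ, pJob, sl1]
      rw [show 3*i.val+1+1 = 3*i.val+2 by ring, st1_1, st1_2]
      exact ⟨le_refl _, le_of_eq (by ring)⟩
  | .Ja i, _ => by
      simp only [sigJ, pJob, sl1]
      rw [show 3*i.val+2+1 = 3*(i.val+1) by ring, st1_2, st1_0]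
      exact ⟨le_refl _, le_of_eq (by simp only [Lb]; ring)⟩
  | .Jl1, _ => by
      simp only [sigJ, pJob, sl1]
      rw [show 3*z+1+1 = 3*z+2 by ring, st1_1, st1_2]
      refine ⟨le_refl _, ?_⟩
      have h1 : z*D^7 ≤ 4*z*D^7 := mul_le_mul_left (by omega) _
      omega
  | .JB _, h => False.elim h
  | .Jb _, h => False.elim h
  | .Jc _, h => False.elim h
  | .Jβ _, h => False.elim h
  | .Jγ _, h => False.elim h
  | .Jδ _, h => False.elim h
  | .Jl2, h => False.elim h
  | .Jpart _, h => False.elim h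

lemma win2 (z D : ℕ) (ι : Fin (3*z) → ℕ) (f : Fin (3*z) → Fin z)
    (hf : ∀ k : Fin z, ∑ i ∈ Finset.univ.filter (fun i => f i = k), ι i = D) :
    ∀ j : Job z, On2 j →
      st2 z D (sl2 z f j) ≤ sigJ z D ι f j ∧
      sigJ z D ι f j + pJob z D ι j ≤ st2 z D (sl2 z f j + 1)
  | .JA i, _ => by
      simp only [sigJ, pJob, sl2]
      rw [st2_0, st2_1]
      exact ⟨le_refl _, le_refl _⟩
  | .Jc c, _ => by
      have hb := c.isLt
      simp only [sigJ, pJob, sl2]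
      rw [show 6*(z-c.val)+1+1 = 6*(z-c.val)+2 by ring, st2_1, st2_2]
      refine ⟨le_refl _, ?_⟩
      rw [show 2*z - (z - c.val) = z + c.val by omega]
      exact le_of_eq (by ring)
  | .JB i, _ => by
      simp only [sigJ, pJob, sl2]
      rw [show 6*i.val+2+1 = 6*i.val+3 by ring, st2_2, st2_3]
      exact ⟨le_refl _, le_of_eq (by ring)⟩
  | .Jγ g, _ => by
      have hb := g.isLt
      simp only [sigJ, pJob, sl2]
      rw [show 6*(z-1-g.val)+3+1 = 6*(z-1-g.val)+4 by ring, st2_3, st2_4]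
      refine ⟨le_refl _, ?_⟩
      have hD5 : D ≤ D^5 := Nat.le_self_pow (by norm_num) D
      rw [show 3*z - (g.val+1) = 2*z + (z-1-g.val) by omega]
      rw [Nat.sub_add_comm hD5]
      have e4 : (2*z - (z-1-g.val))*D^7 + (2*z + (z-1-g.val))*D^7 = 4*z*D^7 := by
        rw [← add_mul, show (2*z - (z-1-g.val)) + (2*z + (z-1-g.val)) = 4*z by omega]
      omega
  | .Jpart i, _ => by
      have hb := (f i).isLt
      simp only [sigJ, pJob, sl2]
      rw [show 6*(z-1-(f i).val)+4+1 = 6*(z-1-(f i).val)+5 by ring, st2_4, st2_5]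
      constructor
      · exact Nat.le_add_right _ _
      · have hD5 : D ≤ D^5 := Nat.le_self_pow (by norm_num) D
        have h2 : (D^5 - D) + D = D^5 := Nat.sub_add_cancel hD5
        have hnm : i ∉ Finset.univ.filter (fun y => f y = f i ∧ y < i) := by simp
        have hsub : insert i (Finset.univ.filter (fun y => f y = f i ∧ y < i))
            ⊆ Finset.univ.filter (fun y => f y = f i) := by
          intro y hy
          simp only [Finset.mem_insert, Finset.mem_filter, Finset.mem_univ, true_and] at hy ⊢
          rcases hy with rfl | ⟨h1, _⟩
          · rfl
          · exact h1
        have h1 : ι i + ∑ y ∈ Finset.univ.filter (fun y => f y = f i ∧ y < i), ι y ≤ D := by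
          calc ι i + ∑ y ∈ Finset.univ.filter (fun y => f y = f i ∧ y < i), ι y
              = ∑ y ∈ insert i (Finset.univ.filter (fun y => f y = f i ∧ y < i)), ι y :=
                (Finset.sum_insert hnm).symm
            _ ≤ ∑ y ∈ Finset.univ.filter (fun y => f y = f i), ι y :=
                Finset.sum_le_sum_of_subset hsub
            _ = D := hf (f i)
        omega
  | .Ja i, _ => by
      simp only [sigJ, pJob, sl2]
      rw [show 6*i.val+5+1 = 6*(i.val+1) by ring, st2_5, st2_0]
      exact ⟨le_refl _, le_of_eq (by simp only [Lb]; ring)⟩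
  | .Jb _, h => False.elim h
  | .Jα _, h => False.elim h
  | .Jβ _, h => False.elim h
  | .Jδ _, h => False.elim h
  | .Jl1, h => False.elim h
  | .Jl2, h => False.elim h

lemma win3 (z D : ℕ) (ι : Fin (3*z) → ℕ) (f : Fin (3*z) → Fin z) :
    ∀ j : Job z, On3 j →
      st3 z D (sl3 z j) ≤ sigJ z D ι f j ∧
      sigJ z D ι f j + pJob z D ι j ≤ st3 z D (sl3 z j + 1)
  | .JA i, _ => by
      simp only [sigJ, pJob, sl3]
      rw [st3_0, st3_1]
      exact ⟨le_refl _, le_refl _⟩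
  | .Jc c, _ => by
      have hb := c.isLt
      simp only [sigJ, pJob, sl3]
      rw [show 5*(z-c.val)+1+1 = 5*(z-c.val)+2 by ring, st3_1, st3_2]
      refine ⟨le_refl _, ?_⟩
      rw [show 2*z - (z - c.val) = z + c.val by omega]
      exact le_of_eq (by ring)
  | .JB i, _ => by
      simp only [sigJ, pJob, sl3]
      rw [show 5*i.val+2+1 = 5*i.val+3 by ring, st3_2, st3_3]
      exact ⟨le_refl _, le_of_eq (by ring)⟩
  | .Jb i, _ => by
      have hb := i.isLt
      simp only [sigJ, pJob, sl3]
      rw [show 5*i.val+3+1 = 5*i.val+4 by ring, st3_3, st3_4]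
      refine ⟨le_refl _, ?_⟩
      have e4 : (2*z - i.val)*D^7 + 3*z*D^7 = (5*z - i.val)*D^7 := by
        rw [← add_mul, show (2*z - i.val) + 3*z = 5*z - i.val by omega]
      omega
  | .Jδ g, _ => by
      have hb := g.isLt
      simp only [sigJ, pJob, sl3]
      rw [show 5*(z-1-g.val)+4+1 = 5*((z-1-g.val)+1) by ring, st3_4, st3_0]
      refine ⟨le_refl _, ?_⟩
      rw [show 3*z - (g.val+1) = 2*z + (z-1-g.val) by omega]
      have e4 : (5*z - (z-1-g.val))*D^7 + (2*z + (z-1-g.val))*D^7 = 7*z*D^7 := by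
        rw [← add_mul, show (5*z - (z-1-g.val)) + (2*z + (z-1-g.val)) = 7*z by omega]
      simp only [Lb]; ring_nf at e4 ⊢; omega
  | .Ja _, h => False.elim h
  | .Jα _, h => False.elim h
  | .Jβ _, h => False.elim h
  | .Jγ _, h => False.elim h
  | .Jl1, h => False.elim h
  | .Jl2, h => False.elim h
  | .Jpart _, h => False.elim h

lemma win4 (z D : ℕ) (ι : Fin (3*z) → ℕ) (f : Fin (3*z) → Fin z) :
    ∀ j : Job z, M4Jobs j →
      st4 z D (sl4 z j) ≤ sigJ z D ι f j ∧
      sigJ z D ι f j + pJob z D ι j ≤ st4 z D (sl4 z j + 1)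
  | .Jl2, _ => by
      simp only [sigJ, pJob, sl4]
      rw [st4_0, show (0:ℕ)+1 = 3*0+1 by norm_num, st4_1, Nat.sub_zero]
      exact ⟨le_refl _, by omega⟩
  | .JB i, _ => by
      simp only [sigJ, pJob, sl4]
      rw [show 3*i.val+1+1 = 3*i.val+2 by ring, st4_1, st4_2]
      exact ⟨le_refl _, le_of_eq (by ring)⟩
  | .Jb i, _ => by
      have hb := i.isLt
      simp only [sigJ, pJob, sl4]
      rw [show 3*i.val+2+1 = 3*i.val+3 by ring, st4_2, st4_3]
      refine ⟨le_refl _, ?_⟩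
      have e4 : (2*z - i.val)*D^7 + 3*z*D^7 = (5*z - i.val)*D^7 := by
        rw [← add_mul, show (2*z - i.val) + 3*z = 5*z - i.val by omega]
      omega
  | .Jβ i, _ => by
      have hb := i.isLt
      simp only [sigJ, pJob, sl4]
      rw [show 3*i.val+3+1 = 3*(i.val+1)+1 by ring, st4_3, st4_1]
      refine ⟨le_refl _, ?_⟩
      have e4 : (5*z - i.val)*D^7 + (4*z-1)*D^7 = 7*z*D^7 + (2*z - (i.val+1))*D^7 := by
        calc (5*z - i.val)*D^7 + (4*z-1)*D^7 = ((5*z - i.val) + (4*z-1))*D^7 := by ring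
          _ = (7*z + (2*z - (i.val+1)))*D^7 := by
              rw [show (5*z - i.val) + (4*z-1) = 7*z + (2*z - (i.val+1)) by omega]
          _ = 7*z*D^7 + (2*z - (i.val+1))*D^7 := by ring
      simp only [Lb]; ring_nf at e4 ⊢; omega
  | .JA _, h => False.elim h
  | .Ja _, h => False.elim h
  | .Jc _, h => False.elim h
  | .Jα _, h => False.elim h
  | .Jγ _, h => False.elim h
  | .Jδ _, h => False.elim h
  | .Jl1, h => False.elim h
  | .Jpart _, h => False.elim h

end Sched
namespace Sched

lemma eqslot1 (z : ℕ) : ∀ j j' : Job z, M1Jobs j → M1Jobs j' → sl1 z j = sl1 z j' → j = j'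
  | .JA i, .JA i', _, _, h => by
      simp only [sl1] at h; exact congrArg Job.JA (Fin.ext (by omega))
  | .JA _, .Jα _, _, _, h => by exfalso; simp only [sl1] at h; omega
  | .JA _, .Ja _, _, _, h => by exfalso; simp only [sl1] at h; omega
  | .JA _, .Jl1, _, _, h => by exfalso; simp only [sl1] at h; omega
  | .Jα _, .JA _, _, _, h => by exfalso; simp only [sl1] at h; omega
  | .Jα i, .Jα i', _, _, h => by
      simp only [sl1] at h; exact congrArg Job.Jα (Fin.ext (by omega))
  | .Jα _, .Ja _, _, _, h => by exfalso; simp only [sl1] at h; omega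
  | .Jα i, .Jl1, _, _, h => by
      exfalso; have hb := i.isLt; simp only [sl1] at h; omega
  | .Ja _, .JA _, _, _, h => by exfalso; simp only [sl1] at h; omega
  | .Ja _, .Jα _, _, _, h => by exfalso; simp only [sl1] at h; omega
  | .Ja i, .Ja i', _, _, h => by
      simp only [sl1] at h; exact congrArg Job.Ja (Fin.ext (by omega))
  | .Ja _, .Jl1, _, _, h => by exfalso; simp only [sl1] at h; omega
  | .Jl1, .JA _, _, _, h => by exfalso; simp only [sl1] at h; omega
  | .Jl1, .Jα i', _, _, h => by
      exfalso; have hb := i'.isLt; simp only [sl1] at h; omega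
  | .Jl1, .Ja _, _, _, h => by exfalso; simp only [sl1] at h; omega
  | .Jl1, .Jl1, _, _, _ => rfl
  | .JB _, _, h, _, _ => False.elim h
  | .Jb _, _, h, _, _ => False.elim h
  | .Jc _, _, h, _, _ => False.elim h
  | .Jβ _, _, h, _, _ => False.elim h
  | .Jγ _, _, h, _, _ => False.elim h
  | .Jδ _, _, h, _, _ => False.elim h
  | .Jl2, _, h, _, _ => False.elim h
  | .Jpart _, _, h, _, _ => False.elim h
  | _, .JB _, _, h, _ => False.elim h
  | _, .Jb _, _, h, _ => False.elim h
  | _, .Jc _, _, h, _ => False.elim h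
  | _, .Jβ _, _, h, _ => False.elim h
  | _, .Jγ _, _, h, _ => False.elim h
  | _, .Jδ _, _, h, _ => False.elim h
  | _, .Jl2, _, h, _ => False.elim h
  | _, .Jpart _, _, h, _ => False.elim h

lemma eqslot2 (z : ℕ) (f : Fin (3*z) → Fin z) :
    ∀ j j' : Job z, On2 j → On2 j' → sl2 z f j = sl2 z f j' →
      j = j' ∨ ∃ i i' : Fin (3*z), j = .Jpart i ∧ j' = .Jpart i' ∧ f i = f i'
  | .JA i, .JA i', _, _, h => by
      simp only [sl2] at h; exact Or.inl (congrArg Job.JA (Fin.ext (by omega)))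
  | .JA _, .Jc _, _, _, h => by exfalso; simp only [sl2] at h; omega
  | .JA _, .JB _, _, _, h => by exfalso; simp only [sl2] at h; omega
  | .JA _, .Jγ _, _, _, h => by exfalso; simp only [sl2] at h; omega
  | .JA _, .Jpart _, _, _, h => by exfalso; simp only [sl2] at h; omega
  | .JA _, .Ja _, _, _, h => by exfalso; simp only [sl2] at h; omega
  | .Jc _, .JA _, _, _, h => by exfalso; simp only [sl2] at h; omega
  | .Jc c, .Jc c', _, _, h => by
      have h1 := c.isLt; have h2 := c'.isLt
      simp only [sl2] at h; exact Or.inl (congrArg Job.Jc (Fin.ext (by omega)))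
  | .Jc _, .JB _, _, _, h => by exfalso; simp only [sl2] at h; omega
  | .Jc _, .Jγ _, _, _, h => by exfalso; simp only [sl2] at h; omega
  | .Jc _, .Jpart _, _, _, h => by exfalso; simp only [sl2] at h; omega
  | .Jc _, .Ja _, _, _, h => by exfalso; simp only [sl2] at h; omega
  | .JB _, .JA _, _, _, h => by exfalso; simp only [sl2] at h; omega
  | .JB _, .Jc _, _, _, h => by exfalso; simp only [sl2] at h; omega
  | .JB i, .JB i', _, _, h => by
      simp only [sl2] at h; exact Or.inl (congrArg Job.JB (Fin.ext (by omega)))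
  | .JB _, .Jγ _, _, _, h => by exfalso; simp only [sl2] at h; omega
  | .JB _, .Jpart _, _, _, h => by exfalso; simp only [sl2] at h; omega
  | .JB _, .Ja _, _, _, h => by exfalso; simp only [sl2] at h; omega
  | .Jγ _, .JA _, _, _, h => by exfalso; simp only [sl2] at h; omega
  | .Jγ _, .Jc _, _, _, h => by exfalso; simp only [sl2] at h; omega
  | .Jγ _, .JB _, _, _, h => by exfalso; simp only [sl2] at h; omega
  | .Jγ g, .Jγ g', _, _, h => by
      have h1 := g.isLt; have h2 := g'.isLt
      simp only [sl2] at h; exact Or.inl (congrArg Job.Jγ (Fin.ext (by omega)))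
  | .Jγ _, .Jpart _, _, _, h => by exfalso; simp only [sl2] at h; omega
  | .Jγ _, .Ja _, _, _, h => by exfalso; simp only [sl2] at h; omega
  | .Jpart _, .JA _, _, _, h => by exfalso; simp only [sl2] at h; omega
  | .Jpart _, .Jc _, _, _, h => by exfalso; simp only [sl2] at h; omega
  | .Jpart _, .JB _, _, _, h => by exfalso; simp only [sl2] at h; omega
  | .Jpart _, .Jγ _, _, _, h => by exfalso; simp only [sl2] at h; omega
  | .Jpart i, .Jpart i', _, _, h => by
      have h1 := (f i).isLt; have h2 := (f i').isLt
      simp only [sl2] at h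
      exact Or.inr ⟨i, i', rfl, rfl, Fin.ext (by omega)⟩
  | .Jpart _, .Ja _, _, _, h => by exfalso; simp only [sl2] at h; omega
  | .Ja _, .JA _, _, _, h => by exfalso; simp only [sl2] at h; omega
  | .Ja _, .Jc _, _, _, h => by exfalso; simp only [sl2] at h; omega
  | .Ja _, .JB _, _, _, h => by exfalso; simp only [sl2] at h; omega
  | .Ja _, .Jγ _, _, _, h => by exfalso; simp only [sl2] at h; omega
  | .Ja _, .Jpart _, _, _, h => by exfalso; simp only [sl2] at h; omega
  | .Ja i, .Ja i', _, _, h => by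
      simp only [sl2] at h; exact Or.inl (congrArg Job.Ja (Fin.ext (by omega)))
  | .Jb _, _, h, _, _ => False.elim h
  | .Jα _, _, h, _, _ => False.elim h
  | .Jβ _, _, h, _, _ => False.elim h
  | .Jδ _, _, h, _, _ => False.elim h
  | .Jl1, _, h, _, _ => False.elim h
  | .Jl2, _, h, _, _ => False.elim h
  | _, .Jb _, _, h, _ => False.elim h
  | _, .Jα _, _, h, _ => False.elim h
  | _, .Jβ _, _, h, _ => False.elim h
  | _, .Jδ _, _, h, _ => False.elim h
  | _, .Jl1, _, h, _ => False.elim h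
  | _, .Jl2, _, h, _ => False.elim h

lemma eqslot3 (z : ℕ) : ∀ j j' : Job z, On3 j → On3 j' → sl3 z j = sl3 z j' → j = j'
  | .JA i, .JA i', _, _, h => by
      simp only [sl3] at h; exact congrArg Job.JA (Fin.ext (by omega))
  | .JA _, .Jc _, _, _, h => by exfalso; simp only [sl3] at h; omega
  | .JA _, .JB _, _, _, h => by exfalso; simp only [sl3] at h; omega
  | .JA _, .Jb _, _, _, h => by exfalso; simp only [sl3] at h; omega
  | .JA _, .Jδ _, _, _, h => by exfalso; simp only [sl3] at h; omega
  | .Jc _, .JA _, _, _, h => by exfalso; simp only [sl3] at h; omega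
  | .Jc c, .Jc c', _, _, h => by
      have h1 := c.isLt; have h2 := c'.isLt
      simp only [sl3] at h; exact congrArg Job.Jc (Fin.ext (by omega))
  | .Jc _, .JB _, _, _, h => by exfalso; simp only [sl3] at h; omega
  | .Jc _, .Jb _, _, _, h => by exfalso; simp only [sl3] at h; omega
  | .Jc _, .Jδ _, _, _, h => by exfalso; simp only [sl3] at h; omega
  | .JB _, .JA _, _, _, h => by exfalso; simp only [sl3] at h; omega
  | .JB _, .Jc _, _, _, h => by exfalso; simp only [sl3] at h; omega
  | .JB i, .JB i', _, _, h => by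
      simp only [sl3] at h; exact congrArg Job.JB (Fin.ext (by omega))
  | .JB _, .Jb _, _, _, h => by exfalso; simp only [sl3] at h; omega
  | .JB _, .Jδ _, _, _, h => by exfalso; simp only [sl3] at h; omega
  | .Jb _, .JA _, _, _, h => by exfalso; simp only [sl3] at h; omega
  | .Jb _, .Jc _, _, _, h => by exfalso; simp only [sl3] at h; omega
  | .Jb _, .JB _, _, _, h => by exfalso; simp only [sl3] at h; omega
  | .Jb i, .Jb i', _, _, h => by
      simp only [sl3] at h; exact congrArg Job.Jb (Fin.ext (by omega))
  | .Jb _, .Jδ _, _, _, h => by exfalso; simp only [sl3] at h; omega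
  | .Jδ _, .JA _, _, _, h => by exfalso; simp only [sl3] at h; omega
  | .Jδ _, .Jc _, _, _, h => by exfalso; simp only [sl3] at h; omega
  | .Jδ _, .JB _, _, _, h => by exfalso; simp only [sl3] at h; omega
  | .Jδ _, .Jb _, _, _, h => by exfalso; simp only [sl3] at h; omega
  | .Jδ g, .Jδ g', _, _, h => by
      have h1 := g.isLt; have h2 := g'.isLt
      simp only [sl3] at h; exact congrArg Job.Jδ (Fin.ext (by omega))
  | .Ja _, _, h, _, _ => False.elim h
  | .Jα _, _, h, _, _ => False.elim h
  | .Jβ _, _, h, _, _ => False.elim h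
  | .Jγ _, _, h, _, _ => False.elim h
  | .Jl1, _, h, _, _ => False.elim h
  | .Jl2, _, h, _, _ => False.elim h
  | .Jpart _, _, h, _, _ => False.elim h
  | _, .Ja _, _, h, _ => False.elim h
  | _, .Jα _, _, h, _ => False.elim h
  | _, .Jβ _, _, h, _ => False.elim h
  | _, .Jγ _, _, h, _ => False.elim h
  | _, .Jl1, _, h, _ => False.elim h
  | _, .Jl2, _, h, _ => False.elim h
  | _, .Jpart _, _, h, _ => False.elim h

lemma eqslot4 (z : ℕ) : ∀ j j' : Job z, M4Jobs j → M4Jobs j' → sl4 z j = sl4 z j' → j = j'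
  | .Jl2, .Jl2, _, _, _ => rfl
  | .Jl2, .JB _, _, _, h => by exfalso; simp only [sl4] at h; omega
  | .Jl2, .Jb _, _, _, h => by exfalso; simp only [sl4] at h; omega
  | .Jl2, .Jβ _, _, _, h => by exfalso; simp only [sl4] at h; omega
  | .JB _, .Jl2, _, _, h => by exfalso; simp only [sl4] at h; omega
  | .JB i, .JB i', _, _, h => by
      simp only [sl4] at h; exact congrArg Job.JB (Fin.ext (by omega))
  | .JB _, .Jb _, _, _, h => by exfalso; simp only [sl4] at h; omega
  | .JB _, .Jβ _, _, _, h => by exfalso; simp only [sl4] at h; omega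
  | .Jb _, .Jl2, _, _, h => by exfalso; simp only [sl4] at h; omega
  | .Jb _, .JB _, _, _, h => by exfalso; simp only [sl4] at h; omega
  | .Jb i, .Jb i', _, _, h => by
      simp only [sl4] at h; exact congrArg Job.Jb (Fin.ext (by omega))
  | .Jb _, .Jβ _, _, _, h => by exfalso; simp only [sl4] at h; omega
  | .Jβ _, .Jl2, _, _, h => by exfalso; simp only [sl4] at h; omega
  | .Jβ _, .JB _, _, _, h => by exfalso; simp only [sl4] at h; omega
  | .Jβ _, .Jb _, _, _, h => by exfalso; simp only [sl4] at h; omega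
  | .Jβ i, .Jβ i', _, _, h => by
      simp only [sl4] at h; exact congrArg Job.Jβ (Fin.ext (by omega))
  | .JA _, _, h, _, _ => False.elim h
  | .Ja _, _, h, _, _ => False.elim h
  | .Jc _, _, h, _, _ => False.elim h
  | .Jα _, _, h, _, _ => False.elim h
  | .Jγ _, _, h, _, _ => False.elim h
  | .Jδ _, _, h, _, _ => False.elim h
  | .Jl1, _, h, _, _ => False.elim h
  | .Jpart _, _, h, _, _ => False.elim h
  | _, .JA _, _, h, _ => False.elim h
  | _, .Ja _, _, h, _ => False.elim h
  | _, .Jc _, _, h, _ => False.elim h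
  | _, .Jα _, _, h, _ => False.elim h
  | _, .Jγ _, _, h, _ => False.elim h
  | _, .Jδ _, _, h, _ => False.elim h
  | _, .Jl1, _, h, _ => False.elim h
  | _, .Jpart _, _, h, _ => False.elim h

end Sched
namespace Sched

lemma psum_lt (z D : ℕ) (ι : Fin (3*z) → ℕ) (f : Fin (3*z) → Fin z)
    (i i' : Fin (3*z)) (hff : f i = f i') (hlt : i < i') :
    sigJ z D ι f (.Jpart i) + ι i ≤ sigJ z D ι f (.Jpart i') := by
  simp only [sigJ]
  have hnm : i ∉ Finset.univ.filter (fun y => f y = f i ∧ y < i) := by simp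
  have hsub : insert i (Finset.univ.filter (fun y => f y = f i ∧ y < i))
      ⊆ Finset.univ.filter (fun y => f y = f i' ∧ y < i') := by
    intro y hy
    simp only [Finset.mem_insert, Finset.mem_filter, Finset.mem_univ, true_and] at hy ⊢
    rcases hy with rfl | ⟨h1, h2⟩
    · exact ⟨hff, hlt⟩
    · exact ⟨h1.trans hff, h2.trans hlt⟩
  have key : ι i + ∑ y ∈ Finset.univ.filter (fun y => f y = f i ∧ y < i), ι y
      ≤ ∑ y ∈ Finset.univ.filter (fun y => f y = f i' ∧ y < i'), ι y := by
    rw [← Finset.sum_insert hnm]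
    exact Finset.sum_le_sum_of_subset hsub
  rw [show (z-1-(f i).val) = (z-1-(f i').val) by rw [hff]]
  omega

lemma disjOn1 (z D : ℕ) (ι : Fin (3*z) → ℕ) (f : Fin (3*z) → Fin z)
    (j j' : Job z) (h1 : M1Jobs j) (h2 : M1Jobs j') (hne : j ≠ j') :
    sigJ z D ι f j + pJob z D ι j ≤ sigJ z D ι f j' ∨
    sigJ z D ι f j' + pJob z D ι j' ≤ sigJ z D ι f j := by
  rcases lt_trichotomy (sl1 z j) (sl1 z j') with h | h | h
  · exact Or.inl ((win1 z D ι f j h1).2.trans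
      ((st1_mono z D (by omega : sl1 z j + 1 ≤ sl1 z j')).trans (win1 z D ι f j' h2).1))
  · exact absurd (eqslot1 z j j' h1 h2 h) hne
  · exact Or.inr ((win1 z D ι f j' h2).2.trans
      ((st1_mono z D (by omega : sl1 z j' + 1 ≤ sl1 z j)).trans (win1 z D ι f j h1).1))

lemma disjOn2 (z D : ℕ) (ι : Fin (3*z) → ℕ) (f : Fin (3*z) → Fin z)
    (hf : ∀ k : Fin z, ∑ i ∈ Finset.univ.filter (fun i => f i = k), ι i = D)
    (j j' : Job z) (h1 : On2 j) (h2 : On2 j') (hne : j ≠ j') :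
    sigJ z D ι f j + pJob z D ι j ≤ sigJ z D ι f j' ∨
    sigJ z D ι f j' + pJob z D ι j' ≤ sigJ z D ι f j := by
  rcases lt_trichotomy (sl2 z f j) (sl2 z f j') with h | h | h
  · exact Or.inl ((win2 z D ι f hf j h1).2.trans
      ((st2_mono z D (by omega : sl2 z f j + 1 ≤ sl2 z f j')).trans (win2 z D ι f hf j' h2).1))
  · rcases eqslot2 z f j j' h1 h2 h with rfl | ⟨i, i', rfl, rfl, hff⟩
    · exact absurd rfl hne
    · have hii : i ≠ i' := fun he => hne (by rw [he])
      rcases lt_trichotomy i i' with hl | he | hl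
      · exact Or.inl (by simpa [pJob] using psum_lt z D ι f i i' hff hl)
      · exact absurd he hii
      · exact Or.inr (by simpa [pJob] using psum_lt z D ι f i' i hff.symm hl)
  · exact Or.inr ((win2 z D ι f hf j' h2).2.trans
      ((st2_mono z D (by omega : sl2 z f j' + 1 ≤ sl2 z f j)).trans (win2 z D ι f hf j h1).1))

lemma disjOn3 (z D : ℕ) (ι : Fin (3*z) → ℕ) (f : Fin (3*z) → Fin z)
    (j j' : Job z) (h1 : On3 j) (h2 : On3 j') (hne : j ≠ j') :
    sigJ z D ι f j + pJob z D ι j ≤ sigJ z D ι f j' ∨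
    sigJ z D ι f j' + pJob z D ι j' ≤ sigJ z D ι f j := by
  rcases lt_trichotomy (sl3 z j) (sl3 z j') with h | h | h
  · exact Or.inl ((win3 z D ι f j h1).2.trans
      ((st3_mono z D (by omega : sl3 z j + 1 ≤ sl3 z j')).trans (win3 z D ι f j' h2).1))
  · exact absurd (eqslot3 z j j' h1 h2 h) hne
  · exact Or.inr ((win3 z D ι f j' h2).2.trans
      ((st3_mono z D (by omega : sl3 z j' + 1 ≤ sl3 z j)).trans (win3 z D ι f j h1).1))

lemma disjOn4 (z D : ℕ) (ι : Fin (3*z) → ℕ) (f : Fin (3*z) → Fin z)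
    (j j' : Job z) (h1 : M4Jobs j) (h2 : M4Jobs j') (hne : j ≠ j') :
    sigJ z D ι f j + pJob z D ι j ≤ sigJ z D ι f j' ∨
    sigJ z D ι f j' + pJob z D ι j' ≤ sigJ z D ι f j := by
  rcases lt_trichotomy (sl4 z j) (sl4 z j') with h | h | h
  · exact Or.inl ((win4 z D ι f j h1).2.trans
      ((st4_mono z D (by omega : sl4 z j + 1 ≤ sl4 z j')).trans (win4 z D ι f j' h2).1))
  · exact absurd (eqslot4 z j j' h1 h2 h) hne
  · exact Or.inr ((win4 z D ι f j' h2).2.trans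
      ((st4_mono z D (by omega : sl4 z j' + 1 ≤ sl4 z j)).trans (win4 z D ι f j h1).1))

lemma memRho (z m : ℕ) (j : Job z) (hm : m ∈ rhoJ z j) :
    (m = 1 ∧ M1Jobs j) ∨ (m = 2 ∧ On2 j) ∨ (m = 3 ∧ On3 j) ∨ (m = 4 ∧ M4Jobs j) := by
  cases j <;> simp_all [rhoJ, M1Jobs, On2, On3, M4Jobs, Finset.mem_Icc] <;> omega

lemma stW2 (z D : ℕ) : st2 z D (6*z+3) = Wval z D := by
  rw [st2_3, show 2*z - z = z by omega]; simp only [Lb, Wval]; ring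

lemma stW3 (z D : ℕ) : st3 z D (5*z+3) = Wval z D := by
  rw [st3_3, show 2*z - z = z by omega]; simp only [Lb, Wval]; ring

lemma stW4 (z D : ℕ) : st4 z D (3*z+2) = Wval z D := by
  rw [st4_2, show 2*z - z = z by omega]; simp only [Lb, Wval]; ring

lemma endle (z D : ℕ) (ι : Fin (3*z) → ℕ) (f : Fin (3*z) → Fin z)
    (hf : ∀ k : Fin z, ∑ i ∈ Finset.univ.filter (fun i => f i = k), ι i = D)
    (j : Job z) : sigJ z D ι f j + pJob z D ι j ≤ Wval z D := by
  cases j with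
  | JA i =>
    have hb := i.isLt
    calc sigJ z D ι f (.JA i) + pJob z D ι (.JA i) ≤ st2 z D (sl2 z f (.JA i) + 1) :=
        (win2 z D ι f hf _ (by trivial)).2
      _ ≤ st2 z D (6*z+3) := st2_mono z D (by simp only [sl2]; omega)
      _ = Wval z D := stW2 z D
  | JB i =>
    have hb := i.isLt
    calc sigJ z D ι f (.JB i) + pJob z D ι (.JB i) ≤ st2 z D (sl2 z f (.JB i) + 1) :=
        (win2 z D ι f hf _ (by trivial)).2
      _ ≤ st2 z D (6*z+3) := st2_mono z D (by simp only [sl2]; omega)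
      _ = Wval z D := stW2 z D
  | Jc c =>
    have hb := c.isLt
    calc sigJ z D ι f (.Jc c) + pJob z D ι (.Jc c) ≤ st2 z D (sl2 z f (.Jc c) + 1) :=
        (win2 z D ι f hf _ (by trivial)).2
      _ ≤ st2 z D (6*z+3) := st2_mono z D (by simp only [sl2]; omega)
      _ = Wval z D := stW2 z D
  | Jγ g =>
    have hb := g.isLt
    calc sigJ z D ι f (.Jγ g) + pJob z D ι (.Jγ g) ≤ st2 z D (sl2 z f (.Jγ g) + 1) :=
        (win2 z D ι f hf _ (by trivial)).2
      _ ≤ st2 z D (6*z+3) := st2_mono z D (by simp only [sl2]; omega)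
      _ = Wval z D := stW2 z D
  | Jpart i =>
    have hb := (f i).isLt
    calc sigJ z D ι f (.Jpart i) + pJob z D ι (.Jpart i) ≤ st2 z D (sl2 z f (.Jpart i) + 1) :=
        (win2 z D ι f hf _ (by trivial)).2
      _ ≤ st2 z D (6*z+3) := st2_mono z D (by simp only [sl2]; omega)
      _ = Wval z D := stW2 z D
  | Ja i =>
    have hb := i.isLt
    calc sigJ z D ι f (.Ja i) + pJob z D ι (.Ja i) ≤ st2 z D (sl2 z f (.Ja i) + 1) :=
        (win2 z D ι f hf _ (by trivial)).2
      _ ≤ st2 z D (6*z+3) := st2_mono z D (by simp only [sl2]; omega)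
      _ = Wval z D := stW2 z D
  | Jb i =>
    have hb := i.isLt
    calc sigJ z D ι f (.Jb i) + pJob z D ι (.Jb i) ≤ st3 z D (sl3 z (.Jb i) + 1) :=
        (win3 z D ι f _ (by trivial)).2
      _ ≤ st3 z D (5*z+3) := st3_mono z D (by simp only [sl3]; omega)
      _ = Wval z D := stW3 z D
  | Jδ g =>
    have hb := g.isLt
    calc sigJ z D ι f (.Jδ g) + pJob z D ι (.Jδ g) ≤ st3 z D (sl3 z (.Jδ g) + 1) :=
        (win3 z D ι f _ (by trivial)).2
      _ ≤ st3 z D (5*z+3) := st3_mono z D (by simp only [sl3]; omega)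
      _ = Wval z D := stW3 z D
  | Jβ i =>
    have hb := i.isLt
    calc sigJ z D ι f (.Jβ i) + pJob z D ι (.Jβ i) ≤ st4 z D (sl4 z (.Jβ i) + 1) :=
        (win4 z D ι f _ (by trivial)).2
      _ ≤ st4 z D (3*z+2) := st4_mono z D (by simp only [sl4]; omega)
      _ = Wval z D := stW4 z D
  | Jl2 =>
    calc sigJ z D ι f .Jl2 + pJob z D ι .Jl2 ≤ st4 z D (sl4 z .Jl2 + 1) :=
        (win4 z D ι f _ (by trivial)).2
      _ ≤ st4 z D (3*z+2) := st4_mono z D (by simp only [sl4]; omega)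
      _ = Wval z D := stW4 z D
  | Jl1 => exact le_of_eq (by simp only [sigJ, pJob, Lb, Wval]; ring)
  | Jα i =>
    have hb := i.isLt
    calc sigJ z D ι f (.Jα i) + pJob z D ι (.Jα i) ≤ st1 z D (sl1 z (.Jα i) + 1) :=
        (win1 z D ι f _ (by trivial)).2
      _ ≤ st1 z D (3*z+1) := st1_mono z D (by simp only [sl1]; omega)
      _ = z * Lb z D + D^2 := st1_1 z D z
      _ ≤ Wval z D := by simp only [Lb, Wval]; ring_nf; omega

end Sched
/-- If the 3-Partition instance is a Yes-instance, the constructed instance has a feasible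
schedule with makespan exactly `W` in which every job gets a contiguous set of machines. -/
theorem yes_to_contiguous_schedule
    (z D : ℕ) (ι : Fin (3*z) → ℕ)
    (hz : 0 < z) (hDpos : 0 < D)
    (hιpos : ∀ i, 0 < ι i)
    (hsum : ∑ i, ι i = z * D)
    (hlow : ∀ i, D < 4 * ι i)
    (hhigh : ∀ i, 2 * ι i < D)
    (hD : 4*z*(7*z+1) < D)
    (hyes : IsYes z D ι) :
    ∃ (σ : Job z → ℕ) (ρ : Job z → Finset ℕ),
      Feasible 4 (pJob z D ι) (qJob z) σ ρ ∧
      makespan (pJob z D ι) σ = Wval z D ∧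
      ∀ j, ∃ k l, ρ j = Finset.Icc k l := by
  obtain ⟨f, hf⟩ := hyes
  refine ⟨Sched.sigJ z D ι f, Sched.rhoJ z, ⟨?_, ?_, ?_⟩, ?_, ?_⟩
  · intro j
    cases j <;> exact Finset.Icc_subset_Icc (by omega) (by omega)
  · intro j
    cases j <;> simp [Sched.rhoJ, qJob, Nat.card_Icc]
  · intro j j' hne hint
    obtain ⟨m, hm⟩ := hint
    have hm1 := Finset.mem_inter.mp hm
    rcases Sched.memRho z m j hm1.1 with ⟨e1, hj⟩ | ⟨e1, hj⟩ | ⟨e1, hj⟩ | ⟨e1, hj⟩ <;>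
      rcases Sched.memRho z m j' hm1.2 with ⟨e2, hj'⟩ | ⟨e2, hj'⟩ | ⟨e2, hj'⟩ | ⟨e2, hj'⟩ <;>
        first
          | (exfalso; omega)
          | exact Sched.disjOn1 z D ι f j j' hj hj' hne
          | exact Sched.disjOn2 z D ι f hf j j' hj hj' hne
          | exact Sched.disjOn3 z D ι f j j' hj hj' hne
          | exact Sched.disjOn4 z D ι f j j' hj hj' hne
  · apply le_antisymm
    · exact Finset.sup_le fun j _ => Sched.endle z D ι f hf j
    · calc Wval z D = Sched.sigJ z D ι f .Jl1 + pJob z D ι .Jl1 := by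
            simp only [Sched.sigJ, pJob, Sched.Lb, Wval]; ring
        _ ≤ makespan (pJob z D ι) (Sched.sigJ z D ι f) := by
            unfold makespan
            exact Finset.le_sup (f := fun j => Sched.sigJ z D ι f j + pJob z D ι j) (Finset.mem_univ Job.Jl1)
  · intro j
    cases j <;> exact ⟨_, _, rfl⟩
end

section
/- In every normal-form feasible schedule of the constructed instance with makespan W, for every job a' ∈ a the following counts at the start time of a' coincide: #_{a'} B = #_{a'} α + #_{a'} {λ_1} = #_{a'} c. -/
section AuxHelpers

lemma digit_eq {b a a' x x' : ℕ} (ha : a < b) (ha' : a' < b)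
    (h : a + b * x = a' + b * x') : a = a' ∧ x = x' := by
  have hb : 0 < b := lt_of_le_of_lt (Nat.zero_le _) ha
  have h1 : a = a' := by
    have h2 := congrArg (· % b) h
    simpa [Nat.add_mul_mod_self_left, Nat.mod_eq_of_lt ha, Nat.mod_eq_of_lt ha'] using h2
  refine ⟨h1, ?_⟩
  subst h1
  exact Nat.eq_of_mul_eq_mul_left hb (by omega)

lemma low_lt {z D x y : ℕ} (hx : x ≤ z+1) (hy : y ≤ z*D) (hzD : z+2 ≤ D) (hD : 0 < D) :
    x*D^2 + y < D^3 := by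
  have h1 : x*D^2 ≤ (z+1)*D^2 := Nat.mul_le_mul_right _ hx
  have h2 : (z+2)*D^2 ≤ D*D^2 := Nat.mul_le_mul_right _ hzD
  have h3 : (z+2)*D^2 = (z+1)*D^2 + D^2 := by ring
  have h4 : z*D < D^2 := by
    calc z*D < D*D := (Nat.mul_lt_mul_right hD).mpr (by omega)
    _ = D^2 := (pow_two D).symm
  have h5 : D*D^2 = D^3 := by ring
  omega

lemma ico_disj {a b c d : ℕ} (h : b ≤ c ∨ d ≤ a) :
    Disjoint (Finset.Ico a b) (Finset.Ico c d) := by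
  rw [Finset.disjoint_left]
  intro x hx hx'
  simp only [Finset.mem_Ico] at hx hx'
  omega

/-- Packing bound: pairwise disjoint jobs within `[lo, hi)` have total length `≤ hi - lo`. -/
lemma pack_le {J : Type} [DecidableEq J] (p σ : J → ℕ) (S : Finset J) (lo hi : ℕ)
    (hlo : ∀ j ∈ S, lo ≤ σ j) (hhi : ∀ j ∈ S, σ j + p j ≤ hi)
    (hdis : ∀ j ∈ S, ∀ j' ∈ S, j ≠ j' → σ j + p j ≤ σ j' ∨ σ j' + p j' ≤ σ j) :
    ∑ j ∈ S, p j ≤ hi - lo := by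
  calc ∑ j ∈ S, p j = ∑ j ∈ S, (Finset.Ico (σ j) (σ j + p j)).card := by
        apply Finset.sum_congr rfl; intro j _; simp
    _ = (S.biUnion fun j => Finset.Ico (σ j) (σ j + p j)).card := by
        rw [Finset.card_biUnion]
        intro x hx y hy hxy
        exact ico_disj (by rcases hdis x hx y hy hxy with h | h <;> omega)
    _ ≤ (Finset.Ico lo hi).card := by
        apply Finset.card_le_card
        rw [Finset.biUnion_subset]
        intro j hj
        exact Finset.Ico_subset_Ico (hlo j hj) (hhi j hj)
    _ = hi - lo := Nat.card_Ico lo hi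

/-- On a fully loaded machine, the work finished by the start of job `a` equals `σ a`. -/
lemma finished_sum {J : Type} [DecidableEq J] (p σ : J → ℕ) (S : Finset J) (W : ℕ) (a : J)
    (haS : a ∈ S) (hpa : 0 < p a)
    (hload : ∑ j ∈ S, p j = W)
    (hend : ∀ j ∈ S, σ j + p j ≤ W)
    (hdis : ∀ j ∈ S, ∀ j' ∈ S, j ≠ j' → σ j + p j ≤ σ j' ∨ σ j' + p j' ≤ σ j) :
    ∑ j ∈ S.filter (fun j => σ j + p j ≤ σ a), p j = σ a := by
  classical
  have hsplit : ∑ j ∈ S.filter (fun j => σ j + p j ≤ σ a), p j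
      + ∑ j ∈ S.filter (fun j => ¬ (σ j + p j ≤ σ a)), p j = W := by
    rw [Finset.sum_filter_add_sum_filter_not, hload]
  have hFle : ∑ j ∈ S.filter (fun j => σ j + p j ≤ σ a), p j ≤ σ a := by
    have := pack_le p σ (S.filter (fun j => σ j + p j ≤ σ a)) 0 (σ a)
      (fun j _ => Nat.zero_le _)
      (fun j hj => (Finset.mem_filter.mp hj).2)
      (fun j hj j' hj' hne =>
        hdis j (Finset.mem_filter.mp hj).1 j' (Finset.mem_filter.mp hj').1 hne)
    omega
  have haW : σ a ≤ W := by have := hend a haS; omega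
  have hGle : ∑ j ∈ S.filter (fun j => ¬ (σ j + p j ≤ σ a)), p j ≤ W - σ a := by
    apply pack_le p σ _ (σ a) W
    · intro j hj
      obtain ⟨hjS, hjn⟩ := Finset.mem_filter.mp hj
      by_cases hja : j = a
      · subst hja; exact le_rfl
      · rcases hdis j hjS a haS hja with h | h <;> omega
    · intro j hj; exact hend j (Finset.mem_filter.mp hj).1
    · intro j hj j' hj' hne
      exact hdis j (Finset.mem_filter.mp hj).1 j' (Finset.mem_filter.mp hj').1 hne
  omega

lemma sum_ite_c {n : ℕ} (Q : Fin n → Prop) [DecidablePred Q] (c : ℕ) :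
    (∑ i, if Q i then c else 0) = (Finset.univ.filter Q).card * c := by
  simp [Finset.sum_ite]

lemma sum_ite_mul_add {n : ℕ} (Q : Fin n → Prop) [DecidablePred Q] (c : Fin n → ℕ) (x y : ℕ) :
    (∑ i, if Q i then c i * x + y else 0)
      = (∑ i, if Q i then c i else 0) * x + (Finset.univ.filter Q).card * y := by
  have h : ∀ i, (if Q i then c i * x + y else 0)
      = (if Q i then c i else 0) * x + (if Q i then y else 0) := by
    intro i; split <;> simp
  rw [Finset.sum_congr rfl (fun i _ => h i), Finset.sum_add_distrib, ← Finset.sum_mul, sum_ite_c]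

lemma sum_ite_add_mul {n : ℕ} (Q : Fin n → Prop) [DecidablePred Q] (c : Fin n → ℕ) (x y : ℕ) :
    (∑ i, if Q i then y + c i * x else 0)
      = (∑ i, if Q i then c i else 0) * x + (Finset.univ.filter Q).card * y := by
  have h : ∀ i, (if Q i then y + c i * x else 0) = (if Q i then c i * x + y else 0) := by
    intro i; split <;> [ring; rfl]
  rw [Finset.sum_congr rfl (fun i _ => h i), sum_ite_mul_add]

lemma ite_add_ite_zero {Q : Prop} [Decidable Q] (a b : ℕ) :
    (if Q then a else 0) + (if Q then b else 0) = if Q then a + b else 0 := by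
  split <;> simp

def jobEquiv (z : ℕ) :
    (Fin (z+1) ⊕ Fin (z+1) ⊕ Fin z ⊕ Fin z ⊕ Fin (z+1) ⊕ Fin z ⊕ Fin z ⊕ Fin z ⊕ Fin z ⊕
      Unit ⊕ Unit ⊕ Fin (3*z)) ≃ Job z where
  toFun x :=
    match x with
    | .inl i => .JA i
    | .inr (.inl i) => .JB i
    | .inr (.inr (.inl i)) => .Ja i
    | .inr (.inr (.inr (.inl i))) => .Jb i
    | .inr (.inr (.inr (.inr (.inl i)))) => .Jc i
    | .inr (.inr (.inr (.inr (.inr (.inl i))))) => .Jα i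
    | .inr (.inr (.inr (.inr (.inr (.inr (.inl i)))))) => .Jβ i
    | .inr (.inr (.inr (.inr (.inr (.inr (.inr (.inl i))))))) => .Jγ i
    | .inr (.inr (.inr (.inr (.inr (.inr (.inr (.inr (.inl i)))))))) => .Jδ i
    | .inr (.inr (.inr (.inr (.inr (.inr (.inr (.inr (.inr (.inl _))))))))) => .Jl1
    | .inr (.inr (.inr (.inr (.inr (.inr (.inr (.inr (.inr (.inr (.inl _)))))))))) => .Jl2
    | .inr (.inr (.inr (.inr (.inr (.inr (.inr (.inr (.inr (.inr (.inr i)))))))))) => .Jpart i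
  invFun j :=
    match j with
    | .JA i => .inl i
    | .JB i => .inr (.inl i)
    | .Ja i => .inr (.inr (.inl i))
    | .Jb i => .inr (.inr (.inr (.inl i)))
    | .Jc i => .inr (.inr (.inr (.inr (.inl i))))
    | .Jα i => .inr (.inr (.inr (.inr (.inr (.inl i)))))
    | .Jβ i => .inr (.inr (.inr (.inr (.inr (.inr (.inl i))))))
    | .Jγ i => .inr (.inr (.inr (.inr (.inr (.inr (.inr (.inl i)))))))
    | .Jδ i => .inr (.inr (.inr (.inr (.inr (.inr (.inr (.inr (.inl i))))))))
    | .Jl1 => .inr (.inr (.inr (.inr (.inr (.inr (.inr (.inr (.inr (.inl ())))))))))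
    | .Jl2 => .inr (.inr (.inr (.inr (.inr (.inr (.inr (.inr (.inr (.inr (.inl ()))))))))))
    | .Jpart i => .inr (.inr (.inr (.inr (.inr (.inr (.inr (.inr (.inr (.inr (.inr i))))))))))
  left_inv x := by
    rcases x with i|i|i|i|i|i|i|i|i|u|u|i <;> rfl
  right_inv j := by cases j <;> rfl

lemma sum_univ_job {z : ℕ} (f : Job z → ℕ) :
    ∑ j, f j =
      (∑ i, f (.JA i)) + (∑ i, f (.JB i)) + (∑ i, f (.Ja i)) + (∑ i, f (.Jb i)) +
      (∑ i, f (.Jc i)) + (∑ i, f (.Jα i)) + (∑ i, f (.Jβ i)) + (∑ i, f (.Jγ i)) +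
      (∑ i, f (.Jδ i)) + f .Jl1 + f .Jl2 + (∑ i, f (.Jpart i)) := by
  rw [← Equiv.sum_comp (jobEquiv z) f]
  simp [Fintype.sum_sum_type, jobEquiv]
  ring

lemma final_digits {z D t nA nB nc na nalf nl1 naa nbb ggam ndel Cc Cgam Cdel SP : ℕ}
    (hz : 0 < z)
    (hzD : 28*(z*z) + 4*z < D)
    (hnA : nA ≤ z+1) (hnB : nB ≤ z+1) (hnc : nc ≤ z+1)
    (hna : na ≤ z) (hnalf : nalf ≤ z) (hnl1 : nl1 ≤ 1)
    (hnaa : naa ≤ z) (hnbb : nbb ≤ z) (hggam : ggam ≤ z) (hndel : ndel ≤ z)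
    (hCc : Cc ≤ (z+1)*(2*z)) (hCgam : Cgam ≤ z*(3*z)) (hCdel : Cdel ≤ z*(3*z))
    (hSP : SP ≤ z*D)
    (hM1 : nA*D^2 + na*(D^4 + D^6 + 3*z*D^7) + nalf*(D^3 + D^5 + 4*z*D^7 + D^8)
        + nl1*(D^3 + z*D^7 + D^8) = t)
    (hMk : nA*D^2 + nB*D^3 + Cc*D^7 + nc*D^8 + naa*(D^4 + D^6 + 3*z*D^7)
        + nbb*(D^5 + D^6 + 3*z*D^7) + ggam*D^5 + Cgam*D^7 + ndel*D^4 + Cdel*D^7 + SP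
        = t + ggam*D) :
    nB = nalf + nl1 ∧ nalf + nl1 = nc := by
  have hzz : z ≤ z*z := Nat.le_mul_of_pos_left z hz
  have hDpos : 0 < D := by omega
  have hz2 : z + 2 ≤ D := by omega
  have p1 : 3*z*na ≤ 3*(z*z) := by
    simpa [mul_assoc] using Nat.mul_le_mul_left (3*z) hna
  have p2 : 4*z*nalf ≤ 4*(z*z) := by
    simpa [mul_assoc] using Nat.mul_le_mul_left (4*z) hnalf
  have p3 : z*nl1 ≤ z := by
    simpa using Nat.mul_le_mul_left z hnl1
  have p4 : 3*z*naa ≤ 3*(z*z) := by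
    simpa [mul_assoc] using Nat.mul_le_mul_left (3*z) hnaa
  have p5 : 3*z*nbb ≤ 3*(z*z) := by
    simpa [mul_assoc] using Nat.mul_le_mul_left (3*z) hnbb
  have hCc' : Cc ≤ 2*(z*z) + 2*z := le_trans hCc (le_of_eq (by ring))
  have hCgam' : Cgam ≤ 3*(z*z) := le_trans hCgam (le_of_eq (by ring))
  have hCdel' : Cdel ≤ 3*(z*z) := le_trans hCdel (le_of_eq (by ring))
  have e0 : (nA*D^2 + ggam*D) + D^3*((nalf+nl1) + D*(na + D*(nalf + D*(na +
        D*((3*z*na + 4*z*nalf + z*nl1) + D*(nalf+nl1))))))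
      = (nA*D^2 + SP) + D^3*(nB + D*((naa+ndel) + D*((nbb+ggam) + D*((naa+nbb) +
        D*((Cc+Cgam+Cdel+3*z*naa+3*z*nbb) + D*nc))))) := by
    have l : (nA*D^2 + ggam*D) + D^3*((nalf+nl1) + D*(na + D*(nalf + D*(na +
        D*((3*z*na + 4*z*nalf + z*nl1) + D*(nalf+nl1)))))) = t + ggam*D := by
      rw [← hM1]; ring
    have r : (nA*D^2 + SP) + D^3*(nB + D*((naa+ndel) + D*((nbb+ggam) + D*((naa+nbb) +
        D*((Cc+Cgam+Cdel+3*z*naa+3*z*nbb) + D*nc))))) = t + ggam*D := by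
      rw [← hMk]; ring
    rw [l, r]
  have low1 : nA*D^2 + ggam*D < D^3 := low_lt hnA (Nat.mul_le_mul_right D hggam) hz2 hDpos
  have low2 : nA*D^2 + SP < D^3 := low_lt hnA hSP hz2 hDpos
  obtain ⟨-, e1⟩ := digit_eq low1 low2 e0
  obtain ⟨eB, e2⟩ := digit_eq (show nalf+nl1 < D by omega) (show nB < D by omega) e1
  obtain ⟨-, e3⟩ := digit_eq (show na < D by omega) (show naa+ndel < D by omega) e2
  obtain ⟨-, e4⟩ := digit_eq (show nalf < D by omega) (show nbb+ggam < D by omega) e3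
  obtain ⟨-, e5⟩ := digit_eq (show na < D by omega) (show naa+nbb < D by omega) e4
  obtain ⟨-, e6⟩ := digit_eq (show 3*z*na + 4*z*nalf + z*nl1 < D by omega)
      (show Cc+Cgam+Cdel+3*z*naa+3*z*nbb < D by omega) e5
  exact ⟨eB.symm, e6⟩

end AuxHelpers

set_option maxHeartbeats 3000000 in
/-- Equation (3): at the start of every job `a' ∈ a` we have `#B = #α + #λ₁ = #c`. -/
theorem counts_at_a_jobs
    (z D : ℕ) (ι : Fin (3*z) → ℕ)
    (hz : 0 < z) (hDpos : 0 < D)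
    (hιpos : ∀ i, 0 < ι i)
    (hsum : ∑ i, ι i = z * D)
    (hlow : ∀ i, D < 4 * ι i)
    (hhigh : ∀ i, 2 * ι i < D)
    (hD : 4*z*(7*z+1) < D)
    (σ : Job z → ℕ) (ρ : Job z → Finset ℕ)
    (hfeas : Feasible 4 (pJob z D ι) (qJob z) σ ρ)
    (hmk : makespan (pJob z D ι) σ = Wval z D)
    (hnf : NormalForm ρ) :
    ∀ a' ∈ sa z,
      cnt (pJob z D ι) σ (sB z) a' =
        cnt (pJob z D ι) σ (sα z) a' + cnt (pJob z D ι) σ {Job.Jl1} a' ∧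
      cnt (pJob z D ι) σ (sα z) a' + cnt (pJob z D ι) σ {Job.Jl1} a' =
        cnt (pJob z D ι) σ (sc z) a' := by
  classical
  obtain ⟨hsub, hcard, hdisj⟩ := hfeas
  obtain ⟨h1, h4, hboth, hone⟩ := hnf
  set p := pJob z D ι with hp
  set WW := Wval z D with hW
  have hzz : z ≤ z*z := Nat.le_mul_of_pos_left z hz
  have hzD : 28*(z*z) + 4*z < D := by nlinarith
  have hD5 : D ≤ D^5 := Nat.le_self_pow (by norm_num) D
  have hendW : ∀ j, σ j + p j ≤ WW := by
    intro j; rw [← hmk]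
    exact Finset.le_sup (f := fun j => σ j + p j) (Finset.mem_univ j)
  -- membership facts for machine 1
  have hA1 : ∀ i : Fin (z+1), 1 ∈ ρ (Job.JA i) := fun i => (h1 _).2 trivial
  have ha1 : ∀ i : Fin z, 1 ∈ ρ (Job.Ja i) := fun i => (h1 _).2 trivial
  have half1 : ∀ i : Fin z, 1 ∈ ρ (Job.Jα i) := fun i => (h1 _).2 trivial
  have hl11 : 1 ∈ ρ Job.Jl1 := (h1 _).2 trivial
  have hB1 : ∀ i : Fin (z+1), 1 ∉ ρ (Job.JB i) := fun i h => (h1 _).1 h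
  have hb1 : ∀ i : Fin z, 1 ∉ ρ (Job.Jb i) := fun i h => (h1 _).1 h
  have hc1 : ∀ i : Fin (z+1), 1 ∉ ρ (Job.Jc i) := fun i h => (h1 _).1 h
  have hbet1 : ∀ i : Fin z, 1 ∉ ρ (Job.Jβ i) := fun i h => (h1 _).1 h
  have hgam1 : ∀ i : Fin z, 1 ∉ ρ (Job.Jγ i) := fun i h => (h1 _).1 h
  have hdel1 : ∀ i : Fin z, 1 ∉ ρ (Job.Jδ i) := fun i h => (h1 _).1 h
  have hl21 : 1 ∉ ρ Job.Jl2 := fun h => (h1 _).1 h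
  have hP1 : ∀ i : Fin (3*z), 1 ∉ ρ (Job.Jpart i) := fun i h => (h1 _).1 h
  -- singleton machine jobs
  have hsingle : ∀ (j : Job z) (m m' : ℕ), qJob z j = 1 → m ∈ ρ j → m' ≠ m → m' ∉ ρ j := by
    intro j m m' hq hm hne hm'
    have hc : (ρ j).card = 1 := by rw [hcard]; exact hq
    obtain ⟨x, hx⟩ := Finset.card_eq_one.mp hc
    rw [hx] at hm hm'
    simp only [Finset.mem_singleton] at hm hm'
    exact hne (hm'.trans hm.symm)
  have hbet4 : ∀ i : Fin z, 4 ∈ ρ (Job.Jβ i) := fun i => (h4 _).2 trivial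
  have hl24 : 4 ∈ ρ Job.Jl2 := (h4 _).2 trivial
  -- pairwise disjointness of jobs on a common machine
  have hdism : ∀ m : ℕ, ∀ j ∈ Finset.univ.filter (fun j => m ∈ ρ j),
      ∀ j' ∈ Finset.univ.filter (fun j => m ∈ ρ j), j ≠ j' →
      σ j + p j ≤ σ j' ∨ σ j' + p j' ≤ σ j := by
    intro m j hj j' hj' hne
    exact hdisj j j' hne ⟨m, Finset.mem_inter.mpr
      ⟨(Finset.mem_filter.mp hj).2, (Finset.mem_filter.mp hj').2⟩⟩
  -- machine 1 load
  have hload1 : ∑ j ∈ Finset.univ.filter (fun j => 1 ∈ ρ j), p j = WW := by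
    rw [Finset.sum_filter, sum_univ_job]
    simp only [hA1, ha1, half1, hl11, hB1, hb1, hc1, hbet1, hgam1, hdel1, hl21, hP1,
      if_true, if_false, ite_true, ite_false, Finset.sum_const_zero, add_zero, zero_add,
      Finset.sum_const, Finset.card_univ, Fintype.card_fin, smul_eq_mul, hp, pJob]
    rw [hW]; unfold Wval; ring
  -- Gauss-type component sums
  have hGsucc : ∑ i : Fin (z+1), (i.val : ℕ) = (∑ i : Fin z, (i.val : ℕ)) + z := by
    rw [Fin.sum_univ_castSucc]; simp
  have hAtot : ∑ i : Fin (z+1), p (Job.JA i) = (z+1)*D^2 := by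
    simp [hp, pJob, Finset.sum_const, Finset.card_univ]
  have hBtot : ∑ i : Fin (z+1), p (Job.JB i) = (z+1)*D^3 := by
    simp [hp, pJob, Finset.sum_const, Finset.card_univ]
  have hatot : ∑ i : Fin z, p (Job.Ja i) = z*(D^4 + D^6 + 3*z*D^7) := by
    simp [hp, pJob, Finset.sum_const, Finset.card_univ]
  have hbtot : ∑ i : Fin z, p (Job.Jb i) = z*(D^5 + D^6 + 3*z*D^7) := by
    simp [hp, pJob, Finset.sum_const, Finset.card_univ]
  have hPtot : ∑ i : Fin (3*z), p (Job.Jpart i) = z*D := by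
    simp only [hp]; simp only [pJob]; exact hsum
  have hctot : ∑ i : Fin (z+1), p (Job.Jc i)
      = (z*(z+1) + ((∑ i : Fin z, (i.val : ℕ)) + z))*D^7 + (z+1)*D^8 := by
    have h1 : ∑ i : Fin (z+1), (z + i.val) = z*(z+1) + ((∑ i : Fin z, (i.val : ℕ)) + z) := by
      rw [Finset.sum_add_distrib, hGsucc]
      simp [Finset.sum_const, Finset.card_univ, mul_comm]
    simp only [hp, pJob]
    rw [Finset.sum_add_distrib, ← Finset.sum_mul, h1]
    simp [Finset.sum_const, Finset.card_univ]
  have hγpt : ∀ i : Fin z, p (Job.Jγ i) + (D + (i.val+1)*D^7) = D^5 + 3*z*D^7 := by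
    intro i
    have hi : i.val + 1 ≤ 3*z := by have := i.isLt; omega
    have h3 : (3*z - (i.val+1)) + (i.val+1) = 3*z := Nat.sub_add_cancel hi
    have key : (3*z - (i.val+1))*D^7 + (i.val+1)*D^7 = 3*z*D^7 := by
      rw [← Nat.add_mul, h3]
    have h2 : D ≤ D^5 + (3*z - (i.val+1))*D^7 := le_trans hD5 (Nat.le_add_right _ _)
    simp only [hp, pJob]
    generalize hA : (3*z - (i.val+1))*D^7 = A at key h2 ⊢
    generalize hB : (i.val+1)*D^7 = B at key ⊢
    generalize hC : 3*z*D^7 = C at key ⊢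
    omega
  have hδpt : ∀ i : Fin z, p (Job.Jδ i) + (i.val+1)*D^7 = D^4 + 3*z*D^7 := by
    intro i
    have hi : i.val + 1 ≤ 3*z := by have := i.isLt; omega
    have h3 : (3*z - (i.val+1)) + (i.val+1) = 3*z := Nat.sub_add_cancel hi
    have key : (3*z - (i.val+1))*D^7 + (i.val+1)*D^7 = 3*z*D^7 := by
      rw [← Nat.add_mul, h3]
    simp only [hp, pJob]
    generalize hA : (3*z - (i.val+1))*D^7 = A at key ⊢
    generalize hB : (i.val+1)*D^7 = B at key ⊢
    generalize hC : 3*z*D^7 = C at key ⊢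
    omega
  have hmix : ∑ i : Fin z, (D + (i.val+1)*D^7)
      = z*D + ((∑ i : Fin z, (i.val : ℕ)) + z)*D^7 := by
    rw [Finset.sum_add_distrib, ← Finset.sum_mul, Finset.sum_add_distrib]
    simp [Finset.sum_const, Finset.card_univ]
  have hγtot : (∑ i : Fin z, p (Job.Jγ i)) + (z*D + ((∑ i : Fin z, (i.val : ℕ)) + z)*D^7)
      = z*D^5 + 3*(z*z)*D^7 := by
    have h1 : ∑ i : Fin z, (p (Job.Jγ i) + (D + (i.val+1)*D^7)) = ∑ i : Fin z, (D^5 + 3*z*D^7) :=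
      Finset.sum_congr rfl (fun i _ => hγpt i)
    rw [Finset.sum_add_distrib, hmix] at h1
    rw [h1]
    simp [Finset.sum_const, Finset.card_univ]
    ring
  have hmix2 : ∑ i : Fin z, ((i.val+1)*D^7) = ((∑ i : Fin z, (i.val : ℕ)) + z)*D^7 := by
    rw [← Finset.sum_mul, Finset.sum_add_distrib]
    simp [Finset.sum_const, Finset.card_univ]
  have hδtot : (∑ i : Fin z, p (Job.Jδ i)) + ((∑ i : Fin z, (i.val : ℕ)) + z)*D^7
      = z*D^4 + 3*(z*z)*D^7 := by
    have h1 : ∑ i : Fin z, (p (Job.Jδ i) + (i.val+1)*D^7) = ∑ i : Fin z, (D^4 + 3*z*D^7) :=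
      Finset.sum_congr rfl (fun i _ => hδpt i)
    rw [Finset.sum_add_distrib, hmix2] at h1
    rw [h1]
    simp [Finset.sum_const, Finset.card_univ]
    ring
  -- membership facts for machines 2 and 3
  have hA2 : ∀ i : Fin (z+1), 2 ∈ ρ (Job.JA i) := fun i => (hboth (Job.JA i) trivial).1
  have hA3 : ∀ i : Fin (z+1), 3 ∈ ρ (Job.JA i) := fun i => (hboth (Job.JA i) trivial).2
  have hB2 : ∀ i : Fin (z+1), 2 ∈ ρ (Job.JB i) := fun i => (hboth (Job.JB i) trivial).1
  have hB3 : ∀ i : Fin (z+1), 3 ∈ ρ (Job.JB i) := fun i => (hboth (Job.JB i) trivial).2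
  have hc2 : ∀ i : Fin (z+1), 2 ∈ ρ (Job.Jc i) := fun i => (hboth (Job.Jc i) trivial).1
  have hc3 : ∀ i : Fin (z+1), 3 ∈ ρ (Job.Jc i) := fun i => (hboth (Job.Jc i) trivial).2
  have half2 : ∀ i : Fin z, 2 ∉ ρ (Job.Jα i) := fun i => hsingle _ 1 2 rfl (half1 i) (by norm_num)
  have half3 : ∀ i : Fin z, 3 ∉ ρ (Job.Jα i) := fun i => hsingle _ 1 3 rfl (half1 i) (by norm_num)
  have hbet2 : ∀ i : Fin z, 2 ∉ ρ (Job.Jβ i) := fun i => hsingle _ 4 2 rfl (hbet4 i) (by norm_num)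
  have hbet3 : ∀ i : Fin z, 3 ∉ ρ (Job.Jβ i) := fun i => hsingle _ 4 3 rfl (hbet4 i) (by norm_num)
  have hl12 : 2 ∉ ρ Job.Jl1 := hsingle _ 1 2 rfl hl11 (by norm_num)
  have hl13 : 3 ∉ ρ Job.Jl1 := hsingle _ 1 3 rfl hl11 (by norm_num)
  have hl22 : 2 ∉ ρ Job.Jl2 := hsingle _ 4 2 rfl hl24 (by norm_num)
  have hl23m : 3 ∉ ρ Job.Jl2 := hsingle _ 4 3 rfl hl24 (by norm_num)
  have honesum : ∀ j : Job z, OneM23 j →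
      ((if 2 ∈ ρ j then p j else 0) + (if 3 ∈ ρ j then p j else 0)) = p j := by
    intro j hj
    have h23 := hone j hj
    by_cases h2 : 2 ∈ ρ j
    · rw [if_pos h2, if_neg (by tauto), add_zero]
    · rw [if_neg h2, if_pos (by tauto), zero_add]
  have hL23 : (∑ j ∈ Finset.univ.filter (fun j => 2 ∈ ρ j), p j)
      + (∑ j ∈ Finset.univ.filter (fun j => 3 ∈ ρ j), p j) = 2 * WW := by
    rw [Finset.sum_filter, Finset.sum_filter, ← Finset.sum_add_distrib, sum_univ_job]
    have e_a : ∀ i : Fin z, ((if 2 ∈ ρ (Job.Ja i) then p (Job.Ja i) else 0)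
        + (if 3 ∈ ρ (Job.Ja i) then p (Job.Ja i) else 0)) = p (Job.Ja i) :=
      fun i => honesum _ (by constructor)
    have e_b : ∀ i : Fin z, ((if 2 ∈ ρ (Job.Jb i) then p (Job.Jb i) else 0)
        + (if 3 ∈ ρ (Job.Jb i) then p (Job.Jb i) else 0)) = p (Job.Jb i) :=
      fun i => honesum _ (by constructor)
    have e_g : ∀ i : Fin z, ((if 2 ∈ ρ (Job.Jγ i) then p (Job.Jγ i) else 0)
        + (if 3 ∈ ρ (Job.Jγ i) then p (Job.Jγ i) else 0)) = p (Job.Jγ i) :=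
      fun i => honesum _ (by constructor)
    have e_d : ∀ i : Fin z, ((if 2 ∈ ρ (Job.Jδ i) then p (Job.Jδ i) else 0)
        + (if 3 ∈ ρ (Job.Jδ i) then p (Job.Jδ i) else 0)) = p (Job.Jδ i) :=
      fun i => honesum _ (by constructor)
    have e_P : ∀ i : Fin (3*z), ((if 2 ∈ ρ (Job.Jpart i) then p (Job.Jpart i) else 0)
        + (if 3 ∈ ρ (Job.Jpart i) then p (Job.Jpart i) else 0)) = p (Job.Jpart i) :=
      fun i => honesum _ (by constructor)
    simp only [e_a, e_b, e_g, e_d, e_P]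
    simp only [hA2, hA3, hB2, hB3, hc2, hc3, half2, half3, hbet2, hbet3, hl12, hl13,
      hl22, hl23m, if_true, ite_true, if_false, ite_false, not_false_eq_true,
      Finset.sum_const_zero, add_zero, zero_add, Finset.sum_add_distrib]
    rw [hW]; unfold Wval
    zify at hAtot hBtot hatot hbtot hctot hγtot hδtot hPtot ⊢
    linear_combination 2*hAtot + 2*hBtot + hatot + hbtot + 2*hctot + hγtot + hδtot + hPtot
  have hL2le : ∑ j ∈ Finset.univ.filter (fun j => 2 ∈ ρ j), p j ≤ WW := by
    have := pack_le p σ (Finset.univ.filter (fun j => 2 ∈ ρ j)) 0 WW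
      (fun j _ => Nat.zero_le _) (fun j _ => hendW j) (hdism 2)
    simpa using this
  have hL3le : ∑ j ∈ Finset.univ.filter (fun j => 3 ∈ ρ j), p j ≤ WW := by
    have := pack_le p σ (Finset.univ.filter (fun j => 3 ∈ ρ j)) 0 WW
      (fun j _ => Nat.zero_le _) (fun j _ => hendW j) (hdism 3)
    simpa using this
  intro a' ha'
  obtain ⟨i0, -, rfl⟩ := Finset.mem_image.mp ha'
  obtain ⟨k, hk23, hka⟩ : ∃ k, (k = 2 ∨ k = 3) ∧ k ∈ ρ (Job.Ja i0) := by
    by_cases h2 : 2 ∈ ρ (Job.Ja i0)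
    · exact ⟨2, Or.inl rfl, h2⟩
    · refine ⟨3, Or.inr rfl, ?_⟩
      have := hone (Job.Ja i0) (by constructor)
      tauto
  have hpa0 : 0 < p (Job.Ja i0) := by
    have h4' : 0 < D^4 := pow_pos hDpos 4
    simp only [hp, pJob]; omega
  have ha0S1 : Job.Ja i0 ∈ Finset.univ.filter (fun j => 1 ∈ ρ j) :=
    Finset.mem_filter.mpr ⟨Finset.mem_univ _, ha1 i0⟩
  have hT1 := finished_sum p σ (Finset.univ.filter (fun j => 1 ∈ ρ j)) WW (Job.Ja i0)
    ha0S1 hpa0 hload1 (fun j _ => hendW j) (hdism 1)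
  rw [Finset.filter_filter, Finset.sum_filter, sum_univ_job] at hT1
  simp only [hA1, ha1, half1, hl11, hB1, hb1, hc1, hbet1, hgam1, hdel1, hl21, hP1,
    true_and, false_and, if_true, ite_true, if_false, ite_false, not_false_eq_true,
    Finset.sum_const_zero, add_zero, zero_add, hp, pJob] at hT1
  rw [sum_ite_c (fun x : Fin (z+1) => σ (Job.JA x) + D^2 ≤ σ (Job.Ja i0)) (D^2),
      sum_ite_c (fun x : Fin z => σ (Job.Ja x) + (D^4 + D^6 + 3*z*D^7) ≤ σ (Job.Ja i0))
        (D^4 + D^6 + 3*z*D^7),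
      sum_ite_c (fun x : Fin z => σ (Job.Jα x) + (D^3 + D^5 + 4*z*D^7 + D^8) ≤ σ (Job.Ja i0))
        (D^3 + D^5 + 4*z*D^7 + D^8),
      show (if σ Job.Jl1 + (D^3 + z*D^7 + D^8) ≤ σ (Job.Ja i0) then D^3 + z*D^7 + D^8 else 0)
        = (if σ Job.Jl1 + (D^3 + z*D^7 + D^8) ≤ σ (Job.Ja i0) then 1 else 0) * (D^3 + z*D^7 + D^8)
        from by split <;> simp] at hT1
  -- machine k facts
  have hAk : ∀ i : Fin (z+1), k ∈ ρ (Job.JA i) := by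
    rcases hk23 with rfl | rfl
    exacts [hA2, hA3]
  have hBk : ∀ i : Fin (z+1), k ∈ ρ (Job.JB i) := by
    rcases hk23 with rfl | rfl
    exacts [hB2, hB3]
  have hck : ∀ i : Fin (z+1), k ∈ ρ (Job.Jc i) := by
    rcases hk23 with rfl | rfl
    exacts [hc2, hc3]
  have halfk : ∀ i : Fin z, k ∉ ρ (Job.Jα i) := by
    rcases hk23 with rfl | rfl
    exacts [half2, half3]
  have hbetk : ∀ i : Fin z, k ∉ ρ (Job.Jβ i) := by
    rcases hk23 with rfl | rfl
    exacts [hbet2, hbet3]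
  have hl1k : k ∉ ρ Job.Jl1 := by
    rcases hk23 with rfl | rfl
    exacts [hl12, hl13]
  have hl2k : k ∉ ρ Job.Jl2 := by
    rcases hk23 with rfl | rfl
    exacts [hl22, hl23m]
  have hloadk : ∑ j ∈ Finset.univ.filter (fun j => k ∈ ρ j), p j = WW := by
    rcases hk23 with rfl | rfl
    · linarith [hL2le, hL3le, hL23]
    · linarith [hL2le, hL3le, hL23]
  have hTk := finished_sum p σ (Finset.univ.filter (fun j => k ∈ ρ j)) WW (Job.Ja i0)
    (Finset.mem_filter.mpr ⟨Finset.mem_univ _, hka⟩) hpa0 hloadk (fun j _ => hendW j) (hdism k)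
  rw [Finset.filter_filter, Finset.sum_filter, sum_univ_job] at hTk
  simp only [hAk, hBk, hck, halfk, hbetk, hl1k, hl2k, true_and, false_and, if_true, ite_true,
    if_false, ite_false, not_false_eq_true, Finset.sum_const_zero, add_zero, zero_add,
    hp, pJob] at hTk
  -- closed forms for the machine-k finished sums
  rw [sum_ite_c (fun x : Fin (z+1) => σ (Job.JA x) + D^2 ≤ σ (Job.Ja i0)) (D^2),
      sum_ite_c (fun x : Fin (z+1) => σ (Job.JB x) + D^3 ≤ σ (Job.Ja i0)) (D^3),
      sum_ite_c (fun x : Fin z =>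
          k ∈ ρ (Job.Ja x) ∧ σ (Job.Ja x) + (D^4 + D^6 + 3*z*D^7) ≤ σ (Job.Ja i0))
        (D^4 + D^6 + 3*z*D^7),
      sum_ite_c (fun x : Fin z =>
          k ∈ ρ (Job.Jb x) ∧ σ (Job.Jb x) + (D^5 + D^6 + 3*z*D^7) ≤ σ (Job.Ja i0))
        (D^5 + D^6 + 3*z*D^7),
      sum_ite_mul_add (fun x : Fin (z+1) =>
          σ (Job.Jc x) + ((z + x.val)*D^7 + D^8) ≤ σ (Job.Ja i0))
        (fun x => z + x.val) (D^7) (D^8),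
      sum_ite_add_mul (fun x : Fin z =>
          k ∈ ρ (Job.Jδ x) ∧ σ (Job.Jδ x) + (D^4 + (3*z - (x.val+1))*D^7) ≤ σ (Job.Ja i0))
        (fun x => 3*z - (x.val+1)) (D^7) (D^4)] at hTk
  -- the γ sum, with the `- D` compensated
  have hγif : ∀ x : Fin z,
      ((if k ∈ ρ (Job.Jγ x) ∧ σ (Job.Jγ x) + (D^5 + (3*z - (x.val+1))*D^7 - D) ≤ σ (Job.Ja i0)
          then (D^5 + (3*z - (x.val+1))*D^7 - D) else 0)
        + (if k ∈ ρ (Job.Jγ x) ∧ σ (Job.Jγ x) + (D^5 + (3*z - (x.val+1))*D^7 - D) ≤ σ (Job.Ja i0)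
          then D else 0))
      = (if k ∈ ρ (Job.Jγ x) ∧ σ (Job.Jγ x) + (D^5 + (3*z - (x.val+1))*D^7 - D) ≤ σ (Job.Ja i0)
          then (3*z - (x.val+1))*D^7 + D^5 else 0) := by
    intro x
    rw [ite_add_ite_zero]
    refine if_congr Iff.rfl ?_ rfl
    have h2 : D ≤ D^5 + (3*z - (x.val+1))*D^7 := le_trans hD5 (Nat.le_add_right _ _)
    generalize (3*z - (x.val+1))*D^7 = A at h2 ⊢
    omega
  have hSγk : (∑ x : Fin z,
        if k ∈ ρ (Job.Jγ x) ∧ σ (Job.Jγ x) + (D^5 + (3*z - (x.val+1))*D^7 - D) ≤ σ (Job.Ja i0)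
          then (D^5 + (3*z - (x.val+1))*D^7 - D) else 0)
      + (Finset.univ.filter (fun x : Fin z =>
          k ∈ ρ (Job.Jγ x) ∧ σ (Job.Jγ x) + (D^5 + (3*z - (x.val+1))*D^7 - D) ≤ σ (Job.Ja i0))).card * D
      = (∑ x : Fin z,
          if k ∈ ρ (Job.Jγ x) ∧ σ (Job.Jγ x) + (D^5 + (3*z - (x.val+1))*D^7 - D) ≤ σ (Job.Ja i0)
            then (3*z - (x.val+1)) else 0) * D^7
        + (Finset.univ.filter (fun x : Fin z =>
          k ∈ ρ (Job.Jγ x) ∧ σ (Job.Jγ x) + (D^5 + (3*z - (x.val+1))*D^7 - D) ≤ σ (Job.Ja i0))).card * D^5 := by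
    rw [← sum_ite_c (fun x : Fin z =>
          k ∈ ρ (Job.Jγ x) ∧ σ (Job.Jγ x) + (D^5 + (3*z - (x.val+1))*D^7 - D) ≤ σ (Job.Ja i0)) D,
        ← Finset.sum_add_distrib, Finset.sum_congr rfl (fun x _ => hγif x)]
    exact sum_ite_mul_add _ _ (D^7) (D^5)
  -- the machine-k equation in normal shape
  have hMk : (Finset.univ.filter (fun x : Fin (z+1) => σ (Job.JA x) + D^2 ≤ σ (Job.Ja i0))).card*D^2 + (Finset.univ.filter (fun x : Fin (z+1) => σ (Job.JB x) + D^3 ≤ σ (Job.Ja i0))).card*D^3 + (∑ x : Fin (z+1), if σ (Job.Jc x) + ((z + x.val)*D^7 + D^8) ≤ σ (Job.Ja i0) then z + x.val else 0)*D^7 + (Finset.univ.filter (fun x : Fin (z+1) => σ (Job.Jc x) + ((z + x.val)*D^7 + D^8) ≤ σ (Job.Ja i0))).card*D^8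
      + (Finset.univ.filter (fun x : Fin z => k ∈ ρ (Job.Ja x) ∧ σ (Job.Ja x) + (D^4 + D^6 + 3*z*D^7) ≤ σ (Job.Ja i0))).card*(D^4 + D^6 + 3*z*D^7)
      + (Finset.univ.filter (fun x : Fin z => k ∈ ρ (Job.Jb x) ∧ σ (Job.Jb x) + (D^5 + D^6 + 3*z*D^7) ≤ σ (Job.Ja i0))).card*(D^5 + D^6 + 3*z*D^7)
      + (Finset.univ.filter (fun x : Fin z => k ∈ ρ (Job.Jγ x) ∧ σ (Job.Jγ x) + (D^5 + (3*z - (x.val+1))*D^7 - D) ≤ σ (Job.Ja i0))).card*D^5 + (∑ x : Fin z, if k ∈ ρ (Job.Jγ x) ∧ σ (Job.Jγ x) + (D^5 + (3*z - (x.val+1))*D^7 - D) ≤ σ (Job.Ja i0) then 3*z - (x.val+1) else 0)*D^7 + (Finset.univ.filter (fun x : Fin z => k ∈ ρ (Job.Jδ x) ∧ σ (Job.Jδ x) + (D^4 + (3*z - (x.val+1))*D^7) ≤ σ (Job.Ja i0))).card*D^4 + (∑ x : Fin z, if k ∈ ρ (Job.Jδ x) ∧ σ (Job.Jδ x) + (D^4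 + (3*z - (x.val+1))*D^7) ≤ σ (Job.Ja i0) then 3*z - (x.val+1) else 0)*D^7 + (∑ x : Fin (3*z), if k ∈ ρ (Job.Jpart x) ∧ σ (Job.Jpart x) + ι x ≤ σ (Job.Ja i0) then ι x else 0)
      = σ (Job.Ja i0) + (Finset.univ.filter (fun x : Fin z => k ∈ ρ (Job.Jγ x) ∧ σ (Job.Jγ x) + (D^5 + (3*z - (x.val+1))*D^7 - D) ≤ σ (Job.Ja i0))).card*D := by
    linarith [hTk, hSγk]
  -- bounds
  have bA : (Finset.univ.filter (fun x : Fin (z+1) => σ (Job.JA x) + D^2 ≤ σ (Job.Ja i0))).card ≤ z+1 := le_trans (Finset.card_filter_le _ _) (by simp)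
  have bB : (Finset.univ.filter (fun x : Fin (z+1) => σ (Job.JB x) + D^3 ≤ σ (Job.Ja i0))).card ≤ z+1 := le_trans (Finset.card_filter_le _ _) (by simp)
  have bc : (Finset.univ.filter (fun x : Fin (z+1) => σ (Job.Jc x) + ((z + x.val)*D^7 + D^8) ≤ σ (Job.Ja i0))).card ≤ z+1 := le_trans (Finset.card_filter_le _ _) (by simp)
  have bna : (Finset.univ.filter (fun x : Fin z => σ (Job.Ja x) + (D^4 + D^6 + 3*z*D^7) ≤ σ (Job.Ja i0))).card ≤ z := le_trans (Finset.card_filter_le _ _) (by simp)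
  have bnalf : (Finset.univ.filter (fun x : Fin z => σ (Job.Jα x) + (D^3 + D^5 + 4*z*D^7 + D^8) ≤ σ (Job.Ja i0))).card ≤ z := le_trans (Finset.card_filter_le _ _) (by simp)
  have bnl1 : (if σ Job.Jl1 + (D^3 + z*D^7 + D^8) ≤ σ (Job.Ja i0) then 1 else 0) ≤ 1 := by split <;> omega
  have bnaa : (Finset.univ.filter (fun x : Fin z => k ∈ ρ (Job.Ja x) ∧ σ (Job.Ja x) + (D^4 + D^6 + 3*z*D^7) ≤ σ (Job.Ja i0))).card ≤ z := le_trans (Finset.card_filter_le _ _) (by simp)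
  have bnbb : (Finset.univ.filter (fun x : Fin z => k ∈ ρ (Job.Jb x) ∧ σ (Job.Jb x) + (D^5 + D^6 + 3*z*D^7) ≤ σ (Job.Ja i0))).card ≤ z := le_trans (Finset.card_filter_le _ _) (by simp)
  have bggam : (Finset.univ.filter (fun x : Fin z => k ∈ ρ (Job.Jγ x) ∧ σ (Job.Jγ x) + (D^5 + (3*z - (x.val+1))*D^7 - D) ≤ σ (Job.Ja i0))).card ≤ z := le_trans (Finset.card_filter_le _ _) (by simp)
  have bndel : (Finset.univ.filter (fun x : Fin z => k ∈ ρ (Job.Jδ x) ∧ σ (Job.Jδ x) + (D^4 + (3*z - (x.val+1))*D^7) ≤ σ (Job.Ja i0))).card ≤ z := le_trans (Finset.card_filter_le _ _) (by simp)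
  have bCc : (∑ x : Fin (z+1), if σ (Job.Jc x) + ((z + x.val)*D^7 + D^8) ≤ σ (Job.Ja i0) then z + x.val else 0) ≤ (z+1)*(2*z) := by
    calc (∑ x : Fin (z+1), if σ (Job.Jc x) + ((z + x.val)*D^7 + D^8) ≤ σ (Job.Ja i0) then z + x.val else 0) ≤ ∑ _x : Fin (z+1), 2*z := by
          apply Finset.sum_le_sum
          intro i _
          split
          · have := i.isLt; omega
          · omega
      _ = (z+1)*(2*z) := by simp [Finset.sum_const, Finset.card_univ]
  have bCgam : (∑ x : Fin z, if k ∈ ρ (Job.Jγ x) ∧ σ (Job.Jγ x) + (D^5 + (3*z - (x.val+1))*D^7 - D) ≤ σ (Job.Ja i0) then 3*z - (x.val+1) else 0) ≤ z*(3*z) := by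
    calc (∑ x : Fin z, if k ∈ ρ (Job.Jγ x) ∧ σ (Job.Jγ x) + (D^5 + (3*z - (x.val+1))*D^7 - D) ≤ σ (Job.Ja i0) then 3*z - (x.val+1) else 0) ≤ ∑ _x : Fin z, 3*z := by
          apply Finset.sum_le_sum
          intro i _
          split <;> omega
      _ = z*(3*z) := by simp [Finset.sum_const, Finset.card_univ]
  have bCdel : (∑ x : Fin z, if k ∈ ρ (Job.Jδ x) ∧ σ (Job.Jδ x) + (D^4 + (3*z - (x.val+1))*D^7) ≤ σ (Job.Ja i0) then 3*z - (x.val+1) else 0) ≤ z*(3*z) := by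
    calc (∑ x : Fin z, if k ∈ ρ (Job.Jδ x) ∧ σ (Job.Jδ x) + (D^4 + (3*z - (x.val+1))*D^7) ≤ σ (Job.Ja i0) then 3*z - (x.val+1) else 0) ≤ ∑ _x : Fin z, 3*z := by
          apply Finset.sum_le_sum
          intro i _
          split <;> omega
      _ = z*(3*z) := by simp [Finset.sum_const, Finset.card_univ]
  have bSP : (∑ x : Fin (3*z), if k ∈ ρ (Job.Jpart x) ∧ σ (Job.Jpart x) + ι x ≤ σ (Job.Ja i0) then ι x else 0) ≤ z*D := by
    calc (∑ x : Fin (3*z), if k ∈ ρ (Job.Jpart x) ∧ σ (Job.Jpart x) + ι x ≤ σ (Job.Ja i0) then ι x else 0) ≤ ∑ x : Fin (3*z), ι x := by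
          apply Finset.sum_le_sum
          intro i _
          split <;> omega
      _ = z*D := hsum
  have key := final_digits hz hzD bA bB bc bna bnalf bnl1 bnaa bnbb bggam bndel
    bCc bCgam bCdel bSP hT1 hMk
  -- translate the counts
  have hcntB : cnt p σ (sB z) (Job.Ja i0) = (Finset.univ.filter (fun x : Fin (z+1) => σ (Job.JB x) + D^3 ≤ σ (Job.Ja i0))).card := by
    simp only [cnt, sB, Finset.filter_image]
    rw [Finset.card_image_of_injective _ (fun a b h => by injection h)]
    simp only [hp, pJob]
  have hcntα : cnt p σ (sα z) (Job.Ja i0) = (Finset.univ.filter (fun x : Fin z => σ (Job.Jα x) + (D^3 + D^5 + 4*z*D^7 + D^8) ≤ σ (Job.Ja i0))).card := by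
    simp only [cnt, sα, Finset.filter_image]
    rw [Finset.card_image_of_injective _ (fun a b h => by injection h)]
    simp only [hp, pJob]
  have hcntc : cnt p σ (sc z) (Job.Ja i0) = (Finset.univ.filter (fun x : Fin (z+1) => σ (Job.Jc x) + ((z + x.val)*D^7 + D^8) ≤ σ (Job.Ja i0))).card := by
    simp only [cnt, sc, Finset.filter_image]
    rw [Finset.card_image_of_injective _ (fun a b h => by injection h)]
    simp only [hp, pJob]
  have hcntl : cnt p σ {Job.Jl1} (Job.Ja i0) = (if σ Job.Jl1 + (D^3 + z*D^7 + D^8) ≤ σ (Job.Ja i0) then 1 else 0) := by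
    simp only [cnt, Finset.filter_singleton, hp, pJob]
    split <;> rename_i hcond <;> simp [hcond]
  rw [hcntB, hcntα, hcntc, hcntl]
  exact key
end

section
/- In every normal-form feasible schedule of the constructed instance with makespan W, for every job c' ∈ c the counts at the start time of c' satisfy #_{c'} b = #_{c'} a. -/
namespace PTSAux

open Finset

lemma cancel {y x k : ℤ} (hy : 0 < y) (hx : |x| < y) (h : x + y * k = 0) : x = 0 ∧ k = 0 := by
  have hk : k = 0 := by
    by_contra hk
    have h1 : 1 ≤ |k| := by
      have := abs_pos.mpr hk; omega
    have h2 : y ≤ |y * k| := by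
      rw [abs_mul, abs_of_pos hy]
      nlinarith [abs_nonneg k]
    have hxk : x = -(y * k) := by linarith
    rw [hxk, abs_neg] at hx
    linarith
  refine ⟨?_, hk⟩
  rw [hk, mul_zero, add_zero] at h
  exact h

lemma digit6 {D c8 c7 c6 c5 c4 c3 c2 clow : ℤ} (hD : 0 < D)
    (h8 : |c8| < D) (h7 : |c7| < D) (h6 : |c6| < D) (h5 : |c5| < D) (h4 : |c4| < D)
    (h3 : |c3| < D) (h2 : |c2| < D) (hlow : |clow| < D^2)
    (heq : clow + c2*D^2 + c3*D^3 + c4*D^4 + c5*D^5 + c6*D^6 + c7*D^7 + c8*D^8 = 0) :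
    c6 = 0 := by
  have hD2 : (0:ℤ) < D^2 := by positivity
  have e0 : clow + (D^2) * (c2 + D*(c3 + D*(c4 + D*(c5 + D*(c6 + D*(c7 + D*c8)))))) = 0 := by
    linear_combination heq
  obtain ⟨-, h⟩ := cancel hD2 hlow e0
  obtain ⟨-, h⟩ := cancel hD h2 h
  obtain ⟨-, h⟩ := cancel hD h3 h
  obtain ⟨-, h⟩ := cancel hD h4 h
  obtain ⟨-, h⟩ := cancel hD h5 h
  exact (cancel hD h6 h).1

lemma sum_len_le {J : Type*} [DecidableEq J] (S : Finset J) (s e : J → ℕ) (lo hi : ℕ)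
    (hdisj : ∀ i ∈ S, ∀ j ∈ S, i ≠ j → e i ≤ s j ∨ e j ≤ s i)
    (hlo : ∀ i ∈ S, lo ≤ s i) (hhi : ∀ i ∈ S, e i ≤ hi) :
    ∑ i ∈ S, (e i - s i) ≤ hi - lo := by
  have hcard : ∑ i ∈ S, (e i - s i) = (S.biUnion fun i => Finset.Ico (s i) (e i)).card := by
    rw [Finset.card_biUnion]
    · exact Finset.sum_congr rfl fun i _ => (Nat.card_Ico _ _).symm
    · intro x hx y hy hxy
      rcases hdisj x hx y hy hxy with h | h <;>
        · simp only [Finset.disjoint_left, Finset.mem_Ico]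
          intro a ha hb
          omega
  rw [hcard]
  have hsub : (S.biUnion fun i => Finset.Ico (s i) (e i)) ⊆ Finset.Ico lo hi := by
    intro x hx
    simp only [Finset.mem_biUnion, Finset.mem_Ico] at hx ⊢
    obtain ⟨i, hi, h1, h2⟩ := hx
    exact ⟨le_trans (hlo i hi) h1, lt_of_lt_of_le h2 (hhi i hi)⟩
  calc (S.biUnion fun i => Finset.Ico (s i) (e i)).card ≤ (Finset.Ico lo hi).card :=
        Finset.card_le_card hsub
    _ = hi - lo := by rw [Nat.card_Ico]

lemma prefix_exact {J : Type*} [DecidableEq J] (M : Finset J) (s q : J → ℕ) (Wv u : ℕ)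
    (hdisj : ∀ i ∈ M, ∀ j ∈ M, i ≠ j → s i + q i ≤ s j ∨ s j + q j ≤ s i)
    (hend : ∀ j ∈ M, s j + q j ≤ Wv)
    (hload : ∑ i ∈ M, q i = Wv)
    (hu : u ≤ Wv)
    (hsplit : ∀ j ∈ M, s j + q j ≤ u ∨ u ≤ s j) :
    ∑ i ∈ M.filter (fun j => s j + q j ≤ u), q i = u := by
  have hconv : ∀ (S : Finset J), ∑ i ∈ S, ((s i + q i) - s i) = ∑ i ∈ S, q i :=
    fun S => Finset.sum_congr rfl fun j _ => by omega
  have h1 : ∑ i ∈ M.filter (fun j => s j + q j ≤ u), ((s i + q i) - s i) ≤ u - 0 := by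
    refine sum_len_le _ s (fun j => s j + q j) 0 u ?_ (fun i _ => Nat.zero_le _) ?_
    · intro i hi j hj hij
      exact hdisj i (Finset.mem_of_mem_filter _ hi) j (Finset.mem_of_mem_filter _ hj) hij
    · intro i hi
      exact (Finset.mem_filter.mp hi).2
  have h2 : ∑ i ∈ M.filter (fun j => ¬ (s j + q j ≤ u)), ((s i + q i) - s i) ≤ Wv - u := by
    refine sum_len_le _ s (fun j => s j + q j) u Wv ?_ ?_ ?_
    · intro i hi j hj hij
      exact hdisj i (Finset.mem_of_mem_filter _ hi) j (Finset.mem_of_mem_filter _ hj) hij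
    · intro i hi
      have hni := (Finset.mem_filter.mp hi).2
      rcases hsplit i (Finset.mem_of_mem_filter _ hi) with h | h
      · exact absurd h hni
      · exact h
    · intro i hi
      exact hend i (Finset.mem_of_mem_filter _ hi)
  rw [hconv] at h1 h2
  have h3 := Finset.sum_filter_add_sum_filter_not M (fun j => s j + q j ≤ u) q
  rw [hload] at h3
  omega

def jEquiv (z : ℕ) : Job z ≃
    (Fin (z+1) ⊕ Fin (z+1) ⊕ Fin z ⊕ Fin z ⊕ Fin (z+1) ⊕ Fin z ⊕ Fin z ⊕ Fin z ⊕ Fin z ⊕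
      Unit ⊕ Unit ⊕ Fin (3*z)) where
  toFun j := match j with
    | .JA i => Sum.inl i
    | .JB i => Sum.inr (Sum.inl i)
    | .Ja i => Sum.inr (Sum.inr (Sum.inl i))
    | .Jb i => Sum.inr (Sum.inr (Sum.inr (Sum.inl i)))
    | .Jc i => Sum.inr (Sum.inr (Sum.inr (Sum.inr (Sum.inl i))))
    | .Jα i => Sum.inr (Sum.inr (Sum.inr (Sum.inr (Sum.inr (Sum.inl i)))))
    | .Jβ i => Sum.inr (Sum.inr (Sum.inr (Sum.inr (Sum.inr (Sum.inr (Sum.inl i))))))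
    | .Jγ i => Sum.inr (Sum.inr (Sum.inr (Sum.inr (Sum.inr (Sum.inr (Sum.inr (Sum.inl i)))))))
    | .Jδ i => Sum.inr (Sum.inr (Sum.inr (Sum.inr (Sum.inr (Sum.inr (Sum.inr (Sum.inr (Sum.inl i))))))))
    | .Jl1 => Sum.inr (Sum.inr (Sum.inr (Sum.inr (Sum.inr (Sum.inr (Sum.inr (Sum.inr (Sum.inr (Sum.inl ())))))))))
    | .Jl2 => Sum.inr (Sum.inr (Sum.inr (Sum.inr (Sum.inr (Sum.inr (Sum.inr (Sum.inr (Sum.inr (Sum.inr (Sum.inl ()))))))))))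
    | .Jpart i => Sum.inr (Sum.inr (Sum.inr (Sum.inr (Sum.inr (Sum.inr (Sum.inr (Sum.inr (Sum.inr (Sum.inr (Sum.inr i))))))))))
  invFun x := match x with
    | Sum.inl i => .JA i
    | Sum.inr (Sum.inl i) => .JB i
    | Sum.inr (Sum.inr (Sum.inl i)) => .Ja i
    | Sum.inr (Sum.inr (Sum.inr (Sum.inl i))) => .Jb i
    | Sum.inr (Sum.inr (Sum.inr (Sum.inr (Sum.inl i)))) => .Jc i
    | Sum.inr (Sum.inr (Sum.inr (Sum.inr (Sum.inr (Sum.inl i))))) => .Jα i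
    | Sum.inr (Sum.inr (Sum.inr (Sum.inr (Sum.inr (Sum.inr (Sum.inl i)))))) => .Jβ i
    | Sum.inr (Sum.inr (Sum.inr (Sum.inr (Sum.inr (Sum.inr (Sum.inr (Sum.inl i))))))) => .Jγ i
    | Sum.inr (Sum.inr (Sum.inr (Sum.inr (Sum.inr (Sum.inr (Sum.inr (Sum.inr (Sum.inl i)))))))) => .Jδ i
    | Sum.inr (Sum.inr (Sum.inr (Sum.inr (Sum.inr (Sum.inr (Sum.inr (Sum.inr (Sum.inr (Sum.inl _))))))))) => .Jl1
    | Sum.inr (Sum.inr (Sum.inr (Sum.inr (Sum.inr (Sum.inr (Sum.inr (Sum.inr (Sum.inr (Sum.inr (Sum.inl _)))))))))) => .Jl2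
    | Sum.inr (Sum.inr (Sum.inr (Sum.inr (Sum.inr (Sum.inr (Sum.inr (Sum.inr (Sum.inr (Sum.inr (Sum.inr i)))))))))) => .Jpart i
  left_inv j := by cases j <;> rfl
  right_inv x := by
    rcases x with i|i|i|i|i|i|i|i|i|⟨⟩|⟨⟩|i <;> rfl

lemma sum_job {z : ℕ} {M : Type*} [AddCommMonoid M] (g : Job z → M) :
    ∑ j : Job z, g j =
      (∑ i : Fin (z+1), g (.JA i)) + (∑ i : Fin (z+1), g (.JB i)) + (∑ i : Fin z, g (.Ja i)) +
      (∑ i : Fin z, g (.Jb i)) + (∑ i : Fin (z+1), g (.Jc i)) + (∑ i : Fin z, g (.Jα i)) +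
      (∑ i : Fin z, g (.Jβ i)) + (∑ i : Fin z, g (.Jγ i)) + (∑ i : Fin z, g (.Jδ i)) +
      g .Jl1 + g .Jl2 + (∑ i : Fin (3*z), g (.Jpart i)) := by
  rw [Fintype.sum_equiv (jEquiv z) g
      (Sum.elim (fun i => g (.JA i)) (Sum.elim (fun i => g (.JB i)) (Sum.elim (fun i => g (.Ja i))
       (Sum.elim (fun i => g (.Jb i)) (Sum.elim (fun i => g (.Jc i)) (Sum.elim (fun i => g (.Jα i))
       (Sum.elim (fun i => g (.Jβ i)) (Sum.elim (fun i => g (.Jγ i)) (Sum.elim (fun i => g (.Jδ i))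
       (Sum.elim (fun _ => g .Jl1) (Sum.elim (fun _ => g .Jl2) (fun i => g (.Jpart i)))))))))))))
      (by intro j; cases j <;> rfl)]
  simp [Fintype.sum_sum_type]
  abel



variable (z D : ℕ) (ι : Fin (3*z) → ℕ) (σ : Job z → ℕ) (ρ : Job z → Finset ℕ)

def fend (j : Job z) : ℕ := σ j + pJob z D ι j

def cA (u : ℕ) : ℕ := (univ.filter fun i : Fin (z+1) => fend z D ι σ (Job.JA i) ≤ u).card
def cB (u : ℕ) : ℕ := (univ.filter fun i : Fin (z+1) => fend z D ι σ (Job.JB i) ≤ u).card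
def cc (u : ℕ) : ℕ := (univ.filter fun i : Fin (z+1) => fend z D ι σ (Job.Jc i) ≤ u).card
def cal (u : ℕ) : ℕ := (univ.filter fun i : Fin z => fend z D ι σ (Job.Jα i) ≤ u).card
def cbe (u : ℕ) : ℕ := (univ.filter fun i : Fin z => fend z D ι σ (Job.Jβ i) ≤ u).card
def cl1 (u : ℕ) : ℕ := if fend z D ι σ Job.Jl1 ≤ u then 1 else 0
def cl2 (u : ℕ) : ℕ := if fend z D ι σ Job.Jl2 ≤ u then 1 else 0
def caT (u : ℕ) : ℕ := (univ.filter fun i : Fin z => fend z D ι σ (Job.Ja i) ≤ u).card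
def cbT (u : ℕ) : ℕ := (univ.filter fun i : Fin z => fend z D ι σ (Job.Jb i) ≤ u).card
def ca (m u : ℕ) : ℕ :=
  (univ.filter fun i : Fin z => m ∈ ρ (Job.Ja i) ∧ fend z D ι σ (Job.Ja i) ≤ u).card
def cb (m u : ℕ) : ℕ :=
  (univ.filter fun i : Fin z => m ∈ ρ (Job.Jb i) ∧ fend z D ι σ (Job.Jb i) ≤ u).card
def cg (m u : ℕ) : ℕ :=
  (univ.filter fun i : Fin z => m ∈ ρ (Job.Jγ i) ∧ fend z D ι σ (Job.Jγ i) ≤ u).card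
def cd (m u : ℕ) : ℕ :=
  (univ.filter fun i : Fin z => m ∈ ρ (Job.Jδ i) ∧ fend z D ι σ (Job.Jδ i) ≤ u).card
def Sc (u : ℕ) : ℕ :=
  ∑ i ∈ (univ.filter fun i : Fin (z+1) => fend z D ι σ (Job.Jc i) ≤ u), (z + i.val)
def Sg (m u : ℕ) : ℕ :=
  ∑ i ∈ (univ.filter fun i : Fin z => m ∈ ρ (Job.Jγ i) ∧ fend z D ι σ (Job.Jγ i) ≤ u),
    (3*z - (i.val+1))
def Sd (m u : ℕ) : ℕ :=
  ∑ i ∈ (univ.filter fun i : Fin z => m ∈ ρ (Job.Jδ i) ∧ fend z D ι σ (Job.Jδ i) ≤ u),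
    (3*z - (i.val+1))
def Pp (m u : ℕ) : ℕ :=
  ∑ i ∈ (univ.filter fun i : Fin (3*z) => m ∈ ρ (Job.Jpart i) ∧ fend z D ι σ (Job.Jpart i) ≤ u),
    ι i

lemma sum_ite_count {n : ℕ} (P : Fin n → Prop) [DecidablePred P] (c : ℕ) :
    ∑ i : Fin n, (if P i then c else 0) = (univ.filter P).card * c := by
  rw [← Finset.sum_filter, Finset.sum_const, smul_eq_mul]

lemma sum_ite_countZ {n : ℕ} (P : Fin n → Prop) [DecidablePred P] (c : ℤ) :
    ∑ i : Fin n, (if P i then c else 0) = ((univ.filter P).card : ℤ) * c := by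
  rw [← Finset.sum_filter, Finset.sum_const, nsmul_eq_mul]

lemma form1 (hm1 : ∀ j : Job z, 1 ∈ ρ j ↔ M1Jobs j) (u : ℕ) :
    ∑ j ∈ univ.filter (fun j : Job z => 1 ∈ ρ j ∧ fend z D ι σ j ≤ u), pJob z D ι j
      = cA z D ι σ u * D^2 + caT z D ι σ u * (D^4 + D^6 + 3*z*D^7)
        + cal z D ι σ u * (D^3 + D^5 + 4*z*D^7 + D^8)
        + cl1 z D ι σ u * (D^3 + z*D^7 + D^8) := by
  have hA : ∀ i : Fin (z+1), 1 ∈ ρ (Job.JA i) := fun i => (hm1 _).mpr trivial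
  have ha : ∀ i : Fin z, 1 ∈ ρ (Job.Ja i) := fun i => (hm1 _).mpr trivial
  have hα : ∀ i : Fin z, 1 ∈ ρ (Job.Jα i) := fun i => (hm1 _).mpr trivial
  have hl1 : 1 ∈ ρ Job.Jl1 := (hm1 _).mpr trivial
  have hB : ∀ i : Fin (z+1), ¬ (1 ∈ ρ (Job.JB i)) := fun i h => (hm1 _).mp h
  have hb : ∀ i : Fin z, ¬ (1 ∈ ρ (Job.Jb i)) := fun i h => (hm1 _).mp h
  have hc : ∀ i : Fin (z+1), ¬ (1 ∈ ρ (Job.Jc i)) := fun i h => (hm1 _).mp h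
  have hβ : ∀ i : Fin z, ¬ (1 ∈ ρ (Job.Jβ i)) := fun i h => (hm1 _).mp h
  have hγ : ∀ i : Fin z, ¬ (1 ∈ ρ (Job.Jγ i)) := fun i h => (hm1 _).mp h
  have hδ : ∀ i : Fin z, ¬ (1 ∈ ρ (Job.Jδ i)) := fun i h => (hm1 _).mp h
  have hl2 : ¬ (1 ∈ ρ Job.Jl2) := fun h => (hm1 _).mp h
  have hpt : ∀ i : Fin (3*z), ¬ (1 ∈ ρ (Job.Jpart i)) := fun i h => (hm1 _).mp h
  rw [Finset.sum_filter,
    sum_job (fun j => if 1 ∈ ρ j ∧ fend z D ι σ j ≤ u then pJob z D ι j else 0)]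
  simp only [hA, ha, hα, hl1, hB, hb, hc, hβ, hγ, hδ, hl2, hpt, true_and, false_and,
    if_false, if_true, ite_false, ite_true, Finset.sum_const_zero, pJob, add_zero, zero_add]
  rw [sum_ite_count, sum_ite_count, sum_ite_count]
  unfold cA caT cal cl1
  by_cases hl : fend z D ι σ Job.Jl1 ≤ u <;> simp [hl] <;> ring

lemma form4 (hm4 : ∀ j : Job z, 4 ∈ ρ j ↔ M4Jobs j) (u : ℕ) :
    ∑ j ∈ univ.filter (fun j : Job z => 4 ∈ ρ j ∧ fend z D ι σ j ≤ u), pJob z D ι j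
      = cB z D ι σ u * D^3 + cbT z D ι σ u * (D^5 + D^6 + 3*z*D^7)
        + cbe z D ι σ u * (D^2 + D^4 + (4*z-1)*D^7 + D^8)
        + cl2 z D ι σ u * (D^2 + 2*z*D^7 + D^8) := by
  have hB : ∀ i : Fin (z+1), 4 ∈ ρ (Job.JB i) := fun i => (hm4 _).mpr trivial
  have hb : ∀ i : Fin z, 4 ∈ ρ (Job.Jb i) := fun i => (hm4 _).mpr trivial
  have hβ : ∀ i : Fin z, 4 ∈ ρ (Job.Jβ i) := fun i => (hm4 _).mpr trivial
  have hl2 : 4 ∈ ρ Job.Jl2 := (hm4 _).mpr trivial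
  have hA : ∀ i : Fin (z+1), ¬ (4 ∈ ρ (Job.JA i)) := fun i h => (hm4 _).mp h
  have ha : ∀ i : Fin z, ¬ (4 ∈ ρ (Job.Ja i)) := fun i h => (hm4 _).mp h
  have hc : ∀ i : Fin (z+1), ¬ (4 ∈ ρ (Job.Jc i)) := fun i h => (hm4 _).mp h
  have hα : ∀ i : Fin z, ¬ (4 ∈ ρ (Job.Jα i)) := fun i h => (hm4 _).mp h
  have hγ : ∀ i : Fin z, ¬ (4 ∈ ρ (Job.Jγ i)) := fun i h => (hm4 _).mp h
  have hδ : ∀ i : Fin z, ¬ (4 ∈ ρ (Job.Jδ i)) := fun i h => (hm4 _).mp h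
  have hl1 : ¬ (4 ∈ ρ Job.Jl1) := fun h => (hm4 _).mp h
  have hpt : ∀ i : Fin (3*z), ¬ (4 ∈ ρ (Job.Jpart i)) := fun i h => (hm4 _).mp h
  rw [Finset.sum_filter,
    sum_job (fun j => if 4 ∈ ρ j ∧ fend z D ι σ j ≤ u then pJob z D ι j else 0)]
  simp only [hA, ha, hα, hl1, hB, hb, hc, hβ, hγ, hδ, hl2, hpt, true_and, false_and,
    if_false, if_true, ite_false, ite_true, Finset.sum_const_zero, pJob, add_zero, zero_add]
  rw [sum_ite_count, sum_ite_count, sum_ite_count]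
  unfold cB cbT cbe cl2
  by_cases hl : fend z D ι σ Job.Jl2 ≤ u <;> simp [hl] <;> ring

lemma form23 (m : ℕ)
    (hmA : ∀ i : Fin (z+1), m ∈ ρ (Job.JA i)) (hmB : ∀ i : Fin (z+1), m ∈ ρ (Job.JB i))
    (hmc : ∀ i : Fin (z+1), m ∈ ρ (Job.Jc i))
    (hmα : ∀ i : Fin z, ¬ (m ∈ ρ (Job.Jα i))) (hmβ : ∀ i : Fin z, ¬ (m ∈ ρ (Job.Jβ i)))
    (hml1 : ¬ (m ∈ ρ Job.Jl1)) (hml2 : ¬ (m ∈ ρ Job.Jl2)) (u : ℕ) :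
    ((∑ j ∈ univ.filter (fun j : Job z => m ∈ ρ j ∧ fend z D ι σ j ≤ u), pJob z D ι j : ℕ) : ℤ)
      = (cA z D ι σ u : ℤ) * (D:ℤ)^2 + (cB z D ι σ u : ℤ) * (D:ℤ)^3
        + (ca z D ι σ ρ m u : ℤ) * ((D:ℤ)^4 + (D:ℤ)^6 + 3*(z:ℤ)*(D:ℤ)^7)
        + (cb z D ι σ ρ m u : ℤ) * ((D:ℤ)^5 + (D:ℤ)^6 + 3*(z:ℤ)*(D:ℤ)^7)
        + ((cc z D ι σ u : ℤ) * (D:ℤ)^8 + (Sc z D ι σ u : ℤ) * (D:ℤ)^7)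
        + ((cg z D ι σ ρ m u : ℤ) * (D:ℤ)^5 + (Sg z D ι σ ρ m u : ℤ) * (D:ℤ)^7
            - (cg z D ι σ ρ m u : ℤ) * (D:ℤ))
        + ((cd z D ι σ ρ m u : ℤ) * (D:ℤ)^4 + (Sd z D ι σ ρ m u : ℤ) * (D:ℤ)^7)
        + (Pp z D ι σ ρ m u : ℤ) := by
  have hAfam : (∑ i : Fin (z+1), if m ∈ ρ (Job.JA i) ∧ fend z D ι σ (Job.JA i) ≤ u
      then ((pJob z D ι (Job.JA i) : ℕ) : ℤ) else 0) = (cA z D ι σ u : ℤ) * (D:ℤ)^2 := by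
    simp only [hmA, true_and, pJob]
    rw [sum_ite_countZ]
    unfold cA
    push_cast
    ring
  have hBfam : (∑ i : Fin (z+1), if m ∈ ρ (Job.JB i) ∧ fend z D ι σ (Job.JB i) ≤ u
      then ((pJob z D ι (Job.JB i) : ℕ) : ℤ) else 0) = (cB z D ι σ u : ℤ) * (D:ℤ)^3 := by
    simp only [hmB, true_and, pJob]
    rw [sum_ite_countZ]
    unfold cB
    push_cast
    ring
  have hafam : (∑ i : Fin z, if m ∈ ρ (Job.Ja i) ∧ fend z D ι σ (Job.Ja i) ≤ u
      then ((pJob z D ι (Job.Ja i) : ℕ) : ℤ) else 0)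
      = (ca z D ι σ ρ m u : ℤ) * ((D:ℤ)^4 + (D:ℤ)^6 + 3*(z:ℤ)*(D:ℤ)^7) := by
    simp only [pJob]
    rw [sum_ite_countZ]
    unfold ca
    push_cast
    ring
  have hbfam : (∑ i : Fin z, if m ∈ ρ (Job.Jb i) ∧ fend z D ι σ (Job.Jb i) ≤ u
      then ((pJob z D ι (Job.Jb i) : ℕ) : ℤ) else 0)
      = (cb z D ι σ ρ m u : ℤ) * ((D:ℤ)^5 + (D:ℤ)^6 + 3*(z:ℤ)*(D:ℤ)^7) := by
    simp only [pJob]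
    rw [sum_ite_countZ]
    unfold cb
    push_cast
    ring
  have hcfam : (∑ i : Fin (z+1), if m ∈ ρ (Job.Jc i) ∧ fend z D ι σ (Job.Jc i) ≤ u
      then ((pJob z D ι (Job.Jc i) : ℕ) : ℤ) else 0)
      = (cc z D ι σ u : ℤ) * (D:ℤ)^8 + (Sc z D ι σ u : ℤ) * (D:ℤ)^7 := by
    simp only [hmc, true_and, pJob]
    rw [← Finset.sum_filter]
    unfold cc Sc
    push_cast
    rw [Finset.sum_add_distrib, Finset.sum_const, ← Finset.sum_mul, nsmul_eq_mul]
    ring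
  have hαfam : (∑ i : Fin z, if m ∈ ρ (Job.Jα i) ∧ fend z D ι σ (Job.Jα i) ≤ u
      then ((pJob z D ι (Job.Jα i) : ℕ) : ℤ) else 0) = 0 := by
    simp [hmα]
  have hβfam : (∑ i : Fin z, if m ∈ ρ (Job.Jβ i) ∧ fend z D ι σ (Job.Jβ i) ≤ u
      then ((pJob z D ι (Job.Jβ i) : ℕ) : ℤ) else 0) = 0 := by
    simp [hmβ]
  have hγfam : (∑ i : Fin z, if m ∈ ρ (Job.Jγ i) ∧ fend z D ι σ (Job.Jγ i) ≤ u
      then ((pJob z D ι (Job.Jγ i) : ℕ) : ℤ) else 0)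
      = (cg z D ι σ ρ m u : ℤ) * (D:ℤ)^5 + (Sg z D ι σ ρ m u : ℤ) * (D:ℤ)^7
          - (cg z D ι σ ρ m u : ℤ) * (D:ℤ) := by
    rw [← Finset.sum_filter]
    unfold cg Sg
    have hpt : ∀ i ∈ (univ.filter fun i : Fin z =>
        m ∈ ρ (Job.Jγ i) ∧ fend z D ι σ (Job.Jγ i) ≤ u),
        ((pJob z D ι (Job.Jγ i) : ℕ) : ℤ)
          = ((3*z - (i.val+1) : ℕ) : ℤ) * (D:ℤ)^7 + (D:ℤ)^5 - (D:ℤ) := by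
      intro i _
      have h2 : D ≤ D^5 + (3*z-(i.val+1))*D^7 :=
        le_trans (Nat.le_self_pow (by norm_num) D) (Nat.le_add_right _ _)
      simp only [pJob]
      rw [Nat.cast_sub h2]
      push_cast
      ring
    rw [Finset.sum_congr rfl hpt, Finset.sum_sub_distrib, Finset.sum_add_distrib,
      Finset.sum_const, Finset.sum_const, ← Finset.sum_mul, Nat.cast_sum, nsmul_eq_mul,
      nsmul_eq_mul]
    ring
  have hδfam : (∑ i : Fin z, if m ∈ ρ (Job.Jδ i) ∧ fend z D ι σ (Job.Jδ i) ≤ u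
      then ((pJob z D ι (Job.Jδ i) : ℕ) : ℤ) else 0)
      = (cd z D ι σ ρ m u : ℤ) * (D:ℤ)^4 + (Sd z D ι σ ρ m u : ℤ) * (D:ℤ)^7 := by
    rw [← Finset.sum_filter]
    unfold cd Sd
    have hpt : ∀ i ∈ (univ.filter fun i : Fin z =>
        m ∈ ρ (Job.Jδ i) ∧ fend z D ι σ (Job.Jδ i) ≤ u),
        ((pJob z D ι (Job.Jδ i) : ℕ) : ℤ)
          = ((3*z - (i.val+1) : ℕ) : ℤ) * (D:ℤ)^7 + (D:ℤ)^4 := by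
      intro i _
      simp only [pJob]
      push_cast
      ring
    rw [Finset.sum_congr rfl hpt, Finset.sum_add_distrib, Finset.sum_const,
      ← Finset.sum_mul, Nat.cast_sum, nsmul_eq_mul]
    ring
  have hl1fam : (if m ∈ ρ Job.Jl1 ∧ fend z D ι σ Job.Jl1 ≤ u
      then ((pJob z D ι Job.Jl1 : ℕ) : ℤ) else 0) = 0 := by simp [hml1]
  have hl2fam : (if m ∈ ρ Job.Jl2 ∧ fend z D ι σ Job.Jl2 ≤ u
      then ((pJob z D ι Job.Jl2 : ℕ) : ℤ) else 0) = 0 := by simp [hml2]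
  have hptfam : (∑ i : Fin (3*z), if m ∈ ρ (Job.Jpart i) ∧ fend z D ι σ (Job.Jpart i) ≤ u
      then ((pJob z D ι (Job.Jpart i) : ℕ) : ℤ) else 0) = (Pp z D ι σ ρ m u : ℤ) := by
    rw [← Finset.sum_filter]
    unfold Pp
    rw [Nat.cast_sum]
    apply Finset.sum_congr rfl
    intro i _
    simp [pJob]
  rw [Nat.cast_sum, Finset.sum_filter,
    sum_job (fun j => if m ∈ ρ j ∧ fend z D ι σ j ≤ u then ((pJob z D ι j : ℕ) : ℤ) else 0)]
  rw [hAfam, hBfam, hafam, hbfam, hcfam, hαfam, hβfam, hγfam, hδfam, hl1fam, hl2fam, hptfam]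
  ring

lemma load1 (hm1 : ∀ j : Job z, 1 ∈ ρ j ↔ M1Jobs j) :
    ∑ j ∈ univ.filter (fun j : Job z => 1 ∈ ρ j), pJob z D ι j = Wval z D := by
  have hA : ∀ i : Fin (z+1), 1 ∈ ρ (Job.JA i) := fun i => (hm1 _).mpr trivial
  have ha : ∀ i : Fin z, 1 ∈ ρ (Job.Ja i) := fun i => (hm1 _).mpr trivial
  have hα : ∀ i : Fin z, 1 ∈ ρ (Job.Jα i) := fun i => (hm1 _).mpr trivial
  have hl1 : 1 ∈ ρ Job.Jl1 := (hm1 _).mpr trivial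
  have hB : ∀ i : Fin (z+1), ¬ (1 ∈ ρ (Job.JB i)) := fun i h => (hm1 _).mp h
  have hb : ∀ i : Fin z, ¬ (1 ∈ ρ (Job.Jb i)) := fun i h => (hm1 _).mp h
  have hc : ∀ i : Fin (z+1), ¬ (1 ∈ ρ (Job.Jc i)) := fun i h => (hm1 _).mp h
  have hβ : ∀ i : Fin z, ¬ (1 ∈ ρ (Job.Jβ i)) := fun i h => (hm1 _).mp h
  have hγ : ∀ i : Fin z, ¬ (1 ∈ ρ (Job.Jγ i)) := fun i h => (hm1 _).mp h
  have hδ : ∀ i : Fin z, ¬ (1 ∈ ρ (Job.Jδ i)) := fun i h => (hm1 _).mp h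
  have hl2 : ¬ (1 ∈ ρ Job.Jl2) := fun h => (hm1 _).mp h
  have hpt : ∀ i : Fin (3*z), ¬ (1 ∈ ρ (Job.Jpart i)) := fun i h => (hm1 _).mp h
  rw [Finset.sum_filter, sum_job (fun j => if 1 ∈ ρ j then pJob z D ι j else 0)]
  simp only [hA, ha, hα, hl1, hB, hb, hc, hβ, hγ, hδ, hl2, hpt, if_true, if_false,
    ite_true, ite_false, pJob, Finset.sum_const, Finset.card_univ, Fintype.card_fin,
    smul_eq_mul, Finset.sum_const_zero, add_zero, zero_add]
  unfold Wval
  ring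

lemma load4 (hz : 0 < z) (hm4 : ∀ j : Job z, 4 ∈ ρ j ↔ M4Jobs j) :
    ∑ j ∈ univ.filter (fun j : Job z => 4 ∈ ρ j), pJob z D ι j = Wval z D := by
  have hB : ∀ i : Fin (z+1), 4 ∈ ρ (Job.JB i) := fun i => (hm4 _).mpr trivial
  have hb : ∀ i : Fin z, 4 ∈ ρ (Job.Jb i) := fun i => (hm4 _).mpr trivial
  have hβ : ∀ i : Fin z, 4 ∈ ρ (Job.Jβ i) := fun i => (hm4 _).mpr trivial
  have hl2 : 4 ∈ ρ Job.Jl2 := (hm4 _).mpr trivial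
  have hA : ∀ i : Fin (z+1), ¬ (4 ∈ ρ (Job.JA i)) := fun i h => (hm4 _).mp h
  have ha : ∀ i : Fin z, ¬ (4 ∈ ρ (Job.Ja i)) := fun i h => (hm4 _).mp h
  have hc : ∀ i : Fin (z+1), ¬ (4 ∈ ρ (Job.Jc i)) := fun i h => (hm4 _).mp h
  have hα : ∀ i : Fin z, ¬ (4 ∈ ρ (Job.Jα i)) := fun i h => (hm4 _).mp h
  have hγ : ∀ i : Fin z, ¬ (4 ∈ ρ (Job.Jγ i)) := fun i h => (hm4 _).mp h
  have hδ : ∀ i : Fin z, ¬ (4 ∈ ρ (Job.Jδ i)) := fun i h => (hm4 _).mp h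
  have hl1 : ¬ (4 ∈ ρ Job.Jl1) := fun h => (hm4 _).mp h
  have hpt : ∀ i : Fin (3*z), ¬ (4 ∈ ρ (Job.Jpart i)) := fun i h => (hm4 _).mp h
  rw [Finset.sum_filter, sum_job (fun j => if 4 ∈ ρ j then pJob z D ι j else 0)]
  simp only [hA, ha, hα, hl1, hB, hb, hc, hβ, hγ, hδ, hl2, hpt, if_true, if_false,
    ite_true, ite_false, pJob, Finset.sum_const, Finset.card_univ, Fintype.card_fin,
    smul_eq_mul, Finset.sum_const_zero, add_zero, zero_add]
  unfold Wval
  have h4z : 1 ≤ 4*z := by omega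
  zify [h4z]
  ring

lemma load23 (hz : 0 < z) (hsum : ∑ i, ι i = z * D)
    (h2A : ∀ i : Fin (z+1), 2 ∈ ρ (Job.JA i)) (h3A : ∀ i : Fin (z+1), 3 ∈ ρ (Job.JA i))
    (h2B : ∀ i : Fin (z+1), 2 ∈ ρ (Job.JB i)) (h3B : ∀ i : Fin (z+1), 3 ∈ ρ (Job.JB i))
    (h2c : ∀ i : Fin (z+1), 2 ∈ ρ (Job.Jc i)) (h3c : ∀ i : Fin (z+1), 3 ∈ ρ (Job.Jc i))
    (h2α : ∀ i : Fin z, ¬ (2 ∈ ρ (Job.Jα i))) (h3α : ∀ i : Fin z, ¬ (3 ∈ ρ (Job.Jα i)))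
    (h2β : ∀ i : Fin z, ¬ (2 ∈ ρ (Job.Jβ i))) (h3β : ∀ i : Fin z, ¬ (3 ∈ ρ (Job.Jβ i)))
    (h2l1 : ¬ (2 ∈ ρ Job.Jl1)) (h3l1 : ¬ (3 ∈ ρ Job.Jl1))
    (h2l2 : ¬ (2 ∈ ρ Job.Jl2)) (h3l2 : ¬ (3 ∈ ρ Job.Jl2))
    (hone : ∀ j : Job z, OneM23 j → (2 ∈ ρ j ↔ ¬ (3 ∈ ρ j))) :
    (∑ j ∈ univ.filter (fun j : Job z => 2 ∈ ρ j), pJob z D ι j)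
      + (∑ j ∈ univ.filter (fun j : Job z => 3 ∈ ρ j), pJob z D ι j) = 2 * Wval z D := by
  have honesum : ∀ j : Job z, OneM23 j →
      ((if 2 ∈ ρ j then ((pJob z D ι j : ℕ) : ℤ) else 0)
        + (if 3 ∈ ρ j then ((pJob z D ι j : ℕ) : ℤ) else 0)) = ((pJob z D ι j : ℕ) : ℤ) := by
    intro j hj
    by_cases h2 : 2 ∈ ρ j
    · have h3 : ¬ (3 ∈ ρ j) := (hone j hj).mp h2
      simp [h2, h3]
    · have h3 : 3 ∈ ρ j := by
        by_contra h3
        exact h2 ((hone j hj).mpr h3)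
      simp [h2, h3]
  have hG1 : (∑ i : Fin (z+1), ((i.val : ℕ) : ℤ)) = (∑ i : Fin z, ((i.val : ℕ) : ℤ)) + z := by
    rw [Fin.sum_univ_castSucc]
    simp
  have hSγ : (∑ i : Fin z, ((3*z - (i.val+1) : ℕ) : ℤ))
      = 3*(z:ℤ)*z - (∑ i : Fin z, ((i.val : ℕ) : ℤ)) - z := by
    have hpt : ∀ i ∈ (univ : Finset (Fin z)),
        ((3*z - (i.val+1) : ℕ) : ℤ) = 3*(z:ℤ) - ((i.val : ℕ) : ℤ) - 1 := by
      intro i _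
      have h1 : i.val + 1 ≤ 3*z := by have := i.isLt; omega
      rw [Nat.cast_sub h1]
      push_cast
      ring
    rw [Finset.sum_congr rfl hpt, Finset.sum_sub_distrib, Finset.sum_sub_distrib,
      Finset.sum_const, Finset.sum_const, Finset.card_univ, Fintype.card_fin]
    push_cast
    ring
  rw [← Nat.cast_inj (R := ℤ)]
  rw [Nat.cast_add, Nat.cast_sum, Nat.cast_sum]
  rw [Finset.sum_filter, Finset.sum_filter, ← Finset.sum_add_distrib,
    sum_job (fun j => (if 2 ∈ ρ j then ((pJob z D ι j : ℕ) : ℤ) else 0)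
      + (if 3 ∈ ρ j then ((pJob z D ι j : ℕ) : ℤ) else 0))]
  have hAf : (∑ i : Fin (z+1), ((if 2 ∈ ρ (Job.JA i) then ((pJob z D ι (Job.JA i) : ℕ) : ℤ) else 0)
      + (if 3 ∈ ρ (Job.JA i) then ((pJob z D ι (Job.JA i) : ℕ) : ℤ) else 0)))
      = ((z:ℤ)+1) * (2*(D:ℤ)^2) := by
    simp only [h2A, h3A, if_true, ite_true, pJob]
    rw [Finset.sum_const, Finset.card_univ, Fintype.card_fin, nsmul_eq_mul]
    push_cast
    ring
  have hBf : (∑ i : Fin (z+1), ((if 2 ∈ ρ (Job.JB i) then ((pJob z D ι (Job.JB i) : ℕ) : ℤ) else 0)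
      + (if 3 ∈ ρ (Job.JB i) then ((pJob z D ι (Job.JB i) : ℕ) : ℤ) else 0)))
      = ((z:ℤ)+1) * (2*(D:ℤ)^3) := by
    simp only [h2B, h3B, if_true, ite_true, pJob]
    rw [Finset.sum_const, Finset.card_univ, Fintype.card_fin, nsmul_eq_mul]
    push_cast
    ring
  have hcf : (∑ i : Fin (z+1), ((if 2 ∈ ρ (Job.Jc i) then ((pJob z D ι (Job.Jc i) : ℕ) : ℤ) else 0)
      + (if 3 ∈ ρ (Job.Jc i) then ((pJob z D ι (Job.Jc i) : ℕ) : ℤ) else 0)))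
      = 2*(((z:ℤ)*(z+1) + ((∑ i : Fin z, ((i.val : ℕ) : ℤ)) + z)) * (D:ℤ)^7
          + ((z:ℤ)+1)*(D:ℤ)^8) := by
    simp only [h2c, h3c, if_true, ite_true, pJob]
    have hpt : ∀ i ∈ (univ : Finset (Fin (z+1))),
        ((((z + i.val)*D^7 + D^8 : ℕ) : ℤ) + (((z + i.val)*D^7 + D^8 : ℕ) : ℤ))
          = 2*((D:ℤ)^7) * ((i.val : ℕ) : ℤ) + (2*(z:ℤ)*(D:ℤ)^7 + 2*(D:ℤ)^8) := by
      intro i _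
      push_cast
      ring
    rw [Finset.sum_congr rfl hpt, Finset.sum_add_distrib, Finset.sum_const, Finset.card_univ,
      Fintype.card_fin, ← Finset.mul_sum, hG1, nsmul_eq_mul]
    push_cast
    ring
  have haf : (∑ i : Fin z, ((if 2 ∈ ρ (Job.Ja i) then ((pJob z D ι (Job.Ja i) : ℕ) : ℤ) else 0)
      + (if 3 ∈ ρ (Job.Ja i) then ((pJob z D ι (Job.Ja i) : ℕ) : ℤ) else 0)))
      = (z:ℤ) * ((D:ℤ)^4 + (D:ℤ)^6 + 3*(z:ℤ)*(D:ℤ)^7) := by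
    rw [Finset.sum_congr rfl (fun i _ => honesum (Job.Ja i) trivial)]
    simp only [pJob]
    rw [Finset.sum_const, Finset.card_univ, Fintype.card_fin, nsmul_eq_mul]
    push_cast
    ring
  have hbf : (∑ i : Fin z, ((if 2 ∈ ρ (Job.Jb i) then ((pJob z D ι (Job.Jb i) : ℕ) : ℤ) else 0)
      + (if 3 ∈ ρ (Job.Jb i) then ((pJob z D ι (Job.Jb i) : ℕ) : ℤ) else 0)))
      = (z:ℤ) * ((D:ℤ)^5 + (D:ℤ)^6 + 3*(z:ℤ)*(D:ℤ)^7) := by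
    rw [Finset.sum_congr rfl (fun i _ => honesum (Job.Jb i) trivial)]
    simp only [pJob]
    rw [Finset.sum_const, Finset.card_univ, Fintype.card_fin, nsmul_eq_mul]
    push_cast
    ring
  have hαf : (∑ i : Fin z, ((if 2 ∈ ρ (Job.Jα i) then ((pJob z D ι (Job.Jα i) : ℕ) : ℤ) else 0)
      + (if 3 ∈ ρ (Job.Jα i) then ((pJob z D ι (Job.Jα i) : ℕ) : ℤ) else 0))) = 0 := by
    simp [h2α, h3α]
  have hβf : (∑ i : Fin z, ((if 2 ∈ ρ (Job.Jβ i) then ((pJob z D ι (Job.Jβ i) : ℕ) : ℤ) else 0)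
      + (if 3 ∈ ρ (Job.Jβ i) then ((pJob z D ι (Job.Jβ i) : ℕ) : ℤ) else 0))) = 0 := by
    simp [h2β, h3β]
  have hγf : (∑ i : Fin z, ((if 2 ∈ ρ (Job.Jγ i) then ((pJob z D ι (Job.Jγ i) : ℕ) : ℤ) else 0)
      + (if 3 ∈ ρ (Job.Jγ i) then ((pJob z D ι (Job.Jγ i) : ℕ) : ℤ) else 0)))
      = (z:ℤ)*(D:ℤ)^5 + (3*(z:ℤ)*z - (∑ i : Fin z, ((i.val : ℕ) : ℤ)) - z)*(D:ℤ)^7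
          - (z:ℤ)*(D:ℤ) := by
    rw [Finset.sum_congr rfl (fun i _ => honesum (Job.Jγ i) trivial)]
    have hpt : ∀ i ∈ (univ : Finset (Fin z)),
        ((pJob z D ι (Job.Jγ i) : ℕ) : ℤ)
          = ((3*z - (i.val+1) : ℕ) : ℤ) * (D:ℤ)^7 + ((D:ℤ)^5 - (D:ℤ)) := by
      intro i _
      have h2 : D ≤ D^5 + (3*z-(i.val+1))*D^7 :=
        le_trans (Nat.le_self_pow (by norm_num) D) (Nat.le_add_right _ _)
      simp only [pJob]
      rw [Nat.cast_sub h2]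
      push_cast
      ring
    rw [Finset.sum_congr rfl hpt, Finset.sum_add_distrib, Finset.sum_const, Finset.card_univ,
      Fintype.card_fin, ← Finset.sum_mul, hSγ, nsmul_eq_mul]
    push_cast
    ring
  have hδf : (∑ i : Fin z, ((if 2 ∈ ρ (Job.Jδ i) then ((pJob z D ι (Job.Jδ i) : ℕ) : ℤ) else 0)
      + (if 3 ∈ ρ (Job.Jδ i) then ((pJob z D ι (Job.Jδ i) : ℕ) : ℤ) else 0)))
      = (z:ℤ)*(D:ℤ)^4 + (3*(z:ℤ)*z - (∑ i : Fin z, ((i.val : ℕ) : ℤ)) - z)*(D:ℤ)^7 := by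
    rw [Finset.sum_congr rfl (fun i _ => honesum (Job.Jδ i) trivial)]
    have hpt : ∀ i ∈ (univ : Finset (Fin z)),
        ((pJob z D ι (Job.Jδ i) : ℕ) : ℤ)
          = ((3*z - (i.val+1) : ℕ) : ℤ) * (D:ℤ)^7 + (D:ℤ)^4 := by
      intro i _
      simp only [pJob]
      push_cast
      ring
    rw [Finset.sum_congr rfl hpt, Finset.sum_add_distrib, Finset.sum_const, Finset.card_univ,
      Fintype.card_fin, ← Finset.sum_mul, hSγ, nsmul_eq_mul]
    push_cast
    ring
  have hl1f : ((if 2 ∈ ρ Job.Jl1 then ((pJob z D ι Job.Jl1 : ℕ) : ℤ) else 0)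
      + (if 3 ∈ ρ Job.Jl1 then ((pJob z D ι Job.Jl1 : ℕ) : ℤ) else 0)) = 0 := by
    simp [h2l1, h3l1]
  have hl2f : ((if 2 ∈ ρ Job.Jl2 then ((pJob z D ι Job.Jl2 : ℕ) : ℤ) else 0)
      + (if 3 ∈ ρ Job.Jl2 then ((pJob z D ι Job.Jl2 : ℕ) : ℤ) else 0)) = 0 := by
    simp [h2l2, h3l2]
  have hpf : (∑ i : Fin (3*z), ((if 2 ∈ ρ (Job.Jpart i) then ((pJob z D ι (Job.Jpart i) : ℕ) : ℤ) else 0)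
      + (if 3 ∈ ρ (Job.Jpart i) then ((pJob z D ι (Job.Jpart i) : ℕ) : ℤ) else 0)))
      = (z:ℤ) * (D:ℤ) := by
    rw [Finset.sum_congr rfl (fun i _ => honesum (Job.Jpart i) trivial)]
    have hpt : ∀ i ∈ (univ : Finset (Fin (3*z))),
        ((pJob z D ι (Job.Jpart i) : ℕ) : ℤ) = ((ι i : ℕ) : ℤ) := by
      intro i _
      simp [pJob]
    rw [Finset.sum_congr rfl hpt, ← Nat.cast_sum, hsum]
    push_cast
    ring
  rw [hAf, hBf, haf, hbf, hcf, hαf, hβf, hγf, hδf, hl1f, hl2f, hpf]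
  unfold Wval
  push_cast
  ring

set_option maxHeartbeats 1000000 in
lemma extract23 (z D : ℕ) (hz : 0 < z) (hDpos : 0 < D) (hzD : 28*(z*z) + 4*z < D)
    (t cAv cBv ccv Scv ca2 cb2 cg2 cd2 Sg2 Sd2 Pp2 ca3 cb3 cg3 cd3 Sg3 Sd3 Pp3 : ℕ)
    (hSc : Scv ≤ (z+1)*(2*z))
    (hca2 : ca2 ≤ z) (hcb2 : cb2 ≤ z) (hcg2 : cg2 ≤ z) (hcd2 : cd2 ≤ z)
    (hSg2 : Sg2 ≤ z*(3*z)) (hSd2 : Sd2 ≤ z*(3*z)) (hPp2 : Pp2 ≤ z*D)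
    (hca3 : ca3 ≤ z) (hcb3 : cb3 ≤ z) (hcg3 : cg3 ≤ z) (hcd3 : cd3 ≤ z)
    (hSg3 : Sg3 ≤ z*(3*z)) (hSd3 : Sd3 ≤ z*(3*z)) (hPp3 : Pp3 ≤ z*D)
    (hF2 : ((t:ℕ) : ℤ)
      = (cAv : ℤ) * (D:ℤ)^2 + (cBv : ℤ) * (D:ℤ)^3
        + (ca2 : ℤ) * ((D:ℤ)^4 + (D:ℤ)^6 + 3*(z:ℤ)*(D:ℤ)^7)
        + (cb2 : ℤ) * ((D:ℤ)^5 + (D:ℤ)^6 + 3*(z:ℤ)*(D:ℤ)^7)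
        + ((ccv : ℤ) * (D:ℤ)^8 + (Scv : ℤ) * (D:ℤ)^7)
        + ((cg2 : ℤ) * (D:ℤ)^5 + (Sg2 : ℤ) * (D:ℤ)^7 - (cg2 : ℤ) * (D:ℤ))
        + ((cd2 : ℤ) * (D:ℤ)^4 + (Sd2 : ℤ) * (D:ℤ)^7) + (Pp2 : ℤ))
    (hF3 : ((t:ℕ) : ℤ)
      = (cAv : ℤ) * (D:ℤ)^2 + (cBv : ℤ) * (D:ℤ)^3
        + (ca3 : ℤ) * ((D:ℤ)^4 + (D:ℤ)^6 + 3*(z:ℤ)*(D:ℤ)^7)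
        + (cb3 : ℤ) * ((D:ℤ)^5 + (D:ℤ)^6 + 3*(z:ℤ)*(D:ℤ)^7)
        + ((ccv : ℤ) * (D:ℤ)^8 + (Scv : ℤ) * (D:ℤ)^7)
        + ((cg3 : ℤ) * (D:ℤ)^5 + (Sg3 : ℤ) * (D:ℤ)^7 - (cg3 : ℤ) * (D:ℤ))
        + ((cd3 : ℤ) * (D:ℤ)^4 + (Sd3 : ℤ) * (D:ℤ)^7) + (Pp3 : ℤ)) :
    ca2 + cb2 = ca3 + cb3 := by
  have habs : ∀ (a b n : ℕ), a < n → b < n → |(a:ℤ) - (b:ℤ)| < (n:ℤ) := by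
    intro a b n ha hb
    rw [abs_sub_lt_iff]
    constructor <;> push_cast <;> omega
  have habs2 : ∀ (a b n : ℕ), a < n*n → b < n*n → |(a:ℤ) - (b:ℤ)| < (n:ℤ)^2 := by
    intro a b n ha hb
    have hx : ((a:ℕ):ℤ) < (n:ℤ)*(n:ℤ) := by exact_mod_cast ha
    have hy : ((b:ℕ):ℤ) < (n:ℤ)*(n:ℤ) := by exact_mod_cast hb
    have h0a : (0:ℤ) ≤ (a:ℤ) := Int.natCast_nonneg a
    have h0b : (0:ℤ) ≤ (b:ℤ) := Int.natCast_nonneg b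
    rw [abs_sub_lt_iff, sq]
    constructor <;> linarith
  have habs0 : |(0:ℤ)| < (D:ℤ) := by
    simp only [abs_zero]
    exact_mod_cast hDpos
  have hzltD : z < D := by clear hF2 hF3; nlinarith
  have hcoe : 2*z + 2 < D := by
    clear hF2 hF3
    nlinarith [Nat.mul_le_mul (le_refl z) hz]
  have hb7a : Sg2 + Sd2 + 3*z*(ca2+cb2) < D := by
    clear hF2 hF3
    nlinarith [Nat.mul_le_mul (le_refl (3*z)) (Nat.add_le_add hca2 hcb2)]
  have hb7b : Sg3 + Sd3 + 3*z*(ca3+cb3) < D := by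
    clear hF2 hF3
    nlinarith [Nat.mul_le_mul (le_refl (3*z)) (Nat.add_le_add hca3 hcb3)]
  have hblowa : Pp2 + cg3 * D < D*D := by
    clear hF2 hF3
    have h1 : cg3 * D ≤ z * D := Nat.mul_le_mul hcg3 (le_refl D)
    nlinarith
  have hblowb : Pp3 + cg2 * D < D*D := by
    clear hF2 hF3
    have h1 : cg2 * D ≤ z * D := Nat.mul_le_mul hcg2 (le_refl D)
    nlinarith
  have h6 := digit6 (D := (D:ℤ)) (by exact_mod_cast hDpos)
    (c8 := 0)
    (c7 := ((Sg2 + Sd2 + 3*z*(ca2+cb2) : ℕ) : ℤ) - ((Sg3 + Sd3 + 3*z*(ca3+cb3) : ℕ) : ℤ))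
    (c6 := ((ca2 + cb2 : ℕ) : ℤ) - ((ca3 + cb3 : ℕ) : ℤ))
    (c5 := ((cb2 + cg2 : ℕ) : ℤ) - ((cb3 + cg3 : ℕ) : ℤ))
    (c4 := ((ca2 + cd2 : ℕ) : ℤ) - ((ca3 + cd3 : ℕ) : ℤ))
    (c3 := 0) (c2 := 0)
    (clow := ((Pp2 + cg3 * D : ℕ) : ℤ) - ((Pp3 + cg2 * D : ℕ) : ℤ))
    habs0
    (habs _ _ _ hb7a hb7b)
    (habs _ _ _ (by omega) (by omega))
    (habs _ _ _ (by omega) (by omega))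
    (habs _ _ _ (by omega) (by omega))
    habs0 habs0
    (habs2 _ _ _ hblowa hblowb)
    (by push_cast; linear_combination hF3 - hF2)
  omega

set_option maxHeartbeats 1000000 in
lemma extractA (z D : ℕ) (hz : 0 < z) (hDpos : 0 < D) (hzD : 28*(z*z) + 4*z < D)
    (u cAv cBv ccv Scv calv cl1v caTv cav cbv cgv cdv Sgv Sdv Ppv : ℕ)
    (hcB : cBv ≤ z+1) (hcc : ccv ≤ z+1) (hSc : Scv ≤ (z+1)*(2*z))
    (hcal : calv ≤ z) (hcl1 : cl1v ≤ 1) (hcaT : caTv ≤ z)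
    (hca : cav ≤ z) (hcb : cbv ≤ z) (hcg : cgv ≤ z) (hcd : cdv ≤ z)
    (hSg : Sgv ≤ z*(3*z)) (hSd : Sdv ≤ z*(3*z)) (hPp : Ppv ≤ z*D)
    (hF1 : ((u:ℕ) : ℤ)
      = (cAv : ℤ) * (D:ℤ)^2 + (caTv : ℤ) * ((D:ℤ)^4 + (D:ℤ)^6 + 3*(z:ℤ)*(D:ℤ)^7)
        + (calv : ℤ) * ((D:ℤ)^3 + (D:ℤ)^5 + 4*(z:ℤ)*(D:ℤ)^7 + (D:ℤ)^8)
        + (cl1v : ℤ) * ((D:ℤ)^3 + (z:ℤ)*(D:ℤ)^7 + (D:ℤ)^8))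
    (hFs : ((u:ℕ) : ℤ)
      = (cAv : ℤ) * (D:ℤ)^2 + (cBv : ℤ) * (D:ℤ)^3
        + (cav : ℤ) * ((D:ℤ)^4 + (D:ℤ)^6 + 3*(z:ℤ)*(D:ℤ)^7)
        + (cbv : ℤ) * ((D:ℤ)^5 + (D:ℤ)^6 + 3*(z:ℤ)*(D:ℤ)^7)
        + ((ccv : ℤ) * (D:ℤ)^8 + (Scv : ℤ) * (D:ℤ)^7)
        + ((cgv : ℤ) * (D:ℤ)^5 + (Sgv : ℤ) * (D:ℤ)^7 - (cgv : ℤ) * (D:ℤ))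
        + ((cdv : ℤ) * (D:ℤ)^4 + (Sdv : ℤ) * (D:ℤ)^7) + (Ppv : ℤ)) :
    caTv = cav + cbv := by
  have habs : ∀ (a b n : ℕ), a < n → b < n → |(a:ℤ) - (b:ℤ)| < (n:ℤ) := by
    intro a b n ha hb
    rw [abs_sub_lt_iff]
    constructor <;> push_cast <;> omega
  have habs2 : ∀ (a b n : ℕ), a < n*n → b < n*n → |(a:ℤ) - (b:ℤ)| < (n:ℤ)^2 := by
    intro a b n ha hb
    have hx : ((a:ℕ):ℤ) < (n:ℤ)*(n:ℤ) := by exact_mod_cast ha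
    have hy : ((b:ℕ):ℤ) < (n:ℤ)*(n:ℤ) := by exact_mod_cast hb
    have h0a : (0:ℤ) ≤ (a:ℤ) := Int.natCast_nonneg a
    have h0b : (0:ℤ) ≤ (b:ℤ) := Int.natCast_nonneg b
    rw [abs_sub_lt_iff, sq]
    constructor <;> linarith
  have habs0 : |(0:ℤ)| < (D:ℤ) := by
    simp only [abs_zero]
    exact_mod_cast hDpos
  have hzltD : z < D := by clear hF1 hFs; nlinarith
  have hcoe : 2*z + 2 < D := by
    clear hF1 hFs
    nlinarith [Nat.mul_le_mul (le_refl z) hz]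
  have hb7a : 3*z*caTv + 4*z*calv + z*cl1v < D := by
    clear hF1 hFs
    nlinarith [Nat.mul_le_mul (le_refl (3*z)) hcaT, Nat.mul_le_mul (le_refl (4*z)) hcal,
      Nat.mul_le_mul (le_refl z) hcl1]
  have hb7b : Scv + Sgv + Sdv + 3*z*(cav+cbv) < D := by
    clear hF1 hFs
    nlinarith [Nat.mul_le_mul (le_refl (3*z)) (Nat.add_le_add hca hcb)]
  have hblowa : cgv * D < D*D := by
    clear hF1 hFs
    have h1 : cgv * D ≤ z * D := Nat.mul_le_mul hcg (le_refl D)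
    nlinarith
  have hblowb : Ppv < D*D := by clear hF1 hFs; nlinarith
  have h6 := digit6 (D := (D:ℤ)) (by exact_mod_cast hDpos)
    (c8 := ((calv + cl1v : ℕ) : ℤ) - ((ccv : ℕ) : ℤ))
    (c7 := ((3*z*caTv + 4*z*calv + z*cl1v : ℕ) : ℤ)
      - ((Scv + Sgv + Sdv + 3*z*(cav+cbv) : ℕ) : ℤ))
    (c6 := ((caTv : ℕ) : ℤ) - ((cav + cbv : ℕ) : ℤ))
    (c5 := ((calv : ℕ) : ℤ) - ((cbv + cgv : ℕ) : ℤ))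
    (c4 := ((caTv : ℕ) : ℤ) - ((cav + cdv : ℕ) : ℤ))
    (c3 := ((calv + cl1v : ℕ) : ℤ) - ((cBv : ℕ) : ℤ))
    (c2 := 0)
    (clow := ((cgv * D : ℕ) : ℤ) - ((Ppv : ℕ) : ℤ))
    (habs _ _ _ (by omega) (by omega))
    (habs _ _ _ hb7a hb7b)
    (habs _ _ _ (by omega) (by omega))
    (habs _ _ _ (by omega) (by omega))
    (habs _ _ _ (by omega) (by omega))
    (habs _ _ _ (by omega) (by omega))
    habs0
    (habs2 _ _ _ hblowa hblowb)
    (by push_cast; linear_combination hFs - hF1)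
  omega

set_option maxHeartbeats 1000000 in
lemma extractB (z D : ℕ) (hz : 0 < z) (hDpos : 0 < D) (hzD : 28*(z*z) + 4*z < D)
    (u cAv cBv ccv Scv cbev cl2v cbTv cav cbv cgv cdv Sgv Sdv Ppv : ℕ)
    (hcA : cAv ≤ z+1) (hcc : ccv ≤ z+1) (hSc : Scv ≤ (z+1)*(2*z))
    (hcbe : cbev ≤ z) (hcl2 : cl2v ≤ 1) (hcbT : cbTv ≤ z)
    (hca : cav ≤ z) (hcb : cbv ≤ z) (hcg : cgv ≤ z) (hcd : cdv ≤ z)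
    (hSg : Sgv ≤ z*(3*z)) (hSd : Sdv ≤ z*(3*z)) (hPp : Ppv ≤ z*D)
    (hF4 : ((u:ℕ) : ℤ)
      = (cBv : ℤ) * (D:ℤ)^3 + (cbTv : ℤ) * ((D:ℤ)^5 + (D:ℤ)^6 + 3*(z:ℤ)*(D:ℤ)^7)
        + (cbev : ℤ) * ((D:ℤ)^2 + (D:ℤ)^4 + (4*(z:ℤ)-1)*(D:ℤ)^7 + (D:ℤ)^8)
        + (cl2v : ℤ) * ((D:ℤ)^2 + 2*(z:ℤ)*(D:ℤ)^7 + (D:ℤ)^8))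
    (hFs : ((u:ℕ) : ℤ)
      = (cAv : ℤ) * (D:ℤ)^2 + (cBv : ℤ) * (D:ℤ)^3
        + (cav : ℤ) * ((D:ℤ)^4 + (D:ℤ)^6 + 3*(z:ℤ)*(D:ℤ)^7)
        + (cbv : ℤ) * ((D:ℤ)^5 + (D:ℤ)^6 + 3*(z:ℤ)*(D:ℤ)^7)
        + ((ccv : ℤ) * (D:ℤ)^8 + (Scv : ℤ) * (D:ℤ)^7)
        + ((cgv : ℤ) * (D:ℤ)^5 + (Sgv : ℤ) * (D:ℤ)^7 - (cgv : ℤ) * (D:ℤ))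
        + ((cdv : ℤ) * (D:ℤ)^4 + (Sdv : ℤ) * (D:ℤ)^7) + (Ppv : ℤ)) :
    cbTv = cav + cbv := by
  have habs : ∀ (a b n : ℕ), a < n → b < n → |(a:ℤ) - (b:ℤ)| < (n:ℤ) := by
    intro a b n ha hb
    rw [abs_sub_lt_iff]
    constructor <;> push_cast <;> omega
  have habs2 : ∀ (a b n : ℕ), a < n*n → b < n*n → |(a:ℤ) - (b:ℤ)| < (n:ℤ)^2 := by
    intro a b n ha hb
    have hx : ((a:ℕ):ℤ) < (n:ℤ)*(n:ℤ) := by exact_mod_cast ha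
    have hy : ((b:ℕ):ℤ) < (n:ℤ)*(n:ℤ) := by exact_mod_cast hb
    have h0a : (0:ℤ) ≤ (a:ℤ) := Int.natCast_nonneg a
    have h0b : (0:ℤ) ≤ (b:ℤ) := Int.natCast_nonneg b
    rw [abs_sub_lt_iff, sq]
    constructor <;> linarith
  have habs0 : |(0:ℤ)| < (D:ℤ) := by
    simp only [abs_zero]
    exact_mod_cast hDpos
  have hzltD : z < D := by clear hF4 hFs; nlinarith
  have hcoe : 2*z + 2 < D := by
    clear hF4 hFs
    nlinarith [Nat.mul_le_mul (le_refl z) hz]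
  have h4z1 : (1:ℕ) ≤ 4*z := by omega
  have hb7a : 3*z*cbTv + (4*z-1)*cbev + 2*z*cl2v < D := by
    clear hF4 hFs
    have e1 : 3*z*cbTv ≤ 3*z*z := Nat.mul_le_mul (le_refl (3*z)) hcbT
    have e2 : (4*z-1)*cbev ≤ 4*z*z := by
      calc (4*z-1)*cbev ≤ (4*z)*cbev := Nat.mul_le_mul (by omega) (le_refl _)
        _ ≤ 4*z*z := Nat.mul_le_mul (le_refl (4*z)) hcbe
    have e3 : 2*z*cl2v ≤ 2*z := by
      calc 2*z*cl2v ≤ 2*z*1 := Nat.mul_le_mul (le_refl (2*z)) hcl2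
        _ = 2*z := by ring
    nlinarith
  have hb7b : Scv + Sgv + Sdv + 3*z*(cav+cbv) < D := by
    clear hF4 hFs
    nlinarith [Nat.mul_le_mul (le_refl (3*z)) (Nat.add_le_add hca hcb)]
  have hblowa : cgv * D < D*D := by
    clear hF4 hFs
    have h1 : cgv * D ≤ z * D := Nat.mul_le_mul hcg (le_refl D)
    nlinarith
  have hblowb : Ppv < D*D := by clear hF4 hFs; nlinarith
  have h6 := digit6 (D := (D:ℤ)) (by exact_mod_cast hDpos)
    (c8 := ((cbev + cl2v : ℕ) : ℤ) - ((ccv : ℕ) : ℤ))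
    (c7 := ((3*z*cbTv + (4*z-1)*cbev + 2*z*cl2v : ℕ) : ℤ)
      - ((Scv + Sgv + Sdv + 3*z*(cav+cbv) : ℕ) : ℤ))
    (c6 := ((cbTv : ℕ) : ℤ) - ((cav + cbv : ℕ) : ℤ))
    (c5 := ((cbTv : ℕ) : ℤ) - ((cbv + cgv : ℕ) : ℤ))
    (c4 := ((cbev : ℕ) : ℤ) - ((cav + cdv : ℕ) : ℤ))
    (c3 := 0)
    (c2 := ((cbev + cl2v : ℕ) : ℤ) - ((cAv : ℕ) : ℤ))
    (clow := ((cgv * D : ℕ) : ℤ) - ((Ppv : ℕ) : ℤ))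
    (habs _ _ _ (by omega) (by omega))
    (habs _ _ _ hb7a hb7b)
    (habs _ _ _ (by omega) (by omega))
    (habs _ _ _ (by omega) (by omega))
    (habs _ _ _ (by omega) (by omega))
    habs0
    (habs _ _ _ (by omega) (by omega))
    (habs2 _ _ _ hblowa hblowb)
    (by push_cast [Nat.cast_sub h4z1]; linear_combination hFs - hF4)
  omega

end PTSAux

set_option maxHeartbeats 2000000 in
/-- Equation (5): at the start of every job `c' ∈ c` we have `#b = #a`. -/
theorem counts_at_c_jobs
    (z D : ℕ) (ι : Fin (3*z) → ℕ)
    (hz : 0 < z) (hDpos : 0 < D)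
    (hιpos : ∀ i, 0 < ι i)
    (hsum : ∑ i, ι i = z * D)
    (hlow : ∀ i, D < 4 * ι i)
    (hhigh : ∀ i, 2 * ι i < D)
    (hD : 4*z*(7*z+1) < D)
    (σ : Job z → ℕ) (ρ : Job z → Finset ℕ)
    (hfeas : Feasible 4 (pJob z D ι) (qJob z) σ ρ)
    (hmk : makespan (pJob z D ι) σ = Wval z D)
    (hnf : NormalForm ρ) :
    ∀ c' ∈ sc z, cnt (pJob z D ι) σ (sb z) c' = cnt (pJob z D ι) σ (sa z) c' := by
  classical
  intro c' hc'
  simp only [sc] at hc'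
  obtain ⟨j0, -, rfl⟩ := Finset.mem_image.mp hc'
  obtain ⟨hsub, hqcard, hdisjf⟩ := hfeas
  obtain ⟨hm1, hm4, hboth, hone⟩ := hnf
  have hzD : 28*(z*z) + 4*z < D := by
    have h : 4*z*(7*z+1) = 28*(z*z)+4*z := by ring
    omega
  have hzltD : z < D := by nlinarith
  have hz1ltD : z + 1 < D := by nlinarith
  -- membership facts
  have h2A : ∀ i : Fin (z+1), 2 ∈ ρ (Job.JA i) := fun i => (hboth (Job.JA i) trivial).1
  have h3A : ∀ i : Fin (z+1), 3 ∈ ρ (Job.JA i) := fun i => (hboth (Job.JA i) trivial).2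
  have h2B : ∀ i : Fin (z+1), 2 ∈ ρ (Job.JB i) := fun i => (hboth (Job.JB i) trivial).1
  have h3B : ∀ i : Fin (z+1), 3 ∈ ρ (Job.JB i) := fun i => (hboth (Job.JB i) trivial).2
  have h2c : ∀ i : Fin (z+1), 2 ∈ ρ (Job.Jc i) := fun i => (hboth (Job.Jc i) trivial).1
  have h3c : ∀ i : Fin (z+1), 3 ∈ ρ (Job.Jc i) := fun i => (hboth (Job.Jc i) trivial).2
  have hsingle : ∀ (j : Job z) (m0 : ℕ), qJob z j = 1 → m0 ∈ ρ j → ρ j = {m0} := by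
    intro j m0 hq hm
    obtain ⟨x, hx⟩ := Finset.card_eq_one.mp (by rw [hqcard j, hq])
    rw [hx] at hm ⊢
    rw [Finset.mem_singleton] at hm
    rw [hm]
  have h2α : ∀ i : Fin z, ¬ (2 ∈ ρ (Job.Jα i)) := by
    intro i h
    rw [hsingle (Job.Jα i) 1 rfl ((hm1 _).mpr trivial)] at h
    simp at h
  have h3α : ∀ i : Fin z, ¬ (3 ∈ ρ (Job.Jα i)) := by
    intro i h
    rw [hsingle (Job.Jα i) 1 rfl ((hm1 _).mpr trivial)] at h
    simp at h
  have h2l1 : ¬ (2 ∈ ρ Job.Jl1) := by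
    intro h
    rw [hsingle Job.Jl1 1 rfl ((hm1 _).mpr trivial)] at h
    simp at h
  have h3l1 : ¬ (3 ∈ ρ Job.Jl1) := by
    intro h
    rw [hsingle Job.Jl1 1 rfl ((hm1 _).mpr trivial)] at h
    simp at h
  have h2β : ∀ i : Fin z, ¬ (2 ∈ ρ (Job.Jβ i)) := by
    intro i h
    rw [hsingle (Job.Jβ i) 4 rfl ((hm4 _).mpr trivial)] at h
    simp at h
  have h3β : ∀ i : Fin z, ¬ (3 ∈ ρ (Job.Jβ i)) := by
    intro i h
    rw [hsingle (Job.Jβ i) 4 rfl ((hm4 _).mpr trivial)] at h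
    simp at h
  have h2l2 : ¬ (2 ∈ ρ Job.Jl2) := by
    intro h
    rw [hsingle Job.Jl2 4 rfl ((hm4 _).mpr trivial)] at h
    simp at h
  have h3l2 : ¬ (3 ∈ ρ Job.Jl2) := by
    intro h
    rw [hsingle Job.Jl2 4 rfl ((hm4 _).mpr trivial)] at h
    simp at h
  -- ends bounded by W
  have hendW : ∀ j : Job z, PTSAux.fend z D ι σ j ≤ Wval z D := by
    intro j
    have h := Finset.le_sup (f := fun j : Job z => σ j + pJob z D ι j) (Finset.mem_univ j)
    rw [← hmk]
    exact h
  have hmach : ∀ (m : ℕ) (i j : Job z), m ∈ ρ i → m ∈ ρ j → i ≠ j →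
      PTSAux.fend z D ι σ i ≤ σ j ∨ PTSAux.fend z D ι σ j ≤ σ i := by
    intro m i j hi hj hij
    exact hdisjf i j hij ⟨m, Finset.mem_inter.mpr ⟨hi, hj⟩⟩
  -- loads
  have hL1 := PTSAux.load1 z D ι ρ hm1
  have hL4 := PTSAux.load4 z D ι ρ hz hm4
  have hL23 := PTSAux.load23 z D ι ρ hz hsum h2A h3A h2B h3B h2c h3c h2α h3α h2β h3β
    h2l1 h3l1 h2l2 h3l2 hone
  have hle23 : ∀ m : ℕ,
      (∑ j ∈ Finset.univ.filter (fun j : Job z => m ∈ ρ j), pJob z D ι j) ≤ Wval z D := by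
    intro m
    have hd : ∀ i ∈ Finset.univ.filter (fun j : Job z => m ∈ ρ j),
        ∀ j ∈ Finset.univ.filter (fun j : Job z => m ∈ ρ j), i ≠ j →
        PTSAux.fend z D ι σ i ≤ σ j ∨ PTSAux.fend z D ι σ j ≤ σ i := by
      intro i hi j hj hij
      exact hmach m i j (Finset.mem_filter.mp hi).2 (Finset.mem_filter.mp hj).2 hij
    have h := PTSAux.sum_len_le (Finset.univ.filter (fun j : Job z => m ∈ ρ j)) σ
      (PTSAux.fend z D ι σ) 0 (Wval z D) hd (fun i _ => Nat.zero_le _) (fun i _ => hendW i)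
    rw [Nat.sub_zero] at h
    calc (∑ j ∈ Finset.univ.filter (fun j : Job z => m ∈ ρ j), pJob z D ι j)
        = ∑ i ∈ Finset.univ.filter (fun j : Job z => m ∈ ρ j),
            (PTSAux.fend z D ι σ i - σ i) :=
          (Finset.sum_congr rfl (fun j _ => by simp [PTSAux.fend])).symm
      _ ≤ Wval z D := h
  have hL2 : ∑ j ∈ Finset.univ.filter (fun j : Job z => 2 ∈ ρ j), pJob z D ι j = Wval z D := by
    have h2 := hle23 2
    have h3 := hle23 3
    omega
  have hL3 : ∑ j ∈ Finset.univ.filter (fun j : Job z => 3 ∈ ρ j), pJob z D ι j = Wval z D := by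
    have h2 := hle23 2
    have h3 := hle23 3
    omega
  -- prefix exactness
  have hprefix : ∀ (m : ℕ),
      (∑ j ∈ Finset.univ.filter (fun j : Job z => m ∈ ρ j), pJob z D ι j = Wval z D) →
      ∀ u, u ≤ Wval z D →
      (∀ j : Job z, m ∈ ρ j → PTSAux.fend z D ι σ j ≤ u ∨ u ≤ σ j) →
      (∑ j ∈ Finset.univ.filter (fun j : Job z => m ∈ ρ j ∧ PTSAux.fend z D ι σ j ≤ u),
        pJob z D ι j) = u := by
    intro m hload u hu hsplit
    have hd : ∀ i ∈ Finset.univ.filter (fun j : Job z => m ∈ ρ j),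
        ∀ j ∈ Finset.univ.filter (fun j : Job z => m ∈ ρ j), i ≠ j →
        σ i + pJob z D ι i ≤ σ j ∨ σ j + pJob z D ι j ≤ σ i := by
      intro i hi j hj hij
      exact hmach m i j (Finset.mem_filter.mp hi).2 (Finset.mem_filter.mp hj).2 hij
    have h := PTSAux.prefix_exact (Finset.univ.filter (fun j : Job z => m ∈ ρ j)) σ
      (pJob z D ι) (Wval z D) u hd (fun j _ => hendW j) hload hu
      (fun j hj => hsplit j (Finset.mem_filter.mp hj).2)
    rw [Finset.filter_filter] at h
    exact h
  -- counting bounds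
  have habs : ∀ (a b n : ℕ), a < n → b < n → |(a:ℤ) - (b:ℤ)| < (n:ℤ) := by
    intro a b n ha hb
    rw [abs_sub_lt_iff]
    constructor <;> push_cast <;> omega
  have habs2 : ∀ (a b n : ℕ), a < n*n → b < n*n → |(a:ℤ) - (b:ℤ)| < (n:ℤ)^2 := by
    intro a b n ha hb
    have hx : ((a:ℕ):ℤ) < (n:ℤ)*(n:ℤ) := by exact_mod_cast ha
    have hy : ((b:ℕ):ℤ) < (n:ℤ)*(n:ℤ) := by exact_mod_cast hb
    have h0a : (0:ℤ) ≤ (a:ℤ) := Int.natCast_nonneg a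
    have h0b : (0:ℤ) ≤ (b:ℤ) := Int.natCast_nonneg b
    rw [abs_sub_lt_iff, sq]
    constructor <;> linarith
  have habs0 : |(0:ℤ)| < (D:ℤ) := by
    simp only [abs_zero]
    exact_mod_cast hDpos
  have hcAle : ∀ u, PTSAux.cA z D ι σ u ≤ z+1 :=
    fun u => le_trans (Finset.card_filter_le _ _) (by simp)
  have hcBle : ∀ u, PTSAux.cB z D ι σ u ≤ z+1 :=
    fun u => le_trans (Finset.card_filter_le _ _) (by simp)
  have hccle : ∀ u, PTSAux.cc z D ι σ u ≤ z+1 :=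
    fun u => le_trans (Finset.card_filter_le _ _) (by simp)
  have hcalle : ∀ u, PTSAux.cal z D ι σ u ≤ z :=
    fun u => le_trans (Finset.card_filter_le _ _) (by simp)
  have hcbele : ∀ u, PTSAux.cbe z D ι σ u ≤ z :=
    fun u => le_trans (Finset.card_filter_le _ _) (by simp)
  have hcaTle : ∀ u, PTSAux.caT z D ι σ u ≤ z :=
    fun u => le_trans (Finset.card_filter_le _ _) (by simp)
  have hcbTle : ∀ u, PTSAux.cbT z D ι σ u ≤ z :=
    fun u => le_trans (Finset.card_filter_le _ _) (by simp)
  have hcale : ∀ m u, PTSAux.ca z D ι σ ρ m u ≤ z :=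
    fun m u => le_trans (Finset.card_filter_le _ _) (by simp)
  have hcble : ∀ m u, PTSAux.cb z D ι σ ρ m u ≤ z :=
    fun m u => le_trans (Finset.card_filter_le _ _) (by simp)
  have hcgle : ∀ m u, PTSAux.cg z D ι σ ρ m u ≤ z :=
    fun m u => le_trans (Finset.card_filter_le _ _) (by simp)
  have hcdle : ∀ m u, PTSAux.cd z D ι σ ρ m u ≤ z :=
    fun m u => le_trans (Finset.card_filter_le _ _) (by simp)
  have hcl1le : ∀ u, PTSAux.cl1 z D ι σ u ≤ 1 := by
    intro u
    unfold PTSAux.cl1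
    split <;> omega
  have hcl2le : ∀ u, PTSAux.cl2 z D ι σ u ≤ 1 := by
    intro u
    unfold PTSAux.cl2
    split <;> omega
  have hScle : ∀ u, PTSAux.Sc z D ι σ u ≤ (z+1)*(2*z) := by
    intro u
    calc PTSAux.Sc z D ι σ u
        ≤ (Finset.univ.filter fun i : Fin (z+1) =>
            PTSAux.fend z D ι σ (Job.Jc i) ≤ u).card • (2*z) :=
          Finset.sum_le_card_nsmul _ _ _ (fun x _ => by have := x.isLt; omega)
      _ ≤ (z+1) * (2*z) := by
          rw [smul_eq_mul]
          exact Nat.mul_le_mul_right _ (le_trans (Finset.card_filter_le _ _) (by simp))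
  have hSgle : ∀ m u, PTSAux.Sg z D ι σ ρ m u ≤ z*(3*z) := by
    intro m u
    calc PTSAux.Sg z D ι σ ρ m u
        ≤ (Finset.univ.filter fun i : Fin z =>
            m ∈ ρ (Job.Jγ i) ∧ PTSAux.fend z D ι σ (Job.Jγ i) ≤ u).card • (3*z) :=
          Finset.sum_le_card_nsmul _ _ _ (fun x _ => by omega)
      _ ≤ z * (3*z) := by
          rw [smul_eq_mul]
          exact Nat.mul_le_mul_right _ (le_trans (Finset.card_filter_le _ _) (by simp))
  have hSdle : ∀ m u, PTSAux.Sd z D ι σ ρ m u ≤ z*(3*z) := by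
    intro m u
    calc PTSAux.Sd z D ι σ ρ m u
        ≤ (Finset.univ.filter fun i : Fin z =>
            m ∈ ρ (Job.Jδ i) ∧ PTSAux.fend z D ι σ (Job.Jδ i) ≤ u).card • (3*z) :=
          Finset.sum_le_card_nsmul _ _ _ (fun x _ => by omega)
      _ ≤ z * (3*z) := by
          rw [smul_eq_mul]
          exact Nat.mul_le_mul_right _ (le_trans (Finset.card_filter_le _ _) (by simp))
  have hPple : ∀ m u, PTSAux.Pp z D ι σ ρ m u ≤ z*D := by
    intro m u
    calc PTSAux.Pp z D ι σ ρ m u ≤ ∑ i, ι i :=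
          Finset.sum_le_sum_of_subset (Finset.filter_subset _ _)
      _ = z*D := hsum
  have hzDD : z*D < D*D := by nlinarith
  have h2zD : z*D + z*D < D*D := by nlinarith
  -- the time t := σ (Jc j0)
  have htW : σ (Job.Jc j0) ≤ Wval z D :=
    le_trans (Nat.le_add_right _ _) (hendW (Job.Jc j0))
  have hsplitc : ∀ (m : ℕ), m ∈ ρ (Job.Jc j0) → ∀ j : Job z, m ∈ ρ j →
      PTSAux.fend z D ι σ j ≤ σ (Job.Jc j0) ∨ σ (Job.Jc j0) ≤ σ j := by
    intro m hm j hj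
    by_cases hje : j = Job.Jc j0
    · right
      rw [hje]
    · rcases hmach m j (Job.Jc j0) hj hm hje with h | h
      · left; exact h
      · right; exact le_trans (Nat.le_add_right _ _) h
  have hP2t := hprefix 2 hL2 (σ (Job.Jc j0)) htW (hsplitc 2 (h2c j0))
  have hP3t := hprefix 3 hL3 (σ (Job.Jc j0)) htW (hsplitc 3 (h3c j0))
  have hF2t := PTSAux.form23 z D ι σ ρ 2 h2A h2B h2c h2α h2β h2l1 h2l2 (σ (Job.Jc j0))
  have hF3t := PTSAux.form23 z D ι σ ρ 3 h3A h3B h3c h3α h3β h3l1 h3l2 (σ (Job.Jc j0))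
  rw [hP2t] at hF2t
  rw [hP3t] at hF3t
  -- (†): balanced counts on machines 2 and 3 at time t
  have hkey23 : PTSAux.ca z D ι σ ρ 2 (σ (Job.Jc j0)) + PTSAux.cb z D ι σ ρ 2 (σ (Job.Jc j0))
      = PTSAux.ca z D ι σ ρ 3 (σ (Job.Jc j0)) + PTSAux.cb z D ι σ ρ 3 (σ (Job.Jc j0)) :=
    PTSAux.extract23 z D hz hDpos hzD (σ (Job.Jc j0))
      (PTSAux.cA z D ι σ (σ (Job.Jc j0))) (PTSAux.cB z D ι σ (σ (Job.Jc j0)))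
      (PTSAux.cc z D ι σ (σ (Job.Jc j0))) (PTSAux.Sc z D ι σ (σ (Job.Jc j0)))
      (PTSAux.ca z D ι σ ρ 2 (σ (Job.Jc j0))) (PTSAux.cb z D ι σ ρ 2 (σ (Job.Jc j0)))
      (PTSAux.cg z D ι σ ρ 2 (σ (Job.Jc j0))) (PTSAux.cd z D ι σ ρ 2 (σ (Job.Jc j0)))
      (PTSAux.Sg z D ι σ ρ 2 (σ (Job.Jc j0))) (PTSAux.Sd z D ι σ ρ 2 (σ (Job.Jc j0)))
      (PTSAux.Pp z D ι σ ρ 2 (σ (Job.Jc j0)))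
      (PTSAux.ca z D ι σ ρ 3 (σ (Job.Jc j0))) (PTSAux.cb z D ι σ ρ 3 (σ (Job.Jc j0)))
      (PTSAux.cg z D ι σ ρ 3 (σ (Job.Jc j0))) (PTSAux.cd z D ι σ ρ 3 (σ (Job.Jc j0)))
      (PTSAux.Sg z D ι σ ρ 3 (σ (Job.Jc j0))) (PTSAux.Sd z D ι σ ρ 3 (σ (Job.Jc j0)))
      (PTSAux.Pp z D ι σ ρ 3 (σ (Job.Jc j0)))
      (hScle _) (hcale 2 _) (hcble 2 _) (hcgle 2 _) (hcdle 2 _)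
      (hSgle 2 _) (hSdle 2 _) (hPple 2 _)
      (hcale 3 _) (hcble 3 _) (hcgle 3 _) (hcdle 3 _)
      (hSgle 3 _) (hSdle 3 _) (hPple 3 _)
      hF2t hF3t
  -- goal conversion
  have hinja : Function.Injective (Job.Ja : Fin z → Job z) := by
    intro a b h
    injection h
  have hinjb : Function.Injective (Job.Jb : Fin z → Job z) := by
    intro a b h
    injection h
  have hga : cnt (pJob z D ι) σ (sa z) (Job.Jc j0)
      = PTSAux.caT z D ι σ (σ (Job.Jc j0)) := by
    unfold cnt PTSAux.caT sa
    rw [Finset.filter_image, Finset.card_image_of_injective _ hinja]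
    rfl
  have hgb : cnt (pJob z D ι) σ (sb z) (Job.Jc j0)
      = PTSAux.cbT z D ι σ (σ (Job.Jc j0)) := by
    unfold cnt PTSAux.cbT sb
    rw [Finset.filter_image, Finset.card_image_of_injective _ hinjb]
    rfl
  rw [hga, hgb]
  -- splits over machines 2/3
  have hsplita : ∀ v, PTSAux.caT z D ι σ v
      = PTSAux.ca z D ι σ ρ 2 v + PTSAux.ca z D ι σ ρ 3 v := by
    intro v
    unfold PTSAux.caT PTSAux.ca
    have e2 : (Finset.univ.filter fun i : Fin z =>
        2 ∈ ρ (Job.Ja i) ∧ PTSAux.fend z D ι σ (Job.Ja i) ≤ v)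
        = (Finset.univ.filter fun i : Fin z =>
            PTSAux.fend z D ι σ (Job.Ja i) ≤ v).filter (fun i => 2 ∈ ρ (Job.Ja i)) := by
      rw [Finset.filter_filter]
      ext i
      simp only [Finset.mem_filter, Finset.mem_univ, true_and]
      tauto
    have e3 : (Finset.univ.filter fun i : Fin z =>
        3 ∈ ρ (Job.Ja i) ∧ PTSAux.fend z D ι σ (Job.Ja i) ≤ v)
        = (Finset.univ.filter fun i : Fin z =>
            PTSAux.fend z D ι σ (Job.Ja i) ≤ v).filter (fun i => ¬ (2 ∈ ρ (Job.Ja i))) := by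
      rw [Finset.filter_filter]
      ext i
      simp only [Finset.mem_filter, Finset.mem_univ, true_and]
      have h23 := hone (Job.Ja i) trivial
      tauto
    rw [e2, e3, Finset.card_filter_add_card_filter_not]
  have hsplitb : ∀ v, PTSAux.cbT z D ι σ v
      = PTSAux.cb z D ι σ ρ 2 v + PTSAux.cb z D ι σ ρ 3 v := by
    intro v
    unfold PTSAux.cbT PTSAux.cb
    have e2 : (Finset.univ.filter fun i : Fin z =>
        2 ∈ ρ (Job.Jb i) ∧ PTSAux.fend z D ι σ (Job.Jb i) ≤ v)
        = (Finset.univ.filter fun i : Fin z =>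
            PTSAux.fend z D ι σ (Job.Jb i) ≤ v).filter (fun i => 2 ∈ ρ (Job.Jb i)) := by
      rw [Finset.filter_filter]
      ext i
      simp only [Finset.mem_filter, Finset.mem_univ, true_and]
      tauto
    have e3 : (Finset.univ.filter fun i : Fin z =>
        3 ∈ ρ (Job.Jb i) ∧ PTSAux.fend z D ι σ (Job.Jb i) ≤ v)
        = (Finset.univ.filter fun i : Fin z =>
            PTSAux.fend z D ι σ (Job.Jb i) ≤ v).filter (fun i => ¬ (2 ∈ ρ (Job.Jb i))) := by
      rw [Finset.filter_filter]
      ext i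
      simp only [Finset.mem_filter, Finset.mem_univ, true_and]
      have h23 := hone (Job.Jb i) trivial
      tauto
    rw [e2, e3, Finset.card_filter_add_card_filter_not]
  -- main case split on existence of a finished a/b job
  rcases Finset.eq_empty_or_nonempty ((sa z ∪ sb z).filter
      (fun j => PTSAux.fend z D ι σ j ≤ σ (Job.Jc j0))) with hemp | hne
  · have ha0 : PTSAux.caT z D ι σ (σ (Job.Jc j0)) = 0 := by
      unfold PTSAux.caT
      rw [Finset.card_eq_zero, Finset.filter_eq_empty_iff]
      intro i _
      intro hf
      have hmem : Job.Ja i ∈ (sa z ∪ sb z).filter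
          (fun j => PTSAux.fend z D ι σ j ≤ σ (Job.Jc j0)) :=
        Finset.mem_filter.mpr ⟨Finset.mem_union_left _
          (Finset.mem_image_of_mem _ (Finset.mem_univ i)), hf⟩
      rw [hemp] at hmem
      exact absurd hmem (Finset.notMem_empty _)
    have hb0 : PTSAux.cbT z D ι σ (σ (Job.Jc j0)) = 0 := by
      unfold PTSAux.cbT
      rw [Finset.card_eq_zero, Finset.filter_eq_empty_iff]
      intro i _
      intro hf
      have hmem : Job.Jb i ∈ (sa z ∪ sb z).filter
          (fun j => PTSAux.fend z D ι σ j ≤ σ (Job.Jc j0)) :=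
        Finset.mem_filter.mpr ⟨Finset.mem_union_right _
          (Finset.mem_image_of_mem _ (Finset.mem_univ i)), hf⟩
      rw [hemp] at hmem
      exact absurd hmem (Finset.notMem_empty _)
    rw [ha0, hb0]
  · obtain ⟨js, hjsmem, hjsmax⟩ := Finset.exists_max_image _ (PTSAux.fend z D ι σ) hne
    have hjsf := Finset.mem_filter.mp hjsmem
    have hut : PTSAux.fend z D ι σ js ≤ σ (Job.Jc j0) := hjsf.2
    have huW : PTSAux.fend z D ι σ js ≤ Wval z D := hendW js
    -- transfer of a/b counts from t to u
    have htra : ∀ i : Fin z, (PTSAux.fend z D ι σ (Job.Ja i) ≤ σ (Job.Jc j0))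
        ↔ (PTSAux.fend z D ι σ (Job.Ja i) ≤ PTSAux.fend z D ι σ js) := by
      intro i
      constructor
      · intro h
        exact hjsmax (Job.Ja i) (Finset.mem_filter.mpr ⟨Finset.mem_union_left _
          (Finset.mem_image_of_mem _ (Finset.mem_univ i)), h⟩)
      · intro h
        exact le_trans h hut
    have htrb : ∀ i : Fin z, (PTSAux.fend z D ι σ (Job.Jb i) ≤ σ (Job.Jc j0))
        ↔ (PTSAux.fend z D ι σ (Job.Jb i) ≤ PTSAux.fend z D ι σ js) := by
      intro i
      constructor
      · intro h
        exact hjsmax (Job.Jb i) (Finset.mem_filter.mpr ⟨Finset.mem_union_right _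
          (Finset.mem_image_of_mem _ (Finset.mem_univ i)), h⟩)
      · intro h
        exact le_trans h hut
    have hcaTtr : PTSAux.caT z D ι σ (σ (Job.Jc j0))
        = PTSAux.caT z D ι σ (PTSAux.fend z D ι σ js) := by
      unfold PTSAux.caT
      congr 1
      ext i
      simp only [Finset.mem_filter, Finset.mem_univ, true_and]
      exact htra i
    have hcbTtr : PTSAux.cbT z D ι σ (σ (Job.Jc j0))
        = PTSAux.cbT z D ι σ (PTSAux.fend z D ι σ js) := by
      unfold PTSAux.cbT
      congr 1
      ext i
      simp only [Finset.mem_filter, Finset.mem_univ, true_and]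
      exact htrb i
    have hcatr : ∀ m, PTSAux.ca z D ι σ ρ m (σ (Job.Jc j0))
        = PTSAux.ca z D ι σ ρ m (PTSAux.fend z D ι σ js) := by
      intro m
      unfold PTSAux.ca
      congr 1
      ext i
      simp only [Finset.mem_filter, Finset.mem_univ, true_and]
      exact and_congr_right (fun _ => htra i)
    have hcbtr : ∀ m, PTSAux.cb z D ι σ ρ m (σ (Job.Jc j0))
        = PTSAux.cb z D ι σ ρ m (PTSAux.fend z D ι σ js) := by
      intro m
      unfold PTSAux.cb
      congr 1
      ext i
      simp only [Finset.mem_filter, Finset.mem_univ, true_and]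
      exact and_congr_right (fun _ => htrb i)
    -- the key equation at time u on machine 1 or 4, paired with machine 2 or 3
    have hkeyu :
        (PTSAux.caT z D ι σ (PTSAux.fend z D ι σ js)
          = PTSAux.ca z D ι σ ρ 2 (PTSAux.fend z D ι σ js)
            + PTSAux.cb z D ι σ ρ 2 (PTSAux.fend z D ι σ js))
        ∨ (PTSAux.caT z D ι σ (PTSAux.fend z D ι σ js)
          = PTSAux.ca z D ι σ ρ 3 (PTSAux.fend z D ι σ js)
            + PTSAux.cb z D ι σ ρ 3 (PTSAux.fend z D ι σ js))
        ∨ (PTSAux.cbT z D ι σ (PTSAux.fend z D ι σ js)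
          = PTSAux.ca z D ι σ ρ 2 (PTSAux.fend z D ι σ js)
            + PTSAux.cb z D ι σ ρ 2 (PTSAux.fend z D ι σ js))
        ∨ (PTSAux.cbT z D ι σ (PTSAux.fend z D ι σ js)
          = PTSAux.ca z D ι σ ρ 3 (PTSAux.fend z D ι σ js)
            + PTSAux.cb z D ι σ ρ 3 (PTSAux.fend z D ι σ js)) := by
      have h4z1 : (1:ℕ) ≤ 4*z := by omega
      rcases Finset.mem_union.mp hjsf.1 with hmem | hmem
      · -- js = Ja istar : use machine 1
        obtain ⟨istar, -, hjs⟩ := Finset.mem_image.mp hmem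
        subst hjs
        set u := PTSAux.fend z D ι σ (Job.Ja istar) with hudef
        have h1a : 1 ∈ ρ (Job.Ja istar) := (hm1 _).mpr trivial
        have hsplit1 : ∀ j : Job z, 1 ∈ ρ j →
            PTSAux.fend z D ι σ j ≤ u ∨ u ≤ σ j := by
          intro j hj
          by_cases hje : j = Job.Ja istar
          · left; rw [hje]
          · rcases hmach 1 j (Job.Ja istar) hj h1a hje with h | h
            · left; exact le_trans h (Nat.le_add_right _ _)
            · right; exact h
        have hP1u := hprefix 1 hL1 u huW hsplit1
        have hF1u := PTSAux.form1 z D ι σ ρ hm1 u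
        rw [hP1u] at hF1u
        zify at hF1u
        have hside : 2 ∈ ρ (Job.Ja istar) ∨ 3 ∈ ρ (Job.Ja istar) := by
          by_contra hcon
          push_neg at hcon
          obtain ⟨hn2, hn3⟩ := hcon
          have hn4 : ¬ (4 ∈ ρ (Job.Ja istar)) := fun h => (hm4 _).mp h
          have hsubs : ρ (Job.Ja istar) ⊆ {1} := by
            intro x hx
            have hx4 := hsub (Job.Ja istar) hx
            rw [Finset.mem_Icc] at hx4
            rw [Finset.mem_singleton]
            by_contra hx1
            have hx234 : x = 2 ∨ x = 3 ∨ x = 4 := by omega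
            rcases hx234 with rfl | rfl | rfl
            · exact hn2 hx
            · exact hn3 hx
            · exact hn4 hx
          have hcard := Finset.card_le_card hsubs
          rw [hqcard (Job.Ja istar)] at hcard
          simp [qJob] at hcard
        have hmain : ∀ s0 : ℕ, s0 = 2 ∨ s0 = 3 → s0 ∈ ρ (Job.Ja istar) →
            PTSAux.caT z D ι σ u
              = PTSAux.ca z D ι σ ρ s0 u + PTSAux.cb z D ι σ ρ s0 u := by
          intro s0 hs0 hsmem
          have hsplits : ∀ j : Job z, s0 ∈ ρ j →
              PTSAux.fend z D ι σ j ≤ u ∨ u ≤ σ j := by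
            intro j hj
            by_cases hje : j = Job.Ja istar
            · left; rw [hje]
            · rcases hmach s0 j (Job.Ja istar) hj hsmem hje with h | h
              · left; exact le_trans h (Nat.le_add_right _ _)
              · right; exact h
          have hLs : ∑ j ∈ Finset.univ.filter (fun j : Job z => s0 ∈ ρ j), pJob z D ι j
              = Wval z D := by
            rcases hs0 with rfl | rfl
            · exact hL2
            · exact hL3
          have hPsu := hprefix s0 hLs u huW hsplits
          have hFsu : ((u : ℕ) : ℤ)
              = (PTSAux.cA z D ι σ u : ℤ) * (D:ℤ)^2 + (PTSAux.cB z D ι σ u : ℤ) * (D:ℤ)^3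
                + (PTSAux.ca z D ι σ ρ s0 u : ℤ) * ((D:ℤ)^4 + (D:ℤ)^6 + 3*(z:ℤ)*(D:ℤ)^7)
                + (PTSAux.cb z D ι σ ρ s0 u : ℤ) * ((D:ℤ)^5 + (D:ℤ)^6 + 3*(z:ℤ)*(D:ℤ)^7)
                + ((PTSAux.cc z D ι σ u : ℤ) * (D:ℤ)^8 + (PTSAux.Sc z D ι σ u : ℤ) * (D:ℤ)^7)
                + ((PTSAux.cg z D ι σ ρ s0 u : ℤ) * (D:ℤ)^5
                    + (PTSAux.Sg z D ι σ ρ s0 u : ℤ) * (D:ℤ)^7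
                    - (PTSAux.cg z D ι σ ρ s0 u : ℤ) * (D:ℤ))
                + ((PTSAux.cd z D ι σ ρ s0 u : ℤ) * (D:ℤ)^4
                    + (PTSAux.Sd z D ι σ ρ s0 u : ℤ) * (D:ℤ)^7)
                + (PTSAux.Pp z D ι σ ρ s0 u : ℤ) := by
            rcases hs0 with rfl | rfl
            · have h := PTSAux.form23 z D ι σ ρ 2 h2A h2B h2c h2α h2β h2l1 h2l2 u
              rw [hPsu] at h
              exact h
            · have h := PTSAux.form23 z D ι σ ρ 3 h3A h3B h3c h3α h3β h3l1 h3l2 u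
              rw [hPsu] at h
              exact h
          exact PTSAux.extractA z D hz hDpos hzD u
            (PTSAux.cA z D ι σ u) (PTSAux.cB z D ι σ u) (PTSAux.cc z D ι σ u)
            (PTSAux.Sc z D ι σ u) (PTSAux.cal z D ι σ u) (PTSAux.cl1 z D ι σ u)
            (PTSAux.caT z D ι σ u) (PTSAux.ca z D ι σ ρ s0 u) (PTSAux.cb z D ι σ ρ s0 u)
            (PTSAux.cg z D ι σ ρ s0 u) (PTSAux.cd z D ι σ ρ s0 u)
            (PTSAux.Sg z D ι σ ρ s0 u) (PTSAux.Sd z D ι σ ρ s0 u) (PTSAux.Pp z D ι σ ρ s0 u)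
            (hcBle u) (hccle u) (hScle u) (hcalle u) (hcl1le u) (hcaTle u)
            (hcale s0 u) (hcble s0 u) (hcgle s0 u) (hcdle s0 u)
            (hSgle s0 u) (hSdle s0 u) (hPple s0 u)
            (by push_cast; linear_combination hF1u) hFsu
        rcases hside with hs | hs
        · exact Or.inl (hmain 2 (Or.inl rfl) hs)
        · exact Or.inr (Or.inl (hmain 3 (Or.inr rfl) hs))
      · -- js = Jb istar : use machine 4
        obtain ⟨istar, -, hjs⟩ := Finset.mem_image.mp hmem
        subst hjs
        set u := PTSAux.fend z D ι σ (Job.Jb istar) with hudef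
        have h4b : 4 ∈ ρ (Job.Jb istar) := (hm4 _).mpr trivial
        have hsplit4 : ∀ j : Job z, 4 ∈ ρ j →
            PTSAux.fend z D ι σ j ≤ u ∨ u ≤ σ j := by
          intro j hj
          by_cases hje : j = Job.Jb istar
          · left; rw [hje]
          · rcases hmach 4 j (Job.Jb istar) hj h4b hje with h | h
            · left; exact le_trans h (Nat.le_add_right _ _)
            · right; exact h
        have hP4u := hprefix 4 hL4 u huW hsplit4
        have hF4u := PTSAux.form4 z D ι σ ρ hm4 u
        rw [hP4u] at hF4u
        zify [h4z1] at hF4u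
        have hside : 2 ∈ ρ (Job.Jb istar) ∨ 3 ∈ ρ (Job.Jb istar) := by
          by_contra hcon
          push_neg at hcon
          obtain ⟨hn2, hn3⟩ := hcon
          have hn1 : ¬ (1 ∈ ρ (Job.Jb istar)) := fun h => (hm1 _).mp h
          have hsubs : ρ (Job.Jb istar) ⊆ {4} := by
            intro x hx
            have hx4 := hsub (Job.Jb istar) hx
            rw [Finset.mem_Icc] at hx4
            rw [Finset.mem_singleton]
            by_contra hx1
            have hx234 : x = 1 ∨ x = 2 ∨ x = 3 := by omega
            rcases hx234 with rfl | rfl | rfl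
            · exact hn1 hx
            · exact hn2 hx
            · exact hn3 hx
          have hcard := Finset.card_le_card hsubs
          rw [hqcard (Job.Jb istar)] at hcard
          simp [qJob] at hcard
        have hmain : ∀ s0 : ℕ, s0 = 2 ∨ s0 = 3 → s0 ∈ ρ (Job.Jb istar) →
            PTSAux.cbT z D ι σ u
              = PTSAux.ca z D ι σ ρ s0 u + PTSAux.cb z D ι σ ρ s0 u := by
          intro s0 hs0 hsmem
          have hsplits : ∀ j : Job z, s0 ∈ ρ j →
              PTSAux.fend z D ι σ j ≤ u ∨ u ≤ σ j := by
            intro j hj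
            by_cases hje : j = Job.Jb istar
            · left; rw [hje]
            · rcases hmach s0 j (Job.Jb istar) hj hsmem hje with h | h
              · left; exact le_trans h (Nat.le_add_right _ _)
              · right; exact h
          have hLs : ∑ j ∈ Finset.univ.filter (fun j : Job z => s0 ∈ ρ j), pJob z D ι j
              = Wval z D := by
            rcases hs0 with rfl | rfl
            · exact hL2
            · exact hL3
          have hPsu := hprefix s0 hLs u huW hsplits
          have hFsu : ((u : ℕ) : ℤ)
              = (PTSAux.cA z D ι σ u : ℤ) * (D:ℤ)^2 + (PTSAux.cB z D ι σ u : ℤ) * (D:ℤ)^3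
                + (PTSAux.ca z D ι σ ρ s0 u : ℤ) * ((D:ℤ)^4 + (D:ℤ)^6 + 3*(z:ℤ)*(D:ℤ)^7)
                + (PTSAux.cb z D ι σ ρ s0 u : ℤ) * ((D:ℤ)^5 + (D:ℤ)^6 + 3*(z:ℤ)*(D:ℤ)^7)
                + ((PTSAux.cc z D ι σ u : ℤ) * (D:ℤ)^8 + (PTSAux.Sc z D ι σ u : ℤ) * (D:ℤ)^7)
                + ((PTSAux.cg z D ι σ ρ s0 u : ℤ) * (D:ℤ)^5
                    + (PTSAux.Sg z D ι σ ρ s0 u : ℤ) * (D:ℤ)^7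
                    - (PTSAux.cg z D ι σ ρ s0 u : ℤ) * (D:ℤ))
                + ((PTSAux.cd z D ι σ ρ s0 u : ℤ) * (D:ℤ)^4
                    + (PTSAux.Sd z D ι σ ρ s0 u : ℤ) * (D:ℤ)^7)
                + (PTSAux.Pp z D ι σ ρ s0 u : ℤ) := by
            rcases hs0 with rfl | rfl
            · have h := PTSAux.form23 z D ι σ ρ 2 h2A h2B h2c h2α h2β h2l1 h2l2 u
              rw [hPsu] at h
              exact h
            · have h := PTSAux.form23 z D ι σ ρ 3 h3A h3B h3c h3α h3β h3l1 h3l2 u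
              rw [hPsu] at h
              exact h
          exact PTSAux.extractB z D hz hDpos hzD u
            (PTSAux.cA z D ι σ u) (PTSAux.cB z D ι σ u) (PTSAux.cc z D ι σ u)
            (PTSAux.Sc z D ι σ u) (PTSAux.cbe z D ι σ u) (PTSAux.cl2 z D ι σ u)
            (PTSAux.cbT z D ι σ u) (PTSAux.ca z D ι σ ρ s0 u) (PTSAux.cb z D ι σ ρ s0 u)
            (PTSAux.cg z D ι σ ρ s0 u) (PTSAux.cd z D ι σ ρ s0 u)
            (PTSAux.Sg z D ι σ ρ s0 u) (PTSAux.Sd z D ι σ ρ s0 u) (PTSAux.Pp z D ι σ ρ s0 u)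
            (hcAle u) (hccle u) (hScle u) (hcbele u) (hcl2le u) (hcbTle u)
            (hcale s0 u) (hcble s0 u) (hcgle s0 u) (hcdle s0 u)
            (hSgle s0 u) (hSdle s0 u) (hPple s0 u)
            (by linear_combination hF4u) hFsu
        rcases hside with hs | hs
        · exact Or.inr (Or.inr (Or.inl (hmain 2 (Or.inl rfl) hs)))
        · exact Or.inr (Or.inr (Or.inr (hmain 3 (Or.inr rfl) hs)))
    -- conclude
    have hsa := hsplita (σ (Job.Jc j0))
    have hsb := hsplitb (σ (Job.Jc j0))
    have hsa' := hsplita (PTSAux.fend z D ι σ js)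
    have hsb' := hsplitb (PTSAux.fend z D ι σ js)
    have hca2 := hcatr 2
    have hca3 := hcatr 3
    have hcb2 := hcbtr 2
    have hcb3 := hcbtr 3
    rcases hkeyu with hk | hk | hk | hk <;> omega
end
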